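/- arXiv:2311.08912 — 4 statements merged into one kernel-verified Lean document; each statement's English description precedes it below -/
import Mathlib

section
/- Let n ≥ 1 be an integer, m > 0, g > 0, and let f > (2n+1)·(m/(2n))^(2n/(2n+1))·g^(1/(2n+1)) (i.e. the energy −f lies below the first critical value E₁). For each a ∈ [0, m] let S_a = {(z,w) ∈ ℝ² : w²/8 + f·z² − g·z^(4n+2) ≤ a} and let I(a) denote the Lebesgue measure (area) of the connected component of S_a containing the origin. Then I is continuous and strictly increasing on [0, m], and the function φ : [0, I(m)] → ℝ defined by φ(x) = I(m − I⁻¹(x)) is strictly decreasing and convex. (This expresses that the bounded component of the Levi-Civita regularized energy hypersurface {|w|²/8 + f(z₁²+z₂²) − g(z₁^(4n+2)+z₂^(4n+2)) = m} bounds a concave toric domain.) -/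
open MeasureTheory Set
open scoped ENNReal
set_option maxHeartbeats 1000000

-- L3 : the 1D identity
lemma sqrt_as_lintegral {u a : ℝ} (hu : 0 ≤ u) (hua : u ≤ a) :
    ∫⁻ t in Ioc 0 a, ENNReal.ofReal (2 * Real.sqrt 2 / Real.sqrt (t - u))
      = ENNReal.ofReal (4 * Real.sqrt 2 * Real.sqrt (a - u)) := by
  have hsplit : Ioc (0:ℝ) a = Ioc 0 u ∪ Ioc u a := (Ioc_union_Ioc_eq_Ioc hu hua).symm
  rw [hsplit, lintegral_union measurableSet_Ioc (Ioc_disjoint_Ioc_of_le le_rfl)]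
  have h1 : ∫⁻ t in Ioc (0:ℝ) u, ENNReal.ofReal (2 * Real.sqrt 2 / Real.sqrt (t - u)) = 0 := by
    rw [setLIntegral_congr_fun_ae measurableSet_Ioc
      (ae_of_all _ (fun t (ht : t ∈ Ioc (0:ℝ) u) => ?_))]
    · exact lintegral_zero
    · have h0 : Real.sqrt (t - u) = 0 := Real.sqrt_eq_zero'.mpr (by linarith [ht.2])
      rw [h0, div_zero, ENNReal.ofReal_zero]
  rw [h1, zero_add]
  -- integrable model function
  have hII : IntervalIntegrable (fun t : ℝ => 2 * Real.sqrt 2 * (t - u) ^ (-(1:ℝ)/2)) volume u a := by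
    have := (intervalIntegral.intervalIntegrable_rpow' (a := 0) (b := a - u)
      (r := -(1:ℝ)/2) (by norm_num)).comp_sub_right u
    simpa using this.const_mul (2 * Real.sqrt 2)
  have heq : ∀ t ∈ Ioc u a,
      2 * Real.sqrt 2 / Real.sqrt (t - u) = 2 * Real.sqrt 2 * (t - u) ^ (-(1:ℝ)/2) := by
    intro t ht
    have htu : 0 < t - u := by linarith [ht.1]
    rw [show (-(1:ℝ)/2) = -((1:ℝ)/2) by norm_num, Real.rpow_neg htu.le, div_eq_mul_inv,
      Real.sqrt_eq_rpow (t-u)]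
  have hInt : IntegrableOn (fun t : ℝ => 2 * Real.sqrt 2 / Real.sqrt (t - u)) (Ioc u a) := by
    apply (hII.1).congr_fun (fun t ht => (heq t ht).symm) measurableSet_Ioc
  rw [← ofReal_integral_eq_lintegral_ofReal hInt
    (ae_of_all _ (fun t => by positivity))]
  congr 1
  rw [setIntegral_congr_fun measurableSet_Ioc heq]
  have : ∫ t in Ioc u a, 2 * Real.sqrt 2 * (t - u) ^ (-(1:ℝ)/2)
      = ∫ t in u..a, 2 * Real.sqrt 2 * (t - u) ^ (-(1:ℝ)/2) := by
    rw [intervalIntegral.integral_of_le hua]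
  rw [this, intervalIntegral.integral_const_mul]
  have hsub : ∫ t in u..a, (t - u) ^ (-(1:ℝ)/2)
      = ∫ x in (u-u)..(a-u), x ^ (-(1:ℝ)/2) := by
    rw [← intervalIntegral.integral_comp_sub_right (fun x => x ^ (-(1:ℝ)/2)) u]
  rw [hsub, sub_self, integral_rpow (Or.inl (by norm_num))]
  have h0 : (0:ℝ) ^ (-(1:ℝ)/2 + 1) = 0 := by
    rw [Real.zero_rpow (by norm_num)]
  rw [h0]
  rw [show (-(1:ℝ)/2 + 1) = ((1:ℝ)/2) by norm_num]
  rw [← Real.sqrt_eq_rpow]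
  have hs : (0:ℝ) ≤ a - u := by linarith
  field_simp
  ring


namespace Stark2


noncomputable def U (n : ℕ) (g f x : ℝ) : ℝ := f * x ^ 2 - g * x ^ (4 * n + 2)
noncomputable def rho (n : ℕ) (g f : ℝ) : ℝ :=
  (f / ((2 * (n : ℝ) + 1) * g)) ^ ((2 * (n : ℝ))⁻¹ / 2)
noncomputable def Z (n : ℕ) (g f t : ℝ) : ℝ :=
  sSup {x | x ∈ Icc 0 (rho n g f) ∧ U n g f x ≤ t}

lemma U_cont {n g f} : Continuous (U n g f) := by unfold U; continuity
lemma U_even {n g f} (x : ℝ) : U n g f (-x) = U n g f x := by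
  unfold U; rw [Even.neg_pow (by norm_num), Even.neg_pow ⟨2*n+1, by ring⟩]
lemma U_abs {n g f} (x : ℝ) : U n g f x = U n g f |x| := by
  rcases abs_cases x with ⟨h, _⟩ | ⟨h, _⟩
  · rw [h]
  · rw [h, U_even]

noncomputable def theta (n : ℕ) (g f t : ℝ) : ℝ≥0∞ :=
  ∫⁻ z in Icc (-(Z n g f t)) (Z n g f t),
    ENNReal.ofReal (2 * Real.sqrt 2 / Real.sqrt (t - U n g f z))

noncomputable def K (n : ℕ) (g f a : ℝ) : Set (ℝ × ℝ) :=
  {p : ℝ × ℝ | U n g f p.1 + p.2 ^ 2 / 8 ≤ a ∧ p.1 ∈ Icc (-(rho n g f)) (rho n g f)}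

variable {n : ℕ} {m g f : ℝ}

lemma sqrt8 : Real.sqrt 8 = 2 * Real.sqrt 2 := by
  rw [show (8:ℝ) = 4 * 2 by norm_num, Real.sqrt_mul (by norm_num),
    show (4:ℝ) = 2^2 by norm_num, Real.sqrt_sq (by norm_num)]

lemma K_closed (a : ℝ) : IsClosed (K n g f a) := by
  apply IsClosed.inter
  · exact isClosed_le ((U_cont.comp continuous_fst).add
      (((continuous_pow 2).comp continuous_snd).div_const 8)) continuous_const
  · exact (isClosed_Icc).preimage continuous_fst

lemma lintegral_Icc_scale {r : ℝ} (hr : 0 < r) {h : ℝ → ℝ≥0∞} (hh : Measurable h) :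
    ∫⁻ z in Icc (-r) r, h z = ENNReal.ofReal r * ∫⁻ σ in Icc (-1 : ℝ) 1, h (r * σ) := by
  have hemb : MeasurableEmbedding (fun σ : ℝ => r * σ) :=
    (Homeomorph.mulLeft₀ r hr.ne').measurableEmbedding
  have hpre : (fun σ : ℝ => r * σ) ⁻¹' Icc (-r) r = Icc (-1 : ℝ) 1 := by
    ext σ
    simp only [mem_preimage, mem_Icc]
    constructor
    · rintro ⟨h1, h2⟩
      constructor <;> nlinarith
    · rintro ⟨h1, h2⟩
      constructor <;> nlinarith
  have hmap : Measure.map (fun σ : ℝ => r * σ) (volume.restrict (Icc (-1:ℝ) 1))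
      = ENNReal.ofReal r⁻¹ • volume.restrict (Icc (-r) r) := by
    rw [← hpre, ← hemb.restrict_map, Real.map_volume_mul_left hr.ne',
      abs_of_pos (inv_pos.mpr hr), Measure.restrict_smul]
  have h1 : ∫⁻ σ in Icc (-1:ℝ) 1, h (r * σ)
      = ENNReal.ofReal r⁻¹ * ∫⁻ z in Icc (-r) r, h z := by
    rw [← lintegral_map hh (measurable_const_mul r), hmap, lintegral_smul_measure, smul_eq_mul]
  rw [h1, ← mul_assoc, ← ENNReal.ofReal_mul hr.le, mul_inv_cancel₀ hr.ne',
    ENNReal.ofReal_one, one_mul]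

lemma fin_aux_left {C u a : ℝ} (hC : 0 ≤ C) (hua : u ≤ a) :
    ∫⁻ x in Icc u a, ENNReal.ofReal (C / Real.sqrt (x - u)) < ⊤ := by
  rw [← setLIntegral_congr (Ioo_ae_eq_Icc (a := u) (b := a))]
  have hII : IntervalIntegrable (fun x : ℝ => C * (x - u) ^ (-(1:ℝ)/2)) volume u a := by
    have := (intervalIntegral.intervalIntegrable_rpow' (a := 0) (b := a - u)
      (r := -(1:ℝ)/2) (by norm_num)).comp_sub_right u
    simpa using this.const_mul C
  have heq : ∀ x ∈ Ioo u a, C / Real.sqrt (x - u) = C * (x - u) ^ (-(1:ℝ)/2) := by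
    intro x hx
    have hxu : 0 < x - u := by linarith [hx.1]
    rw [show (-(1:ℝ)/2) = -((1:ℝ)/2) by norm_num, Real.rpow_neg hxu.le, div_eq_mul_inv,
      Real.sqrt_eq_rpow (x - u)]
  have hInt : IntegrableOn (fun x : ℝ => C / Real.sqrt (x - u)) (Ioo u a) := by
    apply (hII.1.mono_set Ioo_subset_Ioc_self).congr_fun
      (fun x hx => (heq x hx).symm) measurableSet_Ioo
  rw [← ofReal_integral_eq_lintegral_ofReal hInt
    (ae_of_all _ (fun x => by positivity))]
  exact ENNReal.ofReal_lt_top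

lemma fin_aux_right {C u a : ℝ} (hC : 0 ≤ C) (hua : u ≤ a) :
    ∫⁻ x in Icc u a, ENNReal.ofReal (C / Real.sqrt (a - x)) < ⊤ := by
  rw [← setLIntegral_congr (Ioo_ae_eq_Icc (a := u) (b := a))]
  have hII : IntervalIntegrable (fun x : ℝ => C * (a - x) ^ (-(1:ℝ)/2)) volume u a := by
    have h0 := (intervalIntegral.intervalIntegrable_rpow' (a := a - a) (b := a - u)
      (r := -(1:ℝ)/2) (by norm_num)).comp_sub_left a
    have h1 : IntervalIntegrable (fun x : ℝ => (a - x) ^ (-(1:ℝ)/2)) volume u a := by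
      have := h0.symm
      simpa using this
    exact h1.const_mul C
  have heq : ∀ x ∈ Ioo u a, C / Real.sqrt (a - x) = C * (a - x) ^ (-(1:ℝ)/2) := by
    intro x hx
    have hxu : 0 < a - x := by linarith [hx.2]
    rw [show (-(1:ℝ)/2) = -((1:ℝ)/2) by norm_num, Real.rpow_neg hxu.le, div_eq_mul_inv,
      Real.sqrt_eq_rpow (a - x)]
  have hInt : IntegrableOn (fun x : ℝ => C / Real.sqrt (a - x)) (Ioo u a) := by
    apply (hII.1.mono_set Ioo_subset_Ioc_self).congr_fun
      (fun x hx => (heq x hx).symm) measurableSet_Ioo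
  rw [← ofReal_integral_eq_lintegral_ofReal hInt
    (ae_of_all _ (fun x => by positivity))]
  exact ENNReal.ofReal_lt_top

-- assume basic facts as hypotheses to be discharged later
section Main
variable (hn : 1 ≤ n) (hρ : 0 < rho n g f) (hm : 0 < m) (hg : 0 < g)
  (hrp : g * (rho n g f) ^ (4 * n) = f / (2 * (n:ℝ) + 1))
  (hmono : StrictMonoOn (U n g f) (Icc 0 (rho n g f)))
  (hUm : m < U n g f (rho n g f))
  (hZmem : ∀ t ∈ Icc (0:ℝ) m, Z n g f t ∈ Icc 0 (rho n g f))
  (hZval : ∀ t ∈ Icc (0:ℝ) m, U n g f (Z n g f t) = t)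

include hn hρ hmono hUm hZmem hZval hm hg hrp

lemma U_nonneg_on {x : ℝ} (hx : x ∈ Icc (-(rho n g f)) (rho n g f)) : 0 ≤ U n g f x := by
  rw [U_abs]
  have h0 : U n g f 0 = 0 := by
    unfold U; rw [zero_pow (by norm_num), zero_pow (by omega)]; ring
  have habs : |x| ∈ Icc 0 (rho n g f) := by
    rw [mem_Icc] at hx ⊢
    exact ⟨abs_nonneg x, abs_le.mpr ⟨hx.1, hx.2⟩⟩
  rcases eq_or_lt_of_le habs.1 with h | h
  · rw [← h, h0]
  · have := hmono (left_mem_Icc.mpr hρ.le) habs h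
    rw [h0] at this; exact this.le

lemma U_le_iff {t : ℝ} (ht : t ∈ Icc 0 m) {z : ℝ}
    (hz : z ∈ Icc (-(rho n g f)) (rho n g f)) :
    U n g f z ≤ t ↔ |z| ≤ Z n g f t := by
  have hZm := hZmem t ht
  have hZv := hZval t ht
  have habs : |z| ∈ Icc 0 (rho n g f) := by
    rw [mem_Icc] at hz ⊢
    exact ⟨abs_nonneg z, abs_le.mpr ⟨hz.1, hz.2⟩⟩
  rw [U_abs]
  constructor
  · intro h
    by_contra hlt
    push_neg at hlt
    have := hmono hZm habs hlt
    rw [hZv] at this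
    linarith
  · intro h
    rcases eq_or_lt_of_le h with h' | h'
    · rw [h', hZv]
    · have := hmono habs hZm h'
      rw [hZv] at this
      exact this.le

lemma slice_vol {a : ℝ} (ha : a ∈ Icc 0 m) (z : ℝ) :
    volume (Prod.mk z ⁻¹' (K n g f a))
      = (Icc (-(Z n g f a)) (Z n g f a)).indicator
          (fun x => ENNReal.ofReal (4 * Real.sqrt 2 * Real.sqrt (a - U n g f x))) z := by
  have hZa := hZmem a ha
  have hpre : Prod.mk z ⁻¹' (K n g f a)
      = {w : ℝ | U n g f z + w ^ 2 / 8 ≤ a ∧ z ∈ Icc (-(rho n g f)) (rho n g f)} := rfl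
  by_cases hz : z ∈ Icc (-(Z n g f a)) (Z n g f a)
  · have hzabs : |z| ≤ Z n g f a := abs_le.mpr ⟨(mem_Icc.mp hz).1, (mem_Icc.mp hz).2⟩
    have hzρ : z ∈ Icc (-(rho n g f)) (rho n g f) := by
      rw [mem_Icc]
      constructor
      · linarith [abs_le.mp (le_trans hzabs hZa.2) |>.1]
      · linarith [abs_le.mp (le_trans hzabs hZa.2) |>.2]
    have hUza : U n g f z ≤ a := (U_le_iff hn hρ hm hg hrp hmono hUm hZmem hZval ha hzρ).mpr hzabs
    have h8 : 0 ≤ 8 * (a - U n g f z) := by linarith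
    have hset : Prod.mk z ⁻¹' (K n g f a)
        = Icc (-(Real.sqrt (8 * (a - U n g f z)))) (Real.sqrt (8 * (a - U n g f z))) := by
      rw [hpre]
      ext w
      simp only [mem_setOf_eq, mem_Icc, hzρ, and_true]
      constructor
      · intro h
        have hw : w ^ 2 ≤ 8 * (a - U n g f z) := by linarith
        have := Real.sqrt_le_sqrt hw
        rw [Real.sqrt_sq_eq_abs] at this
        exact abs_le.mp this
      · intro h
        have hw : |w| ≤ Real.sqrt (8 * (a - U n g f z)) := abs_le.mpr h
        have h1 : |w| * |w| ≤ 8 * (a - U n g f z) := by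
          calc |w| * |w| ≤ Real.sqrt (8 * (a - U n g f z)) * Real.sqrt (8 * (a - U n g f z)) :=
              mul_le_mul hw hw (abs_nonneg w) (Real.sqrt_nonneg _)
            _ = 8 * (a - U n g f z) := Real.mul_self_sqrt h8
        nlinarith [abs_mul_abs_self w]
    rw [hset, indicator_of_mem hz, Real.volume_Icc]
    congr 1
    rw [Real.sqrt_mul (by norm_num : (0:ℝ) ≤ 8), sqrt8]
    ring
  · rw [indicator_of_notMem hz]
    by_cases hzρ : z ∈ Icc (-(rho n g f)) (rho n g f)
    · have hUza : ¬ (U n g f z ≤ a) := by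
        intro hcon
        exact hz (abs_le.mp ((U_le_iff hn hρ hm hg hrp hmono hUm hZmem hZval ha hzρ).mp hcon) |> fun h => mem_Icc.mpr h)
      have : Prod.mk z ⁻¹' (K n g f a) = ∅ := by
        rw [hpre]
        ext w
        simp only [mem_setOf_eq, mem_empty_iff_false, iff_false, not_and]
        intro h
        exfalso
        apply hUza
        nlinarith [sq_nonneg w]
      rw [this, measure_empty]
    · have : Prod.mk z ⁻¹' (K n g f a) = ∅ := by
        rw [hpre]
        ext w
        simp only [mem_setOf_eq, mem_empty_iff_false, iff_false, not_and]
        intro _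
        exact hzρ
      rw [this, measure_empty]

lemma inner_eq {a t : ℝ} (ha : a ∈ Icc 0 m) (ht : t ∈ Ioc 0 a) :
    ∫⁻ z in Icc (-(Z n g f a)) (Z n g f a),
        ENNReal.ofReal (2 * Real.sqrt 2 / Real.sqrt (t - U n g f z))
      = theta n g f t := by
  have htm : t ∈ Icc (0:ℝ) m := ⟨ht.1.le, le_trans ht.2 ha.2⟩
  have hZt := hZmem t htm
  have hZa := hZmem a ha
  have hZle : Z n g f t ≤ Z n g f a := by
    by_contra hlt
    push_neg at hlt
    have := hmono hZa hZt hlt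
    rw [hZval t htm, hZval a ha] at this
    linarith [ht.2]
  have hsub : Icc (-(Z n g f t)) (Z n g f t) ⊆ Icc (-(Z n g f a)) (Z n g f a) :=
    Icc_subset_Icc (by linarith) hZle
  rw [theta, ← union_diff_cancel hsub,
    lintegral_union (measurableSet_Icc.diff measurableSet_Icc) disjoint_sdiff_right]
  have hzero : ∫⁻ z in Icc (-(Z n g f a)) (Z n g f a) \ Icc (-(Z n g f t)) (Z n g f t),
      ENNReal.ofReal (2 * Real.sqrt 2 / Real.sqrt (t - U n g f z)) = 0 := by
    rw [setLIntegral_congr_fun_ae (measurableSet_Icc.diff measurableSet_Icc)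
      (ae_of_all _ (fun z hz => ?_))]
    · exact lintegral_zero
    · obtain ⟨hz1, hz2⟩ := hz
      have hzρ : z ∈ Icc (-(rho n g f)) (rho n g f) := by
        rw [mem_Icc] at hz1 ⊢
        exact ⟨by linarith [hZa.2, hz1.1], by linarith [hZa.2, hz1.2]⟩
      have : ¬ (U n g f z ≤ t) := by
        intro hcon
        apply hz2
        have := (U_le_iff hn hρ hm hg hrp hmono hUm hZmem hZval htm hzρ).mp hcon
        exact mem_Icc.mpr (abs_le.mp this)
      push_neg at this
      have h0 : Real.sqrt (t - U n g f z) = 0 := Real.sqrt_eq_zero'.mpr (by linarith)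
      rw [h0, div_zero, ENNReal.ofReal_zero]
  rw [hzero, add_zero]

lemma vol_K {a : ℝ} (ha : a ∈ Icc 0 m) :
    volume (K n g f a) = ∫⁻ t in Ioc 0 a, theta n g f t := by
  have hZa := hZmem a ha
  have hvol : (volume : Measure (ℝ × ℝ)) = (volume : Measure ℝ).prod volume := rfl
  rw [hvol, Measure.prod_apply (K_closed a).measurableSet]
  have h1 : ∫⁻ z, volume (Prod.mk z ⁻¹' (K n g f a))
      = ∫⁻ z in Icc (-(Z n g f a)) (Z n g f a),
          ENNReal.ofReal (4 * Real.sqrt 2 * Real.sqrt (a - U n g f z)) := by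
    rw [lintegral_congr (slice_vol hn hρ hm hg hrp hmono hUm hZmem hZval ha),
      lintegral_indicator measurableSet_Icc]
  rw [h1]
  have h2 : ∀ z ∈ Icc (-(Z n g f a)) (Z n g f a),
      ENNReal.ofReal (4 * Real.sqrt 2 * Real.sqrt (a - U n g f z))
        = ∫⁻ t in Ioc 0 a, ENNReal.ofReal (2 * Real.sqrt 2 / Real.sqrt (t - U n g f z)) := by
    intro z hz
    have hzabs : |z| ≤ Z n g f a := abs_le.mpr ⟨(mem_Icc.mp hz).1, (mem_Icc.mp hz).2⟩
    have hzρ : z ∈ Icc (-(rho n g f)) (rho n g f) := by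
      rw [mem_Icc]
      exact ⟨by linarith [abs_le.mp (le_trans hzabs hZa.2) |>.1],
        by linarith [abs_le.mp (le_trans hzabs hZa.2) |>.2]⟩
    have hU0 : 0 ≤ U n g f z := U_nonneg_on hn hρ hm hg hrp hmono hUm hZmem hZval hzρ
    have hUa : U n g f z ≤ a := (U_le_iff hn hρ hm hg hrp hmono hUm hZmem hZval ha hzρ).mpr hzabs
    exact (sqrt_as_lintegral hU0 hUa).symm
  rw [setLIntegral_congr_fun_ae measurableSet_Icc (ae_of_all _ h2)]
  have hmeas : Measurable (Function.uncurry fun (z t : ℝ) =>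
      ENNReal.ofReal (2 * Real.sqrt 2 / Real.sqrt (t - U n g f z))) := by
    apply ENNReal.measurable_ofReal.comp
    apply Measurable.div measurable_const
    exact (Real.continuous_sqrt.comp
      ((continuous_snd.sub (U_cont.comp continuous_fst)))).measurable
  rw [lintegral_lintegral_swap hmeas.aemeasurable]
  exact setLIntegral_congr_fun_ae measurableSet_Ioc
    (ae_of_all _ (fun t ht => inner_eq hn hρ hm hg hrp hmono hUm hZmem hZval ha ht))

lemma U_zero' : U n g f 0 = 0 := by
  unfold U; rw [zero_pow (by norm_num), zero_pow (by omega)]; ring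

lemma Z_zero : Z n g f 0 = 0 := by
  have h1 := hZmem 0 (left_mem_Icc.mpr hm.le)
  have h2 := hZval 0 (left_mem_Icc.mpr hm.le)
  rcases eq_or_lt_of_le h1.1 with h | h
  · exact h.symm
  · exfalso
    have := hmono (left_mem_Icc.mpr hρ.le) h1 h
    rw [h2, U_zero' hn hρ hm hg hrp hmono hUm hZmem hZval] at this
    exact lt_irrefl 0 this

lemma Z_mono {t₁ t₂ : ℝ} (h1 : t₁ ∈ Icc 0 m) (h2 : t₂ ∈ Icc 0 m) (h : t₁ ≤ t₂) :
    Z n g f t₁ ≤ Z n g f t₂ := by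
  by_contra hlt
  push_neg at hlt
  have := hmono (hZmem t₂ h2) (hZmem t₁ h1) hlt
  rw [hZval t₁ h1, hZval t₂ h2] at this
  linarith

lemma Z_pos {t : ℝ} (ht : t ∈ Icc 0 m) (ht0 : 0 < t) : 0 < Z n g f t := by
  rcases eq_or_lt_of_le (hZmem t ht).1 with h | h
  · exfalso
    have := hZval t ht
    rw [← h, U_zero' hn hρ hm hg hrp hmono hUm hZmem hZval] at this
    linarith
  · exact h

lemma theta_zero : theta n g f 0 = 0 := by
  rw [theta, Z_zero hn hρ hm hg hrp hmono hUm hZmem hZval]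
  apply setLIntegral_measure_zero
  simp

lemma theta_scaled {t : ℝ} (ht : t ∈ Icc 0 m) (ht0 : 0 < t) :
    theta n g f t = ∫⁻ σ in Icc (-1 : ℝ) 1,
      ENNReal.ofReal (2 * Real.sqrt 2 * Z n g f t
        / Real.sqrt (t - U n g f (Z n g f t * σ))) := by
  have hr : 0 < Z n g f t := Z_pos hn hρ hm hg hrp hmono hUm hZmem hZval ht ht0
  have hmeas : Measurable (fun z : ℝ =>
      ENNReal.ofReal (2 * Real.sqrt 2 / Real.sqrt (t - U n g f z))) := by
    apply ENNReal.measurable_ofReal.comp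
    apply Measurable.div measurable_const
    exact (Real.continuous_sqrt.comp (continuous_const.sub U_cont)).measurable
  rw [theta, lintegral_Icc_scale hr hmeas, ← lintegral_const_mul' _ _ ENNReal.ofReal_ne_top]
  apply setLIntegral_congr_fun_ae measurableSet_Icc
  apply ae_of_all
  intro σ _
  rw [← ENNReal.ofReal_mul hr.le]
  congr 1
  rw [mul_div_assoc, mul_div_assoc]
  ring

lemma theta_mono {t₁ t₂ : ℝ} (h1 : t₁ ∈ Icc 0 m) (h2 : t₂ ∈ Icc 0 m) (h : t₁ ≤ t₂) :
    theta n g f t₁ ≤ theta n g f t₂ := by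
  rcases eq_or_lt_of_le h1.1 with h0 | h0
  · rw [← h0, theta_zero hn hρ hm hg hrp hmono hUm hZmem hZval]
    exact zero_le
  have h0' : 0 < t₂ := lt_of_lt_of_le h0 h
  rw [theta_scaled hn hρ hm hg hrp hmono hUm hZmem hZval h1 h0,
    theta_scaled hn hρ hm hg hrp hmono hUm hZmem hZval h2 h0']
  set r₁ := Z n g f t₁ with hr₁def
  set r₂ := Z n g f t₂ with hr₂def
  have hr₁ : 0 < r₁ := Z_pos hn hρ hm hg hrp hmono hUm hZmem hZval h1 h0
  have hr₁₂ : r₁ ≤ r₂ := Z_mono hn hρ hm hg hrp hmono hUm hZmem hZval h1 h2 h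
  have hr₂ : 0 < r₂ := lt_of_lt_of_le hr₁ hr₁₂
  have hρ₁ : r₁ ∈ Icc 0 (rho n g f) := hZmem t₁ h1
  have hρ₂ : r₂ ∈ Icc 0 (rho n g f) := hZmem t₂ h2
  have ht₁ : U n g f r₁ = t₁ := hZval t₁ h1
  have ht₂ : U n g f r₂ = t₂ := hZval t₂ h2
  apply setLIntegral_mono
  · apply ENNReal.measurable_ofReal.comp
    apply Measurable.div measurable_const
    exact (Real.continuous_sqrt.comp (continuous_const.sub
      (U_cont.comp (continuous_const.mul continuous_id)))).measurable
  intro σ hσ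
  have hσ1 : |σ| ≤ 1 := abs_le.mpr ⟨(mem_Icc.mp hσ).1, (mem_Icc.mp hσ).2⟩
  set d₁ := t₁ - U n g f (r₁ * σ) with hd₁def
  set d₂ := t₂ - U n g f (r₂ * σ) with hd₂def
  by_cases hd₁ : d₁ ≤ 0
  · have : Real.sqrt d₁ = 0 := Real.sqrt_eq_zero'.mpr hd₁
    rw [this, div_zero, ENNReal.ofReal_zero]
    exact zero_le
  push_neg at hd₁
  -- |σ| < 1
  have hσlt : |σ| < 1 := by
    rcases lt_or_eq_of_le hσ1 with h' | h'
    · exact h'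
    · exfalso
      have : U n g f (r₁ * σ) = t₁ := by
        rw [U_abs, abs_mul, h', mul_one, abs_of_pos hr₁, ht₁]
      rw [hd₁def, this] at hd₁
      linarith
  have habs₂ : r₂ * |σ| ∈ Icc 0 (rho n g f) := by
    constructor
    · positivity
    · calc r₂ * |σ| ≤ r₂ * 1 := by
            apply mul_le_mul_of_nonneg_left hσ1 hr₂.le
        _ = r₂ := mul_one r₂
        _ ≤ rho n g f := hρ₂.2
  have hd₂ : 0 < d₂ := by
    have hlt : r₂ * |σ| < r₂ := by nlinarith
    have := hmono habs₂ hρ₂ hlt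
    rw [ht₂] at this
    have heq : U n g f (r₂ * σ) = U n g f (r₂ * |σ|) := by
      rw [U_abs, abs_mul, abs_of_pos hr₂]
    rw [hd₂def, heq]
    linarith
  -- key algebraic inequality
  have key : r₁ ^ 2 * d₂ ≤ r₂ ^ 2 * d₁ := by
    have e : r₂ ^ 2 * d₁ - r₁ ^ 2 * d₂
        = g * (r₁ ^ 2 * (r₂ ^ 2 * ((1 - σ ^ (4*n+2)) * (r₂ ^ (4*n) - r₁ ^ (4*n))))) := by
      rw [hd₁def, hd₂def, ← ht₁, ← ht₂]
      unfold U
      ring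
    have hσp : σ ^ (4*n+2) ≤ 1 := by
      rw [show 4*n+2 = 2*(2*n+1) by ring, pow_mul]
      exact pow_le_one₀ (sq_nonneg σ) ((sq_le_one_iff_abs_le_one σ).mpr hσ1)
    have hrp' : r₁ ^ (4*n) ≤ r₂ ^ (4*n) := pow_le_pow_left₀ hr₁.le hr₁₂ _
    nlinarith [mul_nonneg (mul_nonneg (mul_nonneg hg.le (sq_nonneg r₁)) (sq_nonneg r₂))
      (mul_nonneg (by linarith : (0:ℝ) ≤ 1 - σ ^ (4*n+2)) (by linarith : (0:ℝ) ≤ r₂ ^ (4*n) - r₁ ^ (4*n)))]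
  apply ENNReal.ofReal_le_ofReal
  have hs₁ : 0 < Real.sqrt d₁ := Real.sqrt_pos.mpr hd₁
  have hs₂ : 0 < Real.sqrt d₂ := Real.sqrt_pos.mpr hd₂
  rw [div_le_div_iff₀ hs₁ hs₂]
  have hsq : r₁ * Real.sqrt d₂ ≤ r₂ * Real.sqrt d₁ := by
    have e₁ : r₁ * Real.sqrt d₂ = Real.sqrt (r₁ ^ 2 * d₂) := by
      rw [Real.sqrt_mul (sq_nonneg r₁), Real.sqrt_sq hr₁.le]
    have e₂ : r₂ * Real.sqrt d₁ = Real.sqrt (r₂ ^ 2 * d₁) := by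
      rw [Real.sqrt_mul (sq_nonneg r₂), Real.sqrt_sq hr₂.le]
    rw [e₁, e₂]
    exact Real.sqrt_le_sqrt key
  nlinarith [Real.sqrt_nonneg (2:ℝ), hsq]

lemma geom_bound {σ : ℝ} (hσ : |σ| ≤ 1) :
    1 - (σ^2)^(2*n+1) ≤ (2*(n:ℝ)+1) * (1 - σ^2) := by
  have hσ2 : σ^2 ≤ 1 := (sq_le_one_iff_abs_le_one σ).mpr hσ
  have hgeom := geom_sum₂_mul (1:ℝ) (σ^2) (2*n+1)
  have hsum : (∑ i ∈ Finset.range (2*n+1), (1:ℝ)^i * (σ^2)^(2*n+1-1-i)) ≤ (2*(n:ℝ)+1) := by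
    calc (∑ i ∈ Finset.range (2*n+1), (1:ℝ)^i * (σ^2)^(2*n+1-1-i))
        ≤ ∑ _i ∈ Finset.range (2*n+1), (1:ℝ) := by
          apply Finset.sum_le_sum
          intro i _
          rw [one_pow, one_mul]
          exact pow_le_one₀ (sq_nonneg σ) hσ2
      _ = (2*(n:ℝ)+1) := by
          rw [Finset.sum_const, Finset.card_range]
          push_cast
          ring
  have h1σ : 0 ≤ 1 - σ^2 := by linarith
  calc 1 - (σ^2)^(2*n+1) = 1^(2*n+1) - (σ^2)^(2*n+1) := by rw [one_pow]
    _ = (∑ i ∈ Finset.range (2*n+1), (1:ℝ)^i * (σ^2)^(2*n+1-1-i)) * (1 - σ^2) := hgeom.symm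
    _ ≤ (2*(n:ℝ)+1) * (1 - σ^2) := mul_le_mul_of_nonneg_right hsum h1σ

lemma delta_pos : 0 < f - (2*(n:ℝ)+1) * (g * (Z n g f m) ^ (4*n)) := by
  have hmm : m ∈ Icc (0:ℝ) m := right_mem_Icc.mpr hm.le
  have hZm := hZmem m hmm
  have hZmlt : Z n g f m < rho n g f := by
    rcases lt_or_eq_of_le hZm.2 with h | h
    · exact h
    · exfalso
      have := hZval m hmm
      rw [h] at this
      linarith
  have h3 : (0:ℝ) < 2*(n:ℝ)+1 := by positivity
  have hpow : (Z n g f m) ^ (4*n) < (rho n g f) ^ (4*n) := by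
    apply pow_lt_pow_left₀ hZmlt hZm.1
    omega
  have h2 : g * (Z n g f m) ^ (4*n) < f / (2*(n:ℝ)+1) := by
    rw [← hrp]
    exact (mul_lt_mul_iff_right₀ hg).mpr hpow
  have h4 : (2*(n:ℝ)+1) * (g * (Z n g f m) ^ (4*n)) < f := by
    calc (2*(n:ℝ)+1) * (g * (Z n g f m) ^ (4*n)) < (2*(n:ℝ)+1) * (f / (2*(n:ℝ)+1)) :=
          (mul_lt_mul_iff_right₀ h3).mpr h2
      _ = f := by field_simp
  linarith

lemma theta_lt_top {t : ℝ} (ht : t ∈ Icc 0 m) : theta n g f t < ⊤ := by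
  rcases eq_or_lt_of_le ht.1 with h0 | h0
  · rw [← h0, theta_zero hn hρ hm hg hrp hmono hUm hZmem hZval]
    exact ENNReal.zero_lt_top
  set δ := f - (2*(n:ℝ)+1) * (g * (Z n g f m) ^ (4*n)) with hδdef
  have hδ : 0 < δ := delta_pos hn hρ hm hg hrp hmono hUm hZmem hZval
  set r := Z n g f t with hrdef
  have hr : 0 < r := Z_pos hn hρ hm hg hrp hmono hUm hZmem hZval ht h0
  have hrm : r ≤ Z n g f m :=
    Z_mono hn hρ hm hg hrp hmono hUm hZmem hZval ht (right_mem_Icc.mpr hm.le) ht.2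
  have hZm0 : 0 ≤ Z n g f m := (hZmem m (right_mem_Icc.mpr hm.le)).1
  set C := 2 * Real.sqrt 2 / Real.sqrt δ with hCdef
  have hC : 0 ≤ C := by positivity
  rw [theta_scaled hn hρ hm hg hrp hmono hUm hZmem hZval ht h0]
  have hbound : ∀ σ ∈ Icc (-1:ℝ) 1,
      ENNReal.ofReal (2 * Real.sqrt 2 * r / Real.sqrt (t - U n g f (r * σ)))
        ≤ ENNReal.ofReal (C / Real.sqrt (1 - σ)) + ENNReal.ofReal (C / Real.sqrt (σ - (-1))) := by
    intro σ hσ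
    have hσ1 : |σ| ≤ 1 := abs_le.mpr ⟨(mem_Icc.mp hσ).1, (mem_Icc.mp hσ).2⟩
    have hσ2 : σ^2 ≤ 1 := (sq_le_one_iff_abs_le_one σ).mpr hσ1
    -- lower bound for t - U(rσ)
    have hlow : δ * (r^2 * (1 - σ^2)) ≤ t - U n g f (r * σ) := by
      have ht' : U n g f r = t := hZval t ht
      have hgeo := geom_bound hn hρ hm hg hrp hmono hUm hZmem hZval hσ1
      have hexp : t - U n g f (r * σ)
          = f * r^2 * (1 - σ^2) - g * r^(4*n) * r^2 * (1 - (σ^2)^(2*n+1)) := by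
        rw [← ht']
        unfold U
        ring
      have hrpow : g * r^(4*n) ≤ g * (Z n g f m)^(4*n) :=
        mul_le_mul_of_nonneg_left (pow_le_pow_left₀ hr.le hrm _) hg.le
      have h1σ : (0:ℝ) ≤ 1 - σ^2 := by linarith
      have hgeo' : g * r^(4*n) * r^2 * (1 - (σ^2)^(2*n+1))
          ≤ g * (Z n g f m)^(4*n) * r^2 * ((2*(n:ℝ)+1) * (1 - σ^2)) := by
        have e1 : (0:ℝ) ≤ g * r^(4*n) := by positivity
        have e2 : 1 - (σ^2)^(2*n+1) ≤ (2*(n:ℝ)+1) * (1 - σ^2) := hgeo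
        have e3 : (0:ℝ) ≤ r^2 := sq_nonneg r
        have e5 : (0:ℝ) ≤ (2*(n:ℝ)+1) * (1 - σ^2) := by positivity
        nlinarith [mul_le_mul_of_nonneg_left e2 (mul_nonneg e1 e3),
          mul_le_mul_of_nonneg_right (mul_le_mul_of_nonneg_right hrpow e3) e5]
      rw [hexp, hδdef]
      nlinarith [hgeo']
    by_cases hd : t - U n g f (r * σ) ≤ 0
    · have : Real.sqrt (t - U n g f (r * σ)) = 0 := Real.sqrt_eq_zero'.mpr hd
      rw [this, div_zero, ENNReal.ofReal_zero]
      exact zero_le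
    push_neg at hd
    have hσlt : σ^2 < 1 := by
      rcases lt_or_eq_of_le hσ1 with h' | h'
      · nlinarith [abs_nonneg σ, abs_mul_abs_self σ, sq_abs σ]
      · exfalso
        have : U n g f (r * σ) = t := by
          rw [U_abs, abs_mul, h', mul_one, abs_of_pos hr, hZval t ht]
        rw [this] at hd
        linarith
    have key : 2 * Real.sqrt 2 * r / Real.sqrt (t - U n g f (r * σ)) ≤ C / Real.sqrt (1 - σ^2) := by
      have hs1 : Real.sqrt (δ * (r^2 * (1 - σ^2))) ≤ Real.sqrt (t - U n g f (r * σ)) :=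
        Real.sqrt_le_sqrt hlow
      have hsplit : Real.sqrt (δ * (r^2 * (1 - σ^2)))
          = Real.sqrt δ * (r * Real.sqrt (1 - σ^2)) := by
        rw [Real.sqrt_mul hδ.le, Real.sqrt_mul (sq_nonneg r), Real.sqrt_sq hr.le]
      have hpos : 0 < Real.sqrt δ * (r * Real.sqrt (1 - σ^2)) := by
        have : 0 < 1 - σ^2 := by linarith
        positivity
      calc 2 * Real.sqrt 2 * r / Real.sqrt (t - U n g f (r * σ))
          ≤ 2 * Real.sqrt 2 * r / (Real.sqrt δ * (r * Real.sqrt (1 - σ^2))) := by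
            apply div_le_div_of_nonneg_left (by positivity) hpos
            rw [← hsplit]
            exact hs1
        _ = C / Real.sqrt (1 - σ^2) := by
            rw [hCdef, div_div]
            rw [show Real.sqrt δ * (r * Real.sqrt (1 - σ^2))
              = r * (Real.sqrt δ * Real.sqrt (1 - σ^2)) by ring]
            rw [show (2:ℝ) * Real.sqrt 2 * r = r * (2 * Real.sqrt 2) by ring]
            rw [mul_div_mul_left _ _ hr.ne']
    have hsum : C / Real.sqrt (1 - σ^2) ≤ C / Real.sqrt (1 - σ) + C / Real.sqrt (σ - (-1)) := by
      obtain ⟨ha1, ha2⟩ := abs_le.mp hσ1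
      have h1 : (0:ℝ) ≤ 1 - σ := by linarith
      have h2 : (0:ℝ) ≤ σ + 1 := by linarith
      have hfact : 1 - σ^2 = (1 - σ) * (σ + 1) := by ring
      rcases le_or_gt σ 0 with hσ0 | hσ0
      · -- 1 - σ ≥ 1, so √(1-σ²) ≥ √(σ+1)
        have : Real.sqrt (σ - (-1)) ≤ Real.sqrt (1 - σ^2) := by
          apply Real.sqrt_le_sqrt
          nlinarith
        have hC2 : 0 ≤ C / Real.sqrt (1 - σ) := by positivity
        have : C / Real.sqrt (1 - σ^2) ≤ C / Real.sqrt (σ - (-1)) := by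
          rcases eq_or_lt_of_le (Real.sqrt_nonneg (σ - (-1))) with hz | hz
          · have hd0 : σ - (-1) ≤ 0 := Real.sqrt_eq_zero'.mp hz.symm
            have hd1 : 1 - σ^2 ≤ 0 := by nlinarith
            exact absurd hσlt (by linarith)
          · exact div_le_div_of_nonneg_left hC hz this
        linarith
      · have : Real.sqrt (1 - σ) ≤ Real.sqrt (1 - σ^2) := by
          apply Real.sqrt_le_sqrt
          nlinarith
        have hC2 : 0 ≤ C / Real.sqrt (σ - (-1)) := by positivity
        have : C / Real.sqrt (1 - σ^2) ≤ C / Real.sqrt (1 - σ) := by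
          rcases eq_or_lt_of_le (Real.sqrt_nonneg (1 - σ)) with hz | hz
          · have hd0 : 1 - σ ≤ 0 := Real.sqrt_eq_zero'.mp hz.symm
            have hd1 : 1 - σ^2 ≤ 0 := by nlinarith
            exact absurd hσlt (by linarith)
          · exact div_le_div_of_nonneg_left hC hz this
        linarith
    calc ENNReal.ofReal (2 * Real.sqrt 2 * r / Real.sqrt (t - U n g f (r * σ)))
        ≤ ENNReal.ofReal (C / Real.sqrt (1 - σ) + C / Real.sqrt (σ - (-1))) :=
          ENNReal.ofReal_le_ofReal (le_trans key hsum)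
      _ ≤ _ := ENNReal.ofReal_add_le
  calc ∫⁻ σ in Icc (-1:ℝ) 1, ENNReal.ofReal (2 * Real.sqrt 2 * r / Real.sqrt (t - U n g f (r * σ)))
      ≤ ∫⁻ σ in Icc (-1:ℝ) 1,
          (ENNReal.ofReal (C / Real.sqrt (1 - σ)) + ENNReal.ofReal (C / Real.sqrt (σ - (-1)))) := by
        apply setLIntegral_mono
        · apply Measurable.fun_add
          · exact ENNReal.measurable_ofReal.comp
              (measurable_const.div (Real.continuous_sqrt.comp (by continuity)).measurable)
          · exact ENNReal.measurable_ofReal.comp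
              (measurable_const.div (Real.continuous_sqrt.comp (by continuity)).measurable)
        · exact hbound
    _ = (∫⁻ σ in Icc (-1:ℝ) 1, ENNReal.ofReal (C / Real.sqrt (1 - σ)))
        + ∫⁻ σ in Icc (-1:ℝ) 1, ENNReal.ofReal (C / Real.sqrt (σ - (-1))) := by
        apply lintegral_add_left
        exact ENNReal.measurable_ofReal.comp
          (measurable_const.div (Real.continuous_sqrt.comp (by continuity)).measurable)
    _ < ⊤ := by
        apply ENNReal.add_lt_top.mpr
        constructor
        · exact fin_aux_right hC (by norm_num)
        · exact fin_aux_left hC (by norm_num)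

lemma theta_pos {t : ℝ} (ht : t ∈ Icc 0 m) (ht0 : 0 < t) : 0 < theta n g f t := by
  set r := Z n g f t with hrdef
  have hr : 0 < r := Z_pos hn hρ hm hg hrp hmono hUm hZmem hZval ht ht0
  have hρmem := hZmem t ht
  have hlow : ENNReal.ofReal (2 * Real.sqrt 2 / Real.sqrt t) * ENNReal.ofReal (2 * r)
      ≤ theta n g f t := by
    rw [theta]
    calc ENNReal.ofReal (2 * Real.sqrt 2 / Real.sqrt t) * ENNReal.ofReal (2 * r)
        = ∫⁻ _z in Ioo (-r) r, ENNReal.ofReal (2 * Real.sqrt 2 / Real.sqrt t) := by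
          rw [setLIntegral_const, Real.volume_Ioo]
          congr 1
          ring_nf
      _ ≤ ∫⁻ z in Ioo (-r) r, ENNReal.ofReal (2 * Real.sqrt 2 / Real.sqrt (t - U n g f z)) := by
          apply setLIntegral_mono
          · exact ENNReal.measurable_ofReal.comp
              (measurable_const.div (Real.continuous_sqrt.comp
                (continuous_const.sub U_cont)).measurable)
          · intro z hz
            apply ENNReal.ofReal_le_ofReal
            have hzabs : |z| < r := abs_lt.mpr ⟨hz.1, hz.2⟩
            have hzρ : z ∈ Icc (-(rho n g f)) (rho n g f) := by
              rw [mem_Icc]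
              have := abs_le.mp (le_trans hzabs.le hρmem.2)
              exact ⟨this.1, this.2⟩
            have hU0 : 0 ≤ U n g f z := U_nonneg_on hn hρ hm hg hrp hmono hUm hZmem hZval hzρ
            have hUlt : U n g f z < t := by
              have habs : |z| ∈ Icc 0 (rho n g f) := ⟨abs_nonneg z, le_trans hzabs.le hρmem.2⟩
              have := hmono habs hρmem hzabs
              rw [hZval t ht] at this
              rw [U_abs]
              exact this
            have h1 : Real.sqrt (t - U n g f z) ≤ Real.sqrt t := Real.sqrt_le_sqrt (by linarith)
            have h2 : 0 < Real.sqrt (t - U n g f z) := Real.sqrt_pos.mpr (by linarith)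
            exact div_le_div_of_nonneg_left (by positivity) h2 h1
      _ ≤ ∫⁻ z in Icc (-r) r, ENNReal.ofReal (2 * Real.sqrt 2 / Real.sqrt (t - U n g f z)) :=
          lintegral_mono_set Ioo_subset_Icc_self
  have hpos : 0 < ENNReal.ofReal (2 * Real.sqrt 2 / Real.sqrt t) * ENNReal.ofReal (2 * r) := by
    apply ENNReal.mul_pos
    · simp only [ne_eq, ENNReal.ofReal_eq_zero, not_le]
      have : 0 < Real.sqrt t := Real.sqrt_pos.mpr ht0
      positivity
    · simp only [ne_eq, ENNReal.ofReal_eq_zero, not_le]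
      positivity
  exact lt_of_lt_of_le hpos hlow

lemma component_eq {a : ℝ} (ha : a ∈ Icc 0 m) :
    connectedComponentIn
      {p : ℝ × ℝ | p.2 ^ 2 / 8 + f * p.1 ^ 2 - g * p.1 ^ (4 * n + 2) ≤ a} (0, 0)
      = K n g f a := by
  set S := {p : ℝ × ℝ | p.2 ^ 2 / 8 + f * p.1 ^ 2 - g * p.1 ^ (4 * n + 2) ≤ a} with hSdef
  have hmemS : ∀ p : ℝ × ℝ, p ∈ S ↔ U n g f p.1 + p.2 ^ 2 / 8 ≤ a := by
    intro p
    simp only [hSdef, mem_setOf_eq, U]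
    constructor <;> intro h <;> linarith
  have h0S : (0, 0) ∈ S := by
    rw [hmemS]
    simp only [U_zero' hn hρ hm hg hrp hmono hUm hZmem hZval]
    norm_num
    exact ha.1
  have hKS : K n g f a = S ∩ {p : ℝ × ℝ | p.1 ∈ Icc (-(rho n g f)) (rho n g f)} := by
    ext p
    simp only [K, mem_setOf_eq, mem_inter_iff, hmemS]
  have hK0 : (0, 0) ∈ K n g f a := by
    constructor
    · simp only [U_zero' hn hρ hm hg hrp hmono hUm hZmem hZval]
      norm_num
      exact ha.1
    · simp only [mem_Icc]
      constructor <;> linarith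
  -- star shaped
  have hstar : ∀ p ∈ K n g f a, ∀ c : ℝ, c ∈ Icc (0:ℝ) 1 → c • p ∈ K n g f a := by
    rintro ⟨z, w⟩ ⟨hp1, hp2⟩ c hc
    have hcz : |c * z| ≤ |z| := by
      rw [abs_mul]
      calc |c| * |z| ≤ 1 * |z| := by
            apply mul_le_mul_of_nonneg_right _ (abs_nonneg z)
            rw [abs_of_nonneg hc.1]
            exact hc.2
        _ = |z| := one_mul _
    have hzρ : |z| ≤ rho n g f := abs_le.mpr ⟨(mem_Icc.mp hp2).1, (mem_Icc.mp hp2).2⟩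
    have hUle : U n g f (c * z) ≤ U n g f z := by
      rw [U_abs, U_abs (x := z)]
      rcases eq_or_lt_of_le hcz with h | h
      · rw [h]
      · exact (hmono ⟨abs_nonneg _, le_trans hcz hzρ⟩ ⟨abs_nonneg _, hzρ⟩ h).le
    constructor
    · show U n g f (c * z) + (c * w) ^ 2 / 8 ≤ a
      have hw : (c * w) ^ 2 ≤ w ^ 2 := by
        have : c ^ 2 ≤ 1 := pow_le_one₀ hc.1 hc.2
        nlinarith [sq_nonneg w]
      simp only [K, mem_setOf_eq] at hp1
      linarith
    · show c * z ∈ Icc (-(rho n g f)) (rho n g f)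
      rw [mem_Icc]
      have := abs_le.mp (le_trans hcz hzρ)
      exact ⟨this.1, this.2⟩
  have hpre : IsPreconnected (K n g f a) := by
    apply isPreconnected_of_forall ((0, 0) : ℝ × ℝ)
    intro y hy
    refine ⟨segment ℝ ((0,0) : ℝ × ℝ) y, ?_, left_mem_segment _ _ _, right_mem_segment _ _ _,
      (convex_segment _ _).isPreconnected⟩
    rintro q ⟨u, v, hu, hv, huv, rfl⟩
    have : u • ((0,0) : ℝ × ℝ) + v • y = v • y := by
      simp
    rw [this]
    exact hstar y hy v ⟨hv, by linarith⟩
  have hKsub : K n g f a ⊆ S := by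
    rw [hKS]; exact inter_subset_left
  -- forward inclusion
  apply Subset.antisymm
  · -- component ⊆ K
    rw [connectedComponentIn_eq_image h0S]
    set x₀ : S := ⟨((0,0) : ℝ × ℝ), h0S⟩
    have hstrip_eq : (Subtype.val ⁻¹' {p : ℝ × ℝ | p.1 ∈ Icc (-(rho n g f)) (rho n g f)} : Set S)
        = (Subtype.val ⁻¹' {p : ℝ × ℝ | p.1 ∈ Ioo (-(rho n g f)) (rho n g f)} : Set S) := by
      ext s
      simp only [mem_preimage, mem_setOf_eq, mem_Icc, mem_Ioo]
      constructor
      · rintro ⟨h1, h2⟩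
        have hne : ∀ z : ℝ, |z| = rho n g f → ¬ (U n g f z + (s.1).2 ^ 2 / 8 ≤ a) := by
          intro z hz hcon
          have : U n g f z = U n g f (rho n g f) := by rw [U_abs, hz]
          nlinarith [sq_nonneg (s.1).2, ha.2, hUm]
        have hS := (hmemS s.1).mp s.2
        constructor
        · rcases eq_or_lt_of_le h1 with h | h
          · exfalso
            exact hne (s.1).1 (by rw [← h, abs_of_nonpos (by linarith), neg_neg]) hS
          · exact h
        · rcases eq_or_lt_of_le h2 with h | h
          · exfalso
            exact hne (s.1).1 (by rw [h, abs_of_nonneg (by linarith)]) hS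
          · exact h
      · rintro ⟨h1, h2⟩
        exact ⟨h1.le, h2.le⟩
    have hclopen : IsClopen (Subtype.val ⁻¹'
        {p : ℝ × ℝ | p.1 ∈ Icc (-(rho n g f)) (rho n g f)} : Set S) := by
      constructor
      · apply IsClosed.preimage continuous_subtype_val
        exact (isClosed_Icc).preimage continuous_fst
      · rw [hstrip_eq]
        apply IsOpen.preimage continuous_subtype_val
        exact (isOpen_Ioo).preimage continuous_fst
    have hx₀ : x₀ ∈ (Subtype.val ⁻¹'
        {p : ℝ × ℝ | p.1 ∈ Icc (-(rho n g f)) (rho n g f)} : Set S) := by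
      simp only [mem_preimage, mem_setOf_eq, mem_Icc]
      norm_num
      linarith
    have hcc := hclopen.connectedComponent_subset hx₀
    intro p hp
    obtain ⟨q, hq, rfl⟩ := hp
    rw [hKS]
    exact ⟨q.2, hcc hq⟩
  · exact hpre.subset_connectedComponentIn hK0 hKsub

end Main

lemma f_pos (hn : 1 ≤ n) (hm : 0 < m) (hg : 0 < g)
    (hf : (2 * (n : ℝ) + 1) * (m / (2 * (n : ℝ))) ^ ((2 * (n : ℝ)) / (2 * (n : ℝ) + 1)) *
        g ^ (1 / (2 * (n : ℝ) + 1)) < f) : 0 < f := by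
  have hc : (0:ℝ) < 2 * n := by
    have : (1:ℝ) ≤ n := by exact_mod_cast hn
    linarith
  have h1 : (0:ℝ) < (m / (2 * (n:ℝ))) ^ ((2 * (n : ℝ)) / (2 * (n : ℝ) + 1)) :=
    Real.rpow_pos_of_pos (div_pos hm hc) _
  have h2 : (0:ℝ) < g ^ (1 / (2 * (n : ℝ) + 1)) := Real.rpow_pos_of_pos hg _
  have h3 : (0:ℝ) < (2 * (n : ℝ) + 1) * (m / (2 * (n : ℝ))) ^ ((2 * (n : ℝ)) / (2 * (n : ℝ) + 1)) *
        g ^ (1 / (2 * (n : ℝ) + 1)) := by positivity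
  linarith

lemma rho_pos (hn : 1 ≤ n) (hg : 0 < g) (hfpos : 0 < f) : 0 < rho n g f := by
  apply Real.rpow_pos_of_pos
  have hc : (0:ℝ) < 2 * n + 1 := by positivity
  exact div_pos hfpos (by positivity)

lemma rho_pow (hn : 1 ≤ n) (hg : 0 < g) (hfpos : 0 < f) :
    g * (rho n g f) ^ (4 * n) = f / (2 * (n:ℝ) + 1) := by
  have hc : (0:ℝ) < 2 * n := by
    have : (1:ℝ) ≤ n := by exact_mod_cast hn
    linarith
  have hx : (0:ℝ) < f / ((2 * (n : ℝ) + 1) * g) := div_pos hfpos (by positivity)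
  have h4n : ((4 * n : ℕ) : ℝ) = 2 * (2 * (n:ℝ)) := by push_cast; ring
  have : (rho n g f) ^ (4 * n) = f / ((2 * (n : ℝ) + 1) * g) := by
    rw [rho, ← Real.rpow_natCast (_ ^ _) (4 * n), ← Real.rpow_mul hx.le, h4n]
    rw [show (2 * (n:ℝ))⁻¹ / 2 * (2 * (2 * (n:ℝ))) = 1 by field_simp]
    exact Real.rpow_one _
  rw [this]; field_simp

lemma rho_sq (hn : 1 ≤ n) (hg : 0 < g) (hfpos : 0 < f) :
    (rho n g f) ^ 2 = (f / ((2 * (n : ℝ) + 1) * g)) ^ ((2 * (n:ℝ))⁻¹) := by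
  have hc : (0:ℝ) < 2 * n := by
    have : (1:ℝ) ≤ n := by exact_mod_cast hn
    linarith
  have hx : (0:ℝ) < f / ((2 * (n : ℝ) + 1) * g) := div_pos hfpos (by positivity)
  rw [rho, ← Real.rpow_natCast (_ ^ _) 2, ← Real.rpow_mul hx.le]
  norm_num

lemma crit (hn : 1 ≤ n) (hm : 0 < m) (hg : 0 < g)
    (hf : (2 * (n : ℝ) + 1) * (m / (2 * (n : ℝ))) ^ ((2 * (n : ℝ)) / (2 * (n : ℝ) + 1)) *
        g ^ (1 / (2 * (n : ℝ) + 1)) < f) : m < U n g f (rho n g f) := by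
  have hfpos := f_pos hn hm hg hf
  have hc : (0:ℝ) < 2 * n := by
    have : (1:ℝ) ≤ n := by exact_mod_cast hn
    linarith
  set c : ℝ := 2 * n with hcdef
  have hc1 : (0:ℝ) < c + 1 := by linarith
  -- value of U at rho
  have hUval : U n g f (rho n g f) = (f / ((c+1) * g)) ^ c⁻¹ * f * (c / (c+1)) := by
    have h1 : (rho n g f) ^ (4 * n + 2) = (rho n g f) ^ 2 * (rho n g f) ^ (4 * n) := by ring
    rw [U, h1]
    have h2 := rho_pow hn hg hfpos
    have h3 := rho_sq hn hg hfpos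
    rw [h3]
    have : g * ((f / ((2 * (n:ℝ) + 1) * g)) ^ (2 * (n:ℝ))⁻¹ * rho n g f ^ (4 * n))
        = (f / ((2 * (n:ℝ) + 1) * g)) ^ (2 * (n:ℝ))⁻¹ * (g * rho n g f ^ (4 * n)) := by ring
    rw [this, h2]
    rw [hcdef]
    field_simp
    ring
  rw [hUval]
  -- main inequality via raising hf to the power (c+1)/c
  set q : ℝ := (c + 1) / c with hq
  have hqpos : 0 < q := div_pos hc1 hc
  set A : ℝ := (m / c) ^ (c / (c+1)) with hA
  set B : ℝ := g ^ (1 / (c+1)) with hB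
  have hApos : 0 < A := Real.rpow_pos_of_pos (div_pos hm hc) _
  have hBpos : 0 < B := Real.rpow_pos_of_pos hg _
  have hL : (0:ℝ) < (c+1) * A * B := by positivity
  have key : ((c+1) * A * B) ^ q < f ^ q :=
    Real.rpow_lt_rpow hL.le hf hqpos
  have hAq : A ^ q = m / c := by
    rw [hA, ← Real.rpow_mul (le_of_lt (div_pos hm hc))]
    rw [show c / (c+1) * q = 1 by rw [hq]; field_simp]
    exact Real.rpow_one _
  have hBq : B ^ q = g ^ c⁻¹ := by
    rw [hB, ← Real.rpow_mul hg.le]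
    congr 1
    rw [hq]; field_simp
  have hexp : ((c+1) * A * B) ^ q = (c+1) ^ q * (m / c) * g ^ c⁻¹ := by
    rw [Real.mul_rpow (by positivity) hBpos.le, Real.mul_rpow hc1.le hApos.le, hAq, hBq]
  rw [hexp] at key
  have hfi : f ^ q = f * f ^ c⁻¹ := by
    rw [hq, show (c+1)/c = 1 + c⁻¹ by field_simp, Real.rpow_add hfpos,
      Real.rpow_one]
  rw [hfi] at key
  -- target : m < (f / ((c+1)*g)) ^ c⁻¹ * f * (c/(c+1))
  have hsplit : (f / ((c+1) * g)) ^ c⁻¹ = f ^ c⁻¹ / ((c+1) ^ c⁻¹ * g ^ c⁻¹) := by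
    rw [Real.div_rpow hfpos.le (by positivity), Real.mul_rpow hc1.le hg.le]
  have hcq : (c+1) ^ q = (c+1) * (c+1) ^ c⁻¹ := by
    rw [hq, show (c+1)/c = 1 + c⁻¹ by field_simp, Real.rpow_add hc1, Real.rpow_one]
  rw [hcq] at key
  have key2 : (c+1) * (c+1) ^ c⁻¹ * m * g ^ c⁻¹ < f * f ^ c⁻¹ * c := by
    have h := mul_lt_mul_of_pos_right key hc
    have heq : (c+1) * (c+1) ^ c⁻¹ * (m/c) * g ^ c⁻¹ * c
        = (c+1) * (c+1) ^ c⁻¹ * m * g ^ c⁻¹ := by field_simp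
    rw [heq] at h
    exact h
  have h1 : (0:ℝ) < (c+1) ^ c⁻¹ := Real.rpow_pos_of_pos hc1 _
  have h2 : (0:ℝ) < g ^ c⁻¹ := Real.rpow_pos_of_pos hg _
  rw [hsplit]
  rw [show f ^ c⁻¹ / ((c+1) ^ c⁻¹ * g ^ c⁻¹) * f * (c/(c+1))
      = (f * f ^ c⁻¹ * c) / (((c+1) ^ c⁻¹ * g ^ c⁻¹) * (c+1)) from by
        field_simp,
    lt_div_iff₀ (by positivity)]
  calc m * ((c+1) ^ c⁻¹ * g ^ c⁻¹ * (c+1)) = (c+1) * (c+1) ^ c⁻¹ * m * g ^ c⁻¹ := by ring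
    _ < f * f ^ c⁻¹ * c := key2


lemma U_deriv (x : ℝ) :
    HasDerivAt (U n g f) (2 * f * x - (4*n+2) * g * x ^ (4*n+1)) x := by
  have h1 : HasDerivAt (fun x : ℝ => f * x ^ 2) (f * (2 * x ^ 1)) x :=
    (hasDerivAt_pow 2 x).const_mul f
  have h2 : HasDerivAt (fun x : ℝ => g * x ^ (4*n+2)) (g * ((4*n+2) * x ^ (4*n+1))) x := by
    have := (hasDerivAt_pow (4*n+2) x).const_mul g
    simpa using this
  have := h1.sub h2
  convert this using 1
  · rfl
  · rfl
  · rfl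
  push_cast
  ring

lemma gr_lt (hn : 1 ≤ n) (hg : 0 < g) (hfpos : 0 < f)
    (hrp : g * (rho n g f) ^ (4 * n) = f / (2 * (n:ℝ) + 1))
    {x : ℝ} (hx0 : 0 ≤ x) (hxr : x < rho n g f) :
    (2 * (n:ℝ) + 1) * (g * x ^ (4*n)) < f := by
  have h1 : x ^ (4*n) < (rho n g f) ^ (4*n) := by
    apply pow_lt_pow_left₀ hxr hx0
    omega
  have h2 : g * x ^ (4*n) < f / (2 * (n:ℝ) + 1) := by
    rw [← hrp]
    exact (mul_lt_mul_iff_right₀ hg).mpr h1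
  have hc1 : (0:ℝ) < 2 * n + 1 := by positivity
  calc (2 * (n:ℝ) + 1) * (g * x ^ (4*n)) < (2 * (n:ℝ) + 1) * (f / (2 * (n:ℝ) + 1)) :=
        (mul_lt_mul_iff_right₀ hc1).mpr h2
    _ = f := by field_simp

lemma U_strictMono (hn : 1 ≤ n) (hg : 0 < g) (hfpos : 0 < f)
    (hrp : g * (rho n g f) ^ (4 * n) = f / (2 * (n:ℝ) + 1)) :
    StrictMonoOn (U n g f) (Icc 0 (rho n g f)) := by
  apply strictMonoOn_of_deriv_pos (convex_Icc _ _) (U_cont.continuousOn)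
  intro x hx
  rw [interior_Icc] at hx
  rw [(U_deriv x).deriv]
  have h := gr_lt hn hg hfpos hrp (le_of_lt hx.1) hx.2
  have hx0 : 0 < x := hx.1
  have : (4*(n:ℝ)+2) * g * x ^ (4*n+1) = 2 * x * ((2 * (n:ℝ) + 1) * (g * x ^ (4*n))) := by
    ring
  nlinarith [mul_lt_mul_of_pos_left h (by positivity : (0:ℝ) < 2 * x)]


lemma U_zero0 {n : ℕ} {g f : ℝ} : U n g f 0 = 0 := by
  unfold U; rw [zero_pow (by norm_num), zero_pow (by omega)]; ring

section Zsec
variable (hn : 1 ≤ n) (hm : 0 < m) (hg : 0 < g) (hfpos : 0 < f)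
  (hrp : g * (rho n g f) ^ (4 * n) = f / (2 * (n:ℝ) + 1))
  (hUm : m < U n g f (rho n g f))

include hn hm hg hfpos hrp hUm

lemma Z_spec (hρ : 0 < rho n g f) {t : ℝ} (ht : t ∈ Icc 0 m) :
    Z n g f t ∈ Icc 0 (rho n g f) ∧ U n g f (Z n g f t) = t ∧
      {x | x ∈ Icc 0 (rho n g f) ∧ U n g f x ≤ t} = Icc 0 (Z n g f t) := by
  have hmono := U_strictMono hn hg hfpos hrp
  have hIVT := intermediate_value_Icc hρ.le (U_cont (n := n) (g := g) (f := f)).continuousOn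
  have htmem : t ∈ Icc (U n g f 0) (U n g f (rho n g f)) := by
    rw [U_zero0]
    exact ⟨ht.1, le_trans ht.2 hUm.le⟩
  obtain ⟨x₀, hx₀, hUx₀⟩ := hIVT htmem
  have hSeq : {x | x ∈ Icc 0 (rho n g f) ∧ U n g f x ≤ t} = Icc 0 x₀ := by
    ext x
    simp only [mem_setOf_eq, mem_Icc]
    constructor
    · rintro ⟨⟨hx1, hx2⟩, hx3⟩
      refine ⟨hx1, ?_⟩
      by_contra hlt
      push_neg at hlt
      have := hmono hx₀ ⟨hx1, hx2⟩ hlt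
      rw [hUx₀] at this
      linarith
    · rintro ⟨hx1, hx2⟩
      have hxmem : x ∈ Icc 0 (rho n g f) := ⟨hx1, le_trans hx2 hx₀.2⟩
      refine ⟨hxmem, ?_⟩
      rcases eq_or_lt_of_le hx2 with h | h
      · rw [h, hUx₀]
      · have := hmono hxmem hx₀ h
        rw [hUx₀] at this
        exact this.le
  have hZ : Z n g f t = x₀ := by
    rw [Z, hSeq, csSup_Icc hx₀.1]
  rw [hZ, hSeq]
  exact ⟨hx₀, hUx₀, rfl⟩

end Zsec

end Stark2


open Stark2 in
/-- Generalized Stark-type system (`g > 0`), energy below the first critical value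
`E₁ = -(2n+1) (m/(2n))^(2n/(2n+1)) g^(1/(2n+1))`: after Levi-Civita regularization, the
bounded component of the energy hypersurface bounds a concave toric domain.  Here `I a` is
the area of the connected component containing the origin of the sublevel set
`{w²/8 + f z² - g z^(4n+2) ≤ a}`, and the curve `(I₁(a), I₂(m-a))` is the graph of the
strictly decreasing convex function `φ(x) = I(m - I⁻¹(x))`, via `φ (I a) = I (m - a)`. -/
theorem stmt_2 (n : ℕ) (hn : 1 ≤ n) (m g f : ℝ) (hm : 0 < m) (hg : 0 < g)
    (hf : (2 * (n : ℝ) + 1) * (m / (2 * (n : ℝ))) ^ ((2 * (n : ℝ)) / (2 * (n : ℝ) + 1)) *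
        g ^ (1 / (2 * (n : ℝ) + 1)) < f)
    (I : ℝ → ℝ)
    (hI : ∀ a : ℝ, I a =
      (volume (connectedComponentIn
        {p : ℝ × ℝ | p.2 ^ 2 / 8 + f * p.1 ^ 2 - g * p.1 ^ (4 * n + 2) ≤ a} (0, 0))).toReal) :
    ContinuousOn I (Icc 0 m) ∧ StrictMonoOn I (Icc 0 m) ∧
    ∀ φ : ℝ → ℝ, (∀ a ∈ Icc (0 : ℝ) m, φ (I a) = I (m - a)) →
      StrictAntiOn φ (Icc 0 (I m)) ∧ ConvexOn ℝ (Icc 0 (I m)) φ := by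
  classical
  have hfpos : 0 < f := Stark2.f_pos hn hm hg hf
  have hρ := Stark2.rho_pos hn hg hfpos
  have hrp := Stark2.rho_pow hn hg hfpos
  have hUm := Stark2.crit hn hm hg hf
  have hmono := Stark2.U_strictMono hn hg hfpos hrp
  have hZmem : ∀ t ∈ Icc (0:ℝ) m, Stark2.Z n g f t ∈ Icc 0 (Stark2.rho n g f) :=
    fun t ht => (Stark2.Z_spec hn hm hg hfpos hrp hUm hρ ht).1
  have hZval : ∀ t ∈ Icc (0:ℝ) m, Stark2.U n g f (Stark2.Z n g f t) = t :=
    fun t ht => (Stark2.Z_spec hn hm hg hfpos hrp hUm hρ ht).2.1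
  set θf : ℝ → ℝ≥0∞ := Stark2.theta n g f with hθdef
  have hIη : ∀ a ∈ Icc (0:ℝ) m, I a = (∫⁻ t in Ioc 0 a, θf t).toReal := by
    intro a ha
    rw [hI a, Stark2.component_eq hn hρ hm hg hrp hmono hUm hZmem hZval ha,
      Stark2.vol_K hn hρ hm hg hrp hmono hUm hZmem hZval ha]
  have hθmono : ∀ s t : ℝ, s ∈ Icc (0:ℝ) m → t ∈ Icc (0:ℝ) m → s ≤ t → θf s ≤ θf t :=
    fun s t hs ht h => Stark2.theta_mono hn hρ hm hg hrp hmono hUm hZmem hZval hs ht h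
  have hθtop : ∀ t ∈ Icc (0:ℝ) m, θf t ≠ ⊤ :=
    fun t ht => (Stark2.theta_lt_top hn hρ hm hg hrp hmono hUm hZmem hZval ht).ne
  have hθpos : ∀ t : ℝ, t ∈ Icc (0:ℝ) m → 0 < t → 0 < θf t :=
    fun t ht ht0 => Stark2.theta_pos hn hρ hm hg hrp hmono hUm hZmem hZval ht ht0
  have hup : ∀ c d : ℝ, 0 ≤ c → c ≤ d → d ≤ m →
      (∫⁻ t in Ioc c d, θf t) ≤ θf d * ENNReal.ofReal (d - c) := by
    intro c d h0 hcd hdm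
    calc (∫⁻ t in Ioc c d, θf t) ≤ ∫⁻ _t in Ioc c d, θf d := by
          apply lintegral_mono_ae
          rw [ae_restrict_iff' measurableSet_Ioc]
          exact ae_of_all _ fun t ht =>
            hθmono t d ⟨le_trans h0 ht.1.le, le_trans ht.2 hdm⟩ ⟨le_trans h0 hcd, hdm⟩ ht.2
      _ = θf d * volume (Ioc c d) := setLIntegral_const _ _
      _ = θf d * ENNReal.ofReal (d - c) := by rw [Real.volume_Ioc]
  have hlo : ∀ c d : ℝ, 0 ≤ c → c ≤ d → d ≤ m →
      θf c * ENNReal.ofReal (d - c) ≤ ∫⁻ t in Ioc c d, θf t := by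
    intro c d h0 hcd hdm
    calc θf c * ENNReal.ofReal (d - c) = ∫⁻ _t in Ioc c d, θf c := by
          rw [setLIntegral_const, Real.volume_Ioc]
      _ ≤ ∫⁻ t in Ioc c d, θf t := by
          apply lintegral_mono_ae
          rw [ae_restrict_iff' measurableSet_Ioc]
          exact ae_of_all _ fun t ht =>
            hθmono c t ⟨h0, le_trans hcd hdm⟩ ⟨le_trans h0 ht.1.le, le_trans ht.2 hdm⟩ ht.1.le
  have hfin : ∀ c d : ℝ, 0 ≤ c → c ≤ d → d ≤ m → (∫⁻ t in Ioc c d, θf t) ≠ ⊤ := by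
    intro c d h0 hcd hdm
    exact ne_top_of_le_ne_top
      (ENNReal.mul_ne_top (hθtop d ⟨le_trans h0 hcd, hdm⟩) ENNReal.ofReal_ne_top)
      (hup c d h0 hcd hdm)
  have hinc : ∀ a b : ℝ, 0 ≤ a → a ≤ b → b ≤ m →
      I b = I a + (∫⁻ t in Ioc a b, θf t).toReal := by
    intro a b h0 hab hbm
    rw [hIη a ⟨h0, le_trans hab hbm⟩, hIη b ⟨le_trans h0 hab, hbm⟩,
      ← Ioc_union_Ioc_eq_Ioc h0 hab, lintegral_union measurableSet_Ioc (Ioc_disjoint_Ioc_of_le le_rfl),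
      ENNReal.toReal_add (hfin 0 a le_rfl h0 (le_trans hab hbm)) (hfin a b h0 hab hbm)]
  have hle : ∀ a b : ℝ, a ∈ Icc (0:ℝ) m → b ∈ Icc (0:ℝ) m → a ≤ b →
      I b - I a ≤ (θf m).toReal * (b - a) := by
    intro a b ha hb hab
    rw [hinc a b ha.1 hab hb.2]
    have h1 : (∫⁻ t in Ioc a b, θf t).toReal ≤ (θf m * ENNReal.ofReal (b - a)).toReal := by
      apply ENNReal.toReal_mono
        (ENNReal.mul_ne_top (hθtop m ⟨hm.le, le_rfl⟩) ENNReal.ofReal_ne_top)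
      exact le_trans (hup a b ha.1 hab hb.2)
        (mul_le_mul' (hθmono b m hb ⟨hm.le, le_rfl⟩ hb.2) le_rfl)
    rw [ENNReal.toReal_mul, ENNReal.toReal_ofReal (by linarith)] at h1
    linarith
  have hIle : ∀ a b : ℝ, 0 ≤ a → a ≤ b → b ≤ m → I a ≤ I b := by
    intro a b h0 hab hbm
    rw [hinc a b h0 hab hbm]
    have := ENNReal.toReal_nonneg (a := ∫⁻ t in Ioc a b, θf t)
    linarith
  have hcont : ContinuousOn I (Icc 0 m) := by
    apply LipschitzOnWith.continuousOn (K := (θf m).toNNReal)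
    apply LipschitzOnWith.of_dist_le_mul
    intro x hx y hy
    have hcoe : ((θf m).toNNReal : ℝ) = (θf m).toReal := rfl
    rcases le_total x y with h | h
    · rw [Real.dist_eq, Real.dist_eq,
        abs_of_nonpos (by linarith [hIle x y hx.1 h hy.2]),
        abs_of_nonpos (by linarith : x - y ≤ 0), hcoe]
      have := hle x y hx hy h
      linarith
    · rw [Real.dist_eq, Real.dist_eq,
        abs_of_nonneg (by linarith [hIle y x hy.1 h hx.2]),
        abs_of_nonneg (by linarith : 0 ≤ x - y), hcoe]
      have := hle y x hy hx h
      linarith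
  have hsm : StrictMonoOn I (Icc 0 m) := by
    intro a ha b hb hab
    have h := hinc a b ha.1 hab.le hb.2
    have hs0 : 0 < (a+b)/2 := by linarith [ha.1]
    have hsm' : (a+b)/2 ≤ m := by linarith [hb.2]
    have hpos : (0:ℝ≥0∞) < ∫⁻ t in Ioc a b, θf t := by
      have h1 : (0:ℝ≥0∞) < θf ((a+b)/2) * ENNReal.ofReal (b - (a+b)/2) := by
        apply ENNReal.mul_pos
        · exact (hθpos ((a+b)/2) ⟨hs0.le, hsm'⟩ hs0).ne'
        · simp only [ne_eq, ENNReal.ofReal_eq_zero, not_le]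
          linarith
      calc (0:ℝ≥0∞) < θf ((a+b)/2) * ENNReal.ofReal (b - (a+b)/2) := h1
        _ ≤ ∫⁻ t in Ioc ((a+b)/2) b, θf t := hlo ((a+b)/2) b hs0.le (by linarith) hb.2
        _ ≤ ∫⁻ t in Ioc a b, θf t := lintegral_mono_set (Ioc_subset_Ioc_left (by linarith))
    have hDpos : 0 < (∫⁻ t in Ioc a b, θf t).toReal :=
      ENNReal.toReal_pos hpos.ne' (hfin a b ha.1 hab.le hb.2)
    linarith
  refine ⟨hcont, hsm, ?_⟩
  intro φ hφ
  have hI0 : I 0 = 0 := by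
    rw [hIη 0 ⟨le_rfl, hm.le⟩]
    simp
  have hsurj : ∀ x ∈ Icc 0 (I m), ∃ a ∈ Icc (0:ℝ) m, I a = x := by
    intro x hx
    have hIVT := intermediate_value_Icc hm.le hcont
    have hx' : x ∈ Icc (I 0) (I m) := by rw [hI0]; exact hx
    obtain ⟨a, ha, haeq⟩ := hIVT hx'
    exact ⟨a, ha, haeq⟩
  have horder : ∀ a b : ℝ, a ∈ Icc (0:ℝ) m → b ∈ Icc (0:ℝ) m → I a < I b → a < b := by
    intro a b ha hb hab
    rcases lt_trichotomy a b with h | h | h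
    · exact h
    · exfalso; rw [h] at hab; exact lt_irrefl _ hab
    · exact absurd (hsm hb ha h) (not_lt.mpr hab.le)
  constructor
  · intro x hx y hy hxy
    obtain ⟨a, ha, rfl⟩ := hsurj x hx
    obtain ⟨b, hb, rfl⟩ := hsurj y hy
    have hab : a < b := horder a b ha hb hxy
    rw [hφ a ha, hφ b hb]
    exact hsm ⟨by linarith [hb.2], by linarith [ha.1]⟩
      ⟨by linarith [ha.2], by linarith [ha.1]⟩ (by linarith)
  · apply convexOn_of_slope_mono_adjacent (convex_Icc _ _)
    intro x y z hx hz hxy hyz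
    have hy : y ∈ Icc 0 (I m) := ⟨le_trans hx.1 hxy.le, le_trans hyz.le hz.2⟩
    obtain ⟨a, ha, rfl⟩ := hsurj x hx
    obtain ⟨b, hb, rfl⟩ := hsurj y hy
    obtain ⟨c, hc, rfl⟩ := hsurj z hz
    have hab : a < b := horder a b ha hb hxy
    have hbc : b < c := horder b c hb hc hyz
    rw [hφ a ha, hφ b hb, hφ c hc]
    have hb0 : 0 < b := lt_of_le_of_lt ha.1 hab
    have hbm : b < m := lt_of_lt_of_le hbc hc.2
    set P : ℝ := (θf (m - b)).toReal with hP
    set Q : ℝ := (θf b).toReal with hQ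
    have hmb : (m - b) ∈ Icc (0:ℝ) m := ⟨by linarith, by linarith⟩
    have hbmem : b ∈ Icc (0:ℝ) m := ⟨hb0.le, hbm.le⟩
    have hQpos : 0 < Q := ENNReal.toReal_pos (hθpos b hbmem hb0).ne' (hθtop b hbmem)
    have hPpos : 0 ≤ P := ENNReal.toReal_nonneg
    -- A1 : I(m-a) - I(m-b) ≥ P * (b - a)
    have hA1 : P * (b - a) ≤ I (m - a) - I (m - b) := by
      have h := hinc (m - b) (m - a) (by linarith) (by linarith) (by linarith [ha.1])
      have h2 : (θf (m-b) * ENNReal.ofReal ((m-a) - (m-b))).toReal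
          ≤ (∫⁻ t in Ioc (m-b) (m-a), θf t).toReal :=
        ENNReal.toReal_mono (hfin (m-b) (m-a) (by linarith) (by linarith) (by linarith [ha.1]))
          (hlo (m-b) (m-a) (by linarith) (by linarith) (by linarith [ha.1]))
      rw [ENNReal.toReal_mul, ENNReal.toReal_ofReal (by linarith),
        show (m-a) - (m-b) = b - a by ring] at h2
      linarith
    have hB1 : I b - I a ≤ Q * (b - a) := by
      have h := hinc a b ha.1 hab.le hbm.le
      have h2 : (∫⁻ t in Ioc a b, θf t).toReal ≤ (θf b * ENNReal.ofReal (b - a)).toReal :=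
        ENNReal.toReal_mono (ENNReal.mul_ne_top (hθtop b hbmem) ENNReal.ofReal_ne_top)
          (hup a b ha.1 hab.le hbm.le)
      rw [ENNReal.toReal_mul, ENNReal.toReal_ofReal (by linarith)] at h2
      linarith
    have hA2 : I (m - b) - I (m - c) ≤ P * (c - b) := by
      have h := hinc (m - c) (m - b) (by linarith [hc.2]) (by linarith) (by linarith)
      have h2 : (∫⁻ t in Ioc (m-c) (m-b), θf t).toReal
          ≤ (θf (m-b) * ENNReal.ofReal ((m-b) - (m-c))).toReal :=
        ENNReal.toReal_mono (ENNReal.mul_ne_top (hθtop (m-b) hmb) ENNReal.ofReal_ne_top)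
          (hup (m-c) (m-b) (by linarith [hc.2]) (by linarith) (by linarith))
      rw [ENNReal.toReal_mul, ENNReal.toReal_ofReal (by linarith),
        show (m-b) - (m-c) = c - b by ring] at h2
      linarith
    have hB2 : Q * (c - b) ≤ I c - I b := by
      have h := hinc b c hb0.le hbc.le hc.2
      have h2 : (θf b * ENNReal.ofReal (c - b)).toReal
          ≤ (∫⁻ t in Ioc b c, θf t).toReal :=
        ENNReal.toReal_mono (hfin b c hb0.le hbc.le hc.2) (hlo b c hb0.le hbc.le hc.2)
      rw [ENNReal.toReal_mul, ENNReal.toReal_ofReal (by linarith)] at h2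
      linarith
    have hB1pos : 0 < I b - I a := by
      have := hsm ⟨ha.1, by linarith [hbm]⟩ hbmem hab
      linarith
    have hB2pos : 0 < I c - I b := by
      have := hsm hbmem hc hbc
      linarith
    rw [div_le_div_iff₀ (by linarith) (by linarith)]
    have hA1' : 0 ≤ I (m - a) - I (m - b) := le_trans (mul_nonneg hPpos (by linarith)) hA1
    have hA2' : 0 ≤ I (m - b) - I (m - c) := by
      have := hIle (m - c) (m - b) (by linarith [hc.2]) (by linarith) (by linarith)
      linarith
    have key : (I (m - b) - I (m - c)) * (I b - I a)
        ≤ (I (m - a) - I (m - b)) * (I c - I b) := by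
      calc (I (m - b) - I (m - c)) * (I b - I a)
          ≤ (P * (c - b)) * (I b - I a) := mul_le_mul_of_nonneg_right hA2 (by linarith)
        _ ≤ (P * (c - b)) * (Q * (b - a)) := mul_le_mul_of_nonneg_left hB1 (mul_nonneg hPpos (by linarith))
        _ = (P * (b - a)) * (Q * (c - b)) := by ring
        _ ≤ (I (m - a) - I (m - b)) * (Q * (c - b)) :=
            mul_le_mul_of_nonneg_right hA1 (mul_nonneg hQpos.le (by linarith))
        _ ≤ (I (m - a) - I (m - b)) * (I c - I b) :=
            mul_le_mul_of_nonneg_left hB2 hA1'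
    nlinarith [key]
end

section
/- Let n ≥ 1 be an integer, m > 0, g < 0, and f > 0. For each a ∈ [0, m] let S_a = {(z,w) ∈ ℝ² : w²/8 + f·z² − g·z^(4n+2) ≤ a} (a compact set since −g > 0) and let I(a) denote the Lebesgue measure (area) of S_a. Then I is continuous and strictly increasing on [0, m], and the function φ : [0, I(m)] → ℝ defined by φ(x) = I(m − I⁻¹(x)) is strictly decreasing and concave. (This expresses that the Levi-Civita regularized energy hypersurface {|w|²/8 + f(z₁²+z₂²) − g(z₁^(4n+2)+z₂^(4n+2)) = m} bounds a convex toric domain.) -/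
open MeasureTheory Set

noncomputable section StarkAux
namespace StarkAux


variable (f c : ℝ) (K : ℕ)

def V (z : ℝ) : ℝ := f * z ^ 2 + c * z ^ (2 * K)

def psi (t : ℝ) : ℝ := Function.invFunOn (V f c K) (Set.Ici 0) (max t 0)

variable {f c K}

lemma V_cont : Continuous (V f c K) := by unfold V; fun_prop

lemma V_zero (hK : 1 ≤ K) : V f c K 0 = 0 := by
  simp [V, zero_pow (by omega : 2 * K ≠ 0)]

lemma V_nonneg (hf : 0 < f) (hc : 0 < c) (z : ℝ) : 0 ≤ V f c K z := by
  have : z ^ (2 * K) = (z ^ K) ^ 2 := by rw [mul_comm 2 K, pow_mul]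
  unfold V; rw [this]; positivity

lemma V_even (z : ℝ) : V f c K (-z) = V f c K z := by
  unfold V
  rw [show (-z) ^ (2*K) = ((-z)^2)^K from pow_mul _ _ _, neg_sq, ← pow_mul]

lemma V_strictMonoOn (hf : 0 < f) (hc : 0 < c) (hK : 1 ≤ K) :
    StrictMonoOn (V f c K) (Ici 0) := by
  intro a ha b hb hab
  unfold V
  have h1 : a ^ 2 < b ^ 2 := by
    apply pow_lt_pow_left₀ hab ha; norm_num
  have h2 : a ^ (2*K) < b ^ (2*K) := by
    apply pow_lt_pow_left₀ hab ha; omega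
  have := mul_lt_mul_of_pos_left h1 hf
  have := mul_lt_mul_of_pos_left h2 hc
  linarith

lemma V_exists_inv (hf : 0 < f) (hc : 0 < c) (hK : 1 ≤ K) {t : ℝ} (ht : 0 ≤ t) :
    ∃ z ∈ Ici (0:ℝ), V f c K z = t := by
  set Z := Real.sqrt (t / f) with hZ
  have hZ0 : 0 ≤ Z := Real.sqrt_nonneg _
  have hVZ : t ≤ V f c K Z := by
    have h1 : f * Z ^ 2 = t := by
      rw [Real.sq_sqrt (by positivity)]
      field_simp
    have h2 : 0 ≤ c * Z ^ (2*K) := by positivity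
    unfold V; linarith
  have hIcc : t ∈ Icc (V f c K 0) (V f c K Z) := ⟨by rw [V_zero hK]; exact ht, hVZ⟩
  obtain ⟨z, hz, hVz⟩ := intermediate_value_Icc hZ0 (V_cont).continuousOn hIcc
  exact ⟨z, hz.1, hVz⟩

lemma psi_spec (hf : 0 < f) (hc : 0 < c) (hK : 1 ≤ K) (t : ℝ) :
    psi f c K t ∈ Ici (0:ℝ) ∧ V f c K (psi f c K t) = max t 0 := by
  have hex := V_exists_inv hf hc hK (le_max_right t 0)
  have hex' : ∃ a ∈ Ici (0:ℝ), V f c K a = max t 0 := hex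
  exact ⟨Function.invFunOn_mem hex', Function.invFunOn_eq hex'⟩

lemma psi_nonneg (hf : 0 < f) (hc : 0 < c) (hK : 1 ≤ K) (t : ℝ) : 0 ≤ psi f c K t :=
  (psi_spec hf hc hK t).1

lemma V_psi (hf : 0 < f) (hc : 0 < c) (hK : 1 ≤ K) {t : ℝ} (ht : 0 ≤ t) :
    V f c K (psi f c K t) = t := by
  rw [(psi_spec hf hc hK t).2, max_eq_left ht]

lemma psi_of_nonpos (hf : 0 < f) (hc : 0 < c) (hK : 1 ≤ K) {t : ℝ} (ht : t ≤ 0) :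
    psi f c K t = 0 := by
  have h := (psi_spec hf hc hK t).2
  rw [max_eq_right ht, ← V_zero (f := f) (c := c) hK] at h
  exact (V_strictMonoOn hf hc hK).injOn (psi_spec hf hc hK t).1 (le_refl (0:ℝ)) h

lemma psi_zero (hf : 0 < f) (hc : 0 < c) (hK : 1 ≤ K) : psi f c K 0 = 0 :=
  psi_of_nonpos hf hc hK le_rfl

lemma psi_le_psi (hf : 0 < f) (hc : 0 < c) (hK : 1 ≤ K) {s t : ℝ} (hst : s ≤ t) :
    psi f c K s ≤ psi f c K t := by
  by_contra h
  push_neg at h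
  have := (V_strictMonoOn hf hc hK) (psi_spec hf hc hK t).1 (psi_spec hf hc hK s).1 h
  rw [(psi_spec hf hc hK t).2, (psi_spec hf hc hK s).2] at this
  have := max_le_max hst (le_refl (0:ℝ))
  linarith

lemma psi_lt_psi (hf : 0 < f) (hc : 0 < c) (hK : 1 ≤ K) {s t : ℝ} (hs : 0 ≤ s) (hst : s < t) :
    psi f c K s < psi f c K t := by
  rcases lt_or_eq_of_le (psi_le_psi hf hc hK hst.le) with h | h
  · exact h
  · exfalso
    have h1 := V_psi hf hc hK hs
    have h2 := V_psi hf hc hK (hs.trans hst.le)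
    rw [h] at h1; rw [h1] at h2; linarith

lemma psi_pos (hf : 0 < f) (hc : 0 < c) (hK : 1 ≤ K) {t : ℝ} (ht : 0 < t) :
    0 < psi f c K t := by
  have := psi_lt_psi hf hc hK le_rfl ht
  rwa [psi_zero hf hc hK] at this

lemma psi_sub_le (hf : 0 < f) (hc : 0 < c) (hK : 1 ≤ K) {s t : ℝ} (hst : s ≤ t) :
    psi f c K t - psi f c K s ≤ Real.sqrt ((t - s) / f) := by
  set ps := psi f c K s
  set pt := psi f c K t
  have hps : 0 ≤ ps := psi_nonneg hf hc hK s
  have hpt : ps ≤ pt := psi_le_psi hf hc hK hst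
  have hVd : V f c K pt - V f c K ps ≤ t - s := by
    rw [(psi_spec hf hc hK t).2, (psi_spec hf hc hK s).2]
    have := abs_max_sub_max_le_abs t s 0
    rw [abs_of_nonneg (sub_nonneg.2 hst)] at this
    exact (le_of_abs_le this)
  have hpow : ps ^ (2*K) ≤ pt ^ (2*K) := pow_le_pow_left₀ hps hpt _
  have hsq : f * (pt ^ 2 - ps ^ 2) ≤ t - s := by
    have : V f c K pt - V f c K ps = f * (pt ^ 2 - ps ^ 2) + c * (pt ^ (2*K) - ps ^ (2*K)) := by
      unfold V; ring
    nlinarith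
  have hd2 : (pt - ps) ^ 2 ≤ (t - s) / f := by
    rw [le_div_iff₀ hf]
    nlinarith [mul_nonneg hps (sub_nonneg.2 hpt)]
  calc pt - ps = Real.sqrt ((pt - ps) ^ 2) := by rw [Real.sqrt_sq (by linarith)]
    _ ≤ Real.sqrt ((t - s) / f) := Real.sqrt_le_sqrt hd2

lemma psi_abs_sub_le (hf : 0 < f) (hc : 0 < c) (hK : 1 ≤ K) (s t : ℝ) :
    |psi f c K t - psi f c K s| ≤ Real.sqrt (|t - s| / f) := by
  rcases le_total s t with h | h
  · rw [abs_of_nonneg (sub_nonneg.2 (psi_le_psi hf hc hK h)), abs_of_nonneg (sub_nonneg.2 h)]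
    exact psi_sub_le hf hc hK h
  · rw [abs_of_nonpos (sub_nonpos.2 (psi_le_psi hf hc hK h)), abs_of_nonpos (sub_nonpos.2 h),
      neg_sub, neg_sub]
    exact psi_sub_le hf hc hK h

lemma psi_continuous (hf : 0 < f) (hc : 0 < c) (hK : 1 ≤ K) : Continuous (psi f c K) := by
  rw [Metric.continuous_iff]
  intro x ε hε
  refine ⟨f * ε ^ 2, by positivity, fun y hy => ?_⟩
  have h1 := psi_abs_sub_le hf hc hK x y
  rw [Real.dist_eq] at hy ⊢
  calc |psi f c K y - psi f c K x| ≤ Real.sqrt (|y - x| / f) := h1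
    _ < Real.sqrt (f * ε ^ 2 / f) := by
        apply Real.sqrt_lt_sqrt (by positivity)
        exact div_lt_div_of_pos_right hy hf
    _ = ε := by
        rw [show f * ε ^ 2 / f = ε ^ 2 by field_simp, Real.sqrt_sq hε.le]



variable (f c K)

def Vd (z : ℝ) : ℝ := 2 * f * z + 2 * K * c * z ^ (2 * K - 1)
def Phi (z : ℝ) : ℝ := z * Real.sqrt (V f c K z)
def Phid (z : ℝ) : ℝ := Real.sqrt (V f c K z) + z * Vd f c K z / (2 * Real.sqrt (V f c K z))
def A (z : ℝ) : ℝ := f + c * z ^ (2 * K - 2)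
def Bq (z : ℝ) : ℝ := f + (K : ℝ) * c * z ^ (2 * K - 2)

variable {f c K}

lemma hasDerivAt_V (hK : 1 ≤ K) (z : ℝ) : HasDerivAt (V f c K) (Vd f c K z) z := by
  have h1 : HasDerivAt (fun x : ℝ => x ^ 2) (2 * z ^ 1) z := by
    simpa using hasDerivAt_pow 2 z
  have h2 : HasDerivAt (fun x : ℝ => x ^ (2 * K)) ((2 * K : ℕ) * z ^ (2 * K - 1)) z :=
    hasDerivAt_pow (2 * K) z
  have := (h1.const_mul f).add (h2.const_mul c)
  refine this.congr_deriv ?_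
  unfold Vd; push_cast; ring

lemma V_pos (hf : 0 < f) (hc : 0 < c) (hK : 1 ≤ K) {z : ℝ} (hz : 0 < z) : 0 < V f c K z := by
  have := V_strictMonoOn hf hc hK (le_refl (0:ℝ)) hz.le hz
  rwa [V_zero hK] at this

lemma Vd_pos (hf : 0 < f) (hc : 0 < c) {z : ℝ} (hz : 0 < z) : 0 < Vd f c K z := by
  unfold Vd
  have : (0:ℝ) ≤ 2 * K * c * z ^ (2 * K - 1) := by positivity
  nlinarith

lemma A_pos (hf : 0 < f) (hc : 0 < c) {z : ℝ} (hz : 0 ≤ z) : 0 < A f c K z := by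
  unfold A; positivity

lemma Bq_pos (hf : 0 < f) (hc : 0 < c) {z : ℝ} (hz : 0 ≤ z) : 0 < Bq f c K z := by
  unfold Bq; positivity

lemma Vd_eq (hK : 1 ≤ K) {z : ℝ} : Vd f c K z = 2 * z * Bq f c K z := by
  unfold Vd Bq
  rw [show 2 * K - 1 = (2 * K - 2) + 1 by omega, pow_succ]
  ring

lemma V_eq_zsq (hK : 1 ≤ K) (z : ℝ) : V f c K z = z ^ 2 * A f c K z := by
  have h : z ^ (2 * K) = z ^ 2 * z ^ (2 * K - 2) := by
    rw [← pow_add]; congr 1; omega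
  unfold V A
  rw [h]; ring

lemma sqrtV_eq (hf : 0 < f) (hc : 0 < c) (hK : 1 ≤ K) {z : ℝ} (hz : 0 ≤ z) :
    Real.sqrt (V f c K z) = z * Real.sqrt (A f c K z) := by
  rw [V_eq_zsq hK, Real.sqrt_mul (sq_nonneg z), Real.sqrt_sq hz]

lemma hasDerivAt_Phi (hf : 0 < f) (hc : 0 < c) (hK : 1 ≤ K) {z : ℝ} (hz : 0 < z) :
    HasDerivAt (Phi f c K) (Phid f c K z) z := by
  have hV := V_pos hf hc hK hz
  have hs : HasDerivAt (fun x => Real.sqrt (V f c K x))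
      (1 / (2 * Real.sqrt (V f c K z)) * Vd f c K z) z :=
    (Real.hasDerivAt_sqrt hV.ne').comp z (hasDerivAt_V hK z)
  have := (hasDerivAt_id z).mul hs
  refine this.congr_deriv ?_
  unfold Phid
  field_simp
  simp only [id_eq]; ring

lemma key_poly (hf : 0 < f) (hc : 0 < c) (hK : 1 ≤ K) {ξ η : ℝ} (hξ : 0 ≤ ξ) (hξη : ξ ≤ η) :
    A f c K η * Bq f c K ξ ^ 2 ≤ A f c K ξ * Bq f c K η ^ 2 := by
  unfold A Bq
  set P := c * ξ ^ (2 * K - 2) with hP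
  set Q := c * η ^ (2 * K - 2) with hQ
  have hP0 : 0 ≤ P := by positivity
  have hPQ : P ≤ Q := by
    apply mul_le_mul_of_nonneg_left (pow_le_pow_left₀ hξ hξη _) hc.le
  have hK1 : (1:ℝ) ≤ (K:ℝ) := by exact_mod_cast hK
  have hfac : 0 ≤ (Q - P) * ((2*(K:ℝ)-1)*f^2 + (K:ℝ)^2*f*(P+Q) + (K:ℝ)^2*P*Q) := by
    apply mul_nonneg (by linarith)
    have hQ0 : 0 ≤ Q := hP0.trans hPQ
    have h1 : (0:ℝ) ≤ (2*(K:ℝ)-1)*f^2 := by nlinarith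
    have h2 : (0:ℝ) ≤ (K:ℝ)^2*f*(P+Q) := by positivity
    have h3 : (0:ℝ) ≤ (K:ℝ)^2*P*Q := by positivity
    linarith
  have : (f + Q) * (f + K*P)^2 ≤ (f + P) * (f + K*Q)^2 := by nlinarith [hfac]
  calc (f + c * η ^ (2*K-2)) * (f + K*c*ξ^(2*K-2))^2 = (f + Q) * (f + (K:ℝ)*P)^2 := by
        rw [hP, hQ]; ring
    _ ≤ (f + P) * (f + (K:ℝ)*Q)^2 := this
    _ = (f + c * ξ ^ (2*K-2)) * (f + K*c*η^(2*K-2))^2 := by rw [hP, hQ]; ring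

lemma L1 (hf : 0 < f) (hc : 0 < c) (hK : 1 ≤ K) {ξ η : ℝ} (hξ : 0 ≤ ξ) (hξη : ξ ≤ η) :
    Real.sqrt (A f c K η) * Bq f c K ξ ≤ Real.sqrt (A f c K ξ) * Bq f c K η := by
  have hη : 0 ≤ η := hξ.trans hξη
  have hAξ := A_pos hf hc hξ (K := K)
  have hAη := A_pos hf hc hη (K := K)
  have hBξ := Bq_pos hf hc hξ (K := K)
  have hBη := Bq_pos hf hc hη (K := K)
  have h := Real.sqrt_le_sqrt (key_poly hf hc hK hξ hξη)
  rwa [Real.sqrt_mul hAη.le, Real.sqrt_mul hAξ.le, Real.sqrt_sq hBξ.le, Real.sqrt_sq hBη.le] at h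

lemma Phid_eq (hf : 0 < f) (hc : 0 < c) (hK : 1 ≤ K) {z : ℝ} (hz : 0 < z) :
    Phid f c K z = z * (A f c K z + Bq f c K z) / Real.sqrt (A f c K z) := by
  have hA := A_pos hf hc hz.le (K := K)
  have hsA : 0 < Real.sqrt (A f c K z) := Real.sqrt_pos.2 hA
  unfold Phid
  rw [sqrtV_eq hf hc hK hz.le, Vd_eq hK]
  have hss : Real.sqrt (A f c K z) * Real.sqrt (A f c K z) = A f c K z :=
    Real.mul_self_sqrt hA.le
  field_simp
  linear_combination hss

lemma ratio_anti (hf : 0 < f) (hc : 0 < c) (hK : 1 ≤ K) {ξ η : ℝ} (hξ : 0 < ξ) (hξη : ξ ≤ η) :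
    Phid f c K η / Vd f c K η ≤ Phid f c K ξ / Vd f c K ξ := by
  have hη : 0 < η := hξ.trans_le hξη
  have hAξ := A_pos hf hc hξ.le (K := K)
  have hAη := A_pos hf hc hη.le (K := K)
  have hBξ := Bq_pos hf hc hξ.le (K := K)
  have hBη := Bq_pos hf hc hη.le (K := K)
  have hsξ : 0 < Real.sqrt (A f c K ξ) := Real.sqrt_pos.2 hAξ
  have hsη : 0 < Real.sqrt (A f c K η) := Real.sqrt_pos.2 hAη
  have hL2 : Real.sqrt (A f c K ξ) ≤ Real.sqrt (A f c K η) := by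
    apply Real.sqrt_le_sqrt
    unfold A
    have := pow_le_pow_left₀ hξ.le hξη (2*K-2)
    nlinarith
  have hL1 := L1 hf hc hK hξ.le hξη
  have hsqη : Real.sqrt (A f c K η) * Real.sqrt (A f c K η) = A f c K η :=
    Real.mul_self_sqrt hAη.le
  have hsqξ : Real.sqrt (A f c K ξ) * Real.sqrt (A f c K ξ) = A f c K ξ :=
    Real.mul_self_sqrt hAξ.le
  set sη := Real.sqrt (A f c K η) with hsηdef
  set sξ := Real.sqrt (A f c K ξ) with hsξdef
  have p1 : A f c K η * (sξ * Bq f c K ξ) ≤ A f c K ξ * (sη * Bq f c K η) := by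
    rw [← hsqη, ← hsqξ]
    calc sη * sη * (sξ * Bq f c K ξ) = (sη * sξ) * (sη * Bq f c K ξ) := by ring
      _ ≤ (sη * sξ) * (sξ * Bq f c K η) :=
          mul_le_mul_of_nonneg_left hL1 (mul_nonneg hsη.le hsξ.le)
      _ = sξ * sξ * (sη * Bq f c K η) := by ring
  have p2 : Bq f c K η * (Real.sqrt (A f c K ξ) * Bq f c K ξ) ≤
      Bq f c K ξ * (Real.sqrt (A f c K η) * Bq f c K η) := by
    nlinarith [mul_le_mul_of_nonneg_left hL2 (mul_nonneg hBξ.le hBη.le)]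
  have psum := add_le_add p1 p2
  rw [Phid_eq hf hc hK hξ, Phid_eq hf hc hK hη, Vd_eq hK, Vd_eq hK, div_div, div_div]
  rw [div_le_div_iff₀ (by positivity) (by positivity)]
  nlinarith [mul_le_mul_of_nonneg_left psum (by positivity : (0:ℝ) ≤ 2*ξ*η)]


lemma sqrt_sub_le {a b : ℝ} (ha : 0 ≤ a) (hab : a ≤ b) :
    Real.sqrt b - Real.sqrt a ≤ Real.sqrt (b - a) := by
  have h2 : b ≤ (Real.sqrt a + Real.sqrt (b - a))^2 := by
    nlinarith [Real.sq_sqrt ha, Real.sq_sqrt (sub_nonneg.2 hab), Real.sqrt_nonneg a,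
      Real.sqrt_nonneg (b - a), mul_nonneg (Real.sqrt_nonneg a) (Real.sqrt_nonneg (b - a))]
  have h : Real.sqrt b ≤ Real.sqrt a + Real.sqrt (b - a) := by
    calc Real.sqrt b ≤ Real.sqrt ((Real.sqrt a + Real.sqrt (b - a))^2) := Real.sqrt_le_sqrt h2
      _ = Real.sqrt a + Real.sqrt (b - a) := Real.sqrt_sq (by positivity)
  linarith

variable (f c K)

def G (b : ℝ) : ℝ := Real.sqrt b * psi f c K b

def k (u a : ℝ) : ℝ := Real.sqrt a * psi f c K ((1 - u^2) * a)

def J (a : ℝ) : ℝ := ∫ u, k f c K u a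

variable {f c K}

lemma Phi_cont : Continuous (Phi f c K) :=
  continuous_id.mul (Real.continuous_sqrt.comp V_cont)

lemma G_eq_Phi (hf : 0 < f) (hc : 0 < c) (hK : 1 ≤ K) {b : ℝ} (hb : 0 ≤ b) :
    G f c K b = Phi f c K (psi f c K b) := by
  unfold G Phi
  rw [V_psi hf hc hK hb]
  ring

lemma slope_rep (hf : 0 < f) (hc : 0 < c) (hK : 1 ≤ K) {z₁ z₂ : ℝ} (h1 : 0 ≤ z₁)
    (h12 : z₁ < z₂) :
    ∃ ξ ∈ Ioo z₁ z₂, (Phi f c K z₂ - Phi f c K z₁) / (V f c K z₂ - V f c K z₁)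
      = Phid f c K ξ / Vd f c K ξ := by
  obtain ⟨ξ, hmem, heq⟩ := exists_ratio_hasDerivAt_eq_ratio_slope (Phi f c K) (Phid f c K) h12
    (Phi_cont).continuousOn (fun x hx => hasDerivAt_Phi hf hc hK (h1.trans_lt hx.1))
    (V f c K) (Vd f c K) (V_cont).continuousOn (fun x _ => hasDerivAt_V hK x)
  refine ⟨ξ, hmem, ?_⟩
  have hVd : 0 < Vd f c K ξ := Vd_pos hf hc (h1.trans_lt hmem.1)
  have hΔ : 0 < V f c K z₂ - V f c K z₁ :=
    sub_pos.2 (V_strictMonoOn hf hc hK h1 (h1.trans h12.le) h12)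
  rw [div_eq_div_iff hΔ.ne' hVd.ne']
  linear_combination (-1 : ℝ) * heq

lemma G_concaveOn (hf : 0 < f) (hc : 0 < c) (hK : 1 ≤ K) :
    ConcaveOn ℝ (Ici 0) (G f c K) := by
  rw [concaveOn_iff_slope_anti_adjacent]
  refine ⟨convex_Ici 0, ?_⟩
  intro b₁ b₂ b₃ hb₁ hb₃ h12 h23
  have hb1 : (0:ℝ) ≤ b₁ := hb₁
  have hb2 : (0:ℝ) ≤ b₂ := le_trans hb1 h12.le
  have hb3 : (0:ℝ) ≤ b₃ := hb₃
  set z₁ := psi f c K b₁ with hz₁def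
  set z₂ := psi f c K b₂ with hz₂def
  set z₃ := psi f c K b₃ with hz₃def
  have hz1 : 0 ≤ z₁ := psi_nonneg hf hc hK b₁
  have h12' : z₁ < z₂ := psi_lt_psi hf hc hK hb1 h12
  have h23' : z₂ < z₃ := psi_lt_psi hf hc hK hb2 h23
  obtain ⟨ξ, hξ, eξ⟩ := slope_rep hf hc hK hz1 h12'
  obtain ⟨η, hη, eη⟩ := slope_rep hf hc hK (hz1.trans h12'.le) h23'
  have d1 : b₂ - b₁ = V f c K z₂ - V f c K z₁ := by
    rw [hz₂def, hz₁def, V_psi hf hc hK hb2, V_psi hf hc hK hb1]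
  have d2 : b₃ - b₂ = V f c K z₃ - V f c K z₂ := by
    rw [hz₃def, hz₂def, V_psi hf hc hK hb3, V_psi hf hc hK hb2]
  rw [G_eq_Phi hf hc hK hb1, G_eq_Phi hf hc hK hb2, G_eq_Phi hf hc hK hb3, ← hz₁def, ← hz₂def,
    ← hz₃def, d1, d2, eξ, eη]
  exact ratio_anti hf hc hK (hz1.trans_lt hξ.1) (le_of_lt (hξ.2.trans hη.1))

lemma k_nonneg (hf : 0 < f) (hc : 0 < c) (hK : 1 ≤ K) (u a : ℝ) : 0 ≤ k f c K u a :=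
  mul_nonneg (Real.sqrt_nonneg a) (psi_nonneg hf hc hK _)

lemma k_zero_left (hf : 0 < f) (hc : 0 < c) (hK : 1 ≤ K) {u a : ℝ} (ha : a ≤ 0) :
    k f c K u a = 0 := by
  unfold k
  rw [Real.sqrt_eq_zero'.mpr ha, zero_mul]

lemma k_zero_out (hf : 0 < f) (hc : 0 < c) (hK : 1 ≤ K) {u a : ℝ} (hu : 1 - u^2 ≤ 0)
    (ha : 0 ≤ a) : k f c K u a = 0 := by
  unfold k
  rw [psi_of_nonpos hf hc hK (mul_nonpos_of_nonpos_of_nonneg hu ha), mul_zero]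

lemma k_eq (hf : 0 < f) (hc : 0 < c) (hK : 1 ≤ K) {u : ℝ} (hu : 0 < 1 - u^2) (a : ℝ) :
    k f c K u a = (1 / Real.sqrt (1 - u^2)) * G f c K ((1 - u^2) * a) := by
  have hs : Real.sqrt (1 - u^2) ≠ 0 := ne_of_gt (Real.sqrt_pos.2 hu)
  unfold k G
  rw [Real.sqrt_mul hu.le a]
  field_simp

lemma k_concaveOn (hf : 0 < f) (hc : 0 < c) (hK : 1 ≤ K) (u : ℝ) :
    ConcaveOn ℝ (Ici 0) (k f c K u) := by
  rcases le_or_gt (1 - u^2) 0 with hlam | hlam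
  · refine ⟨convex_Ici 0, fun x hx y hy t s ht hs hts => ?_⟩
    have hmem : t • x + s • y ∈ Ici (0:ℝ) :=
      add_nonneg (mul_nonneg ht hx) (mul_nonneg hs hy)
    rw [k_zero_out hf hc hK hlam hx, k_zero_out hf hc hK hlam hy, k_zero_out hf hc hK hlam hmem]
    simp
  · refine ⟨convex_Ici 0, fun x hx y hy t s ht hs hts => ?_⟩
    have hGc := G_concaveOn hf hc hK
    have hm1 : (1 - u^2) * x ∈ Ici (0:ℝ) := mul_nonneg hlam.le hx
    have hm2 : (1 - u^2) * y ∈ Ici (0:ℝ) := mul_nonneg hlam.le hy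
    have hco := hGc.2 hm1 hm2 ht hs hts
    have harg : t • ((1 - u^2) * x) + s • ((1 - u^2) * y) = (1 - u^2) * (t • x + s • y) := by
      simp only [smul_eq_mul]; ring
    rw [harg] at hco
    rw [k_eq hf hc hK hlam, k_eq hf hc hK hlam, k_eq hf hc hK hlam]
    have hpos : 0 ≤ 1 / Real.sqrt (1 - u^2) := by positivity
    calc t • ((1 / Real.sqrt (1 - u^2)) * G f c K ((1-u^2) * x))
          + s • ((1 / Real.sqrt (1 - u^2)) * G f c K ((1-u^2) * y))
        = (1 / Real.sqrt (1 - u^2)) * (t • G f c K ((1-u^2) * x) + s • G f c K ((1-u^2) * y)) := by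
          simp only [smul_eq_mul]; ring
      _ ≤ (1 / Real.sqrt (1 - u^2)) * G f c K ((1-u^2) * (t • x + s • y)) :=
          mul_le_mul_of_nonneg_left hco hpos

lemma k_mono (hf : 0 < f) (hc : 0 < c) (hK : 1 ≤ K) (u : ℝ) {a b : ℝ} (ha : 0 ≤ a)
    (hab : a ≤ b) : k f c K u a ≤ k f c K u b := by
  rcases le_or_gt (1 - u^2) 0 with hlam | hlam
  · rw [k_zero_out hf hc hK hlam ha, k_zero_out hf hc hK hlam (ha.trans hab)]
  · unfold k
    apply mul_le_mul (Real.sqrt_le_sqrt hab)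
      (psi_le_psi hf hc hK (mul_le_mul_of_nonneg_left hab hlam.le))
      (psi_nonneg hf hc hK _) (Real.sqrt_nonneg b)

lemma k_strict (hf : 0 < f) (hc : 0 < c) (hK : 1 ≤ K) {u : ℝ} (hu : u ∈ Ioo (0:ℝ) 1)
    {a b : ℝ} (ha : 0 ≤ a) (hab : a < b) : k f c K u a < k f c K u b := by
  have hlam : 0 < 1 - u^2 := by nlinarith [hu.1, hu.2]
  have hb : 0 < b := ha.trans_lt hab
  have hψb : 0 < psi f c K ((1 - u^2) * b) := psi_pos hf hc hK (by positivity)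
  rcases eq_or_lt_of_le ha with h0 | ha'
  · have h0' : k f c K u a = 0 := by rw [← h0]; exact k_zero_left hf hc hK le_rfl
    rw [h0']
    unfold k
    exact mul_pos (Real.sqrt_pos.2 hb) hψb
  · unfold k
    have h1 : Real.sqrt a < Real.sqrt b := Real.sqrt_lt_sqrt ha hab
    have h2 : psi f c K ((1-u^2)*a) ≤ psi f c K ((1-u^2)*b) :=
      psi_le_psi hf hc hK (mul_le_mul_of_nonneg_left hab.le hlam.le)
    have hψa : 0 < psi f c K ((1-u^2)*a) := psi_pos hf hc hK (by positivity)
    calc Real.sqrt a * psi f c K ((1-u^2)*a) < Real.sqrt b * psi f c K ((1-u^2)*a) :=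
          mul_lt_mul_of_pos_right h1 hψa
      _ ≤ Real.sqrt b * psi f c K ((1-u^2)*b) :=
          mul_le_mul_of_nonneg_left h2 (Real.sqrt_nonneg b)

lemma k_cont (hf : 0 < f) (hc : 0 < c) (hK : 1 ≤ K) (a : ℝ) :
    Continuous (fun u => k f c K u a) := by
  unfold k
  exact continuous_const.mul ((psi_continuous hf hc hK).comp (by fun_prop))

lemma k_integrable (hf : 0 < f) (hc : 0 < c) (hK : 1 ≤ K) (a : ℝ) :
    Integrable (fun u => k f c K u a) := by
  apply Continuous.integrable_of_hasCompactSupport (k_cont hf hc hK a)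
  apply HasCompactSupport.intro (isCompact_Icc (a := (-1:ℝ)) (b := 1))
  intro u hu
  rcases le_or_gt a 0 with ha | ha
  · exact k_zero_left hf hc hK ha
  · apply k_zero_out hf hc hK ?_ ha.le
    simp only [mem_Icc, not_and_or, not_le] at hu
    rcases hu with h | h <;> nlinarith

lemma J_concaveOn (hf : 0 < f) (hc : 0 < c) (hK : 1 ≤ K) : ConcaveOn ℝ (Ici 0) (J f c K) := by
  refine ⟨convex_Ici 0, fun x hx y hy t s ht hs hts => ?_⟩
  have hpt : ∀ u, t • k f c K u x + s • k f c K u y ≤ k f c K u (t • x + s • y) := fun u =>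
    (k_concaveOn hf hc hK u).2 hx hy ht hs hts
  have hint : Integrable (fun u => t • k f c K u x + s • k f c K u y) :=
    ((k_integrable hf hc hK x).smul t).add ((k_integrable hf hc hK y).smul s)
  have e1 : ∫ u, (t • k f c K u x + s • k f c K u y) = t • J f c K x + s • J f c K y := by
    simp only [smul_eq_mul]
    rw [integral_add ((k_integrable hf hc hK x).const_mul t)
      ((k_integrable hf hc hK y).const_mul s), integral_const_mul, integral_const_mul]
    rfl
  rw [← e1]
  exact integral_mono hint (k_integrable hf hc hK _) hpt

lemma J_zero (hf : 0 < f) (hc : 0 < c) (hK : 1 ≤ K) : J f c K 0 = 0 := by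
  have : (fun u => k f c K u 0) = fun _ => (0:ℝ) := funext fun u => k_zero_left hf hc hK le_rfl
  unfold J
  rw [this, integral_zero]

lemma J_strictMono (hf : 0 < f) (hc : 0 < c) (hK : 1 ≤ K) {a b : ℝ} (ha : 0 ≤ a) (hab : a < b) :
    J f c K a < J f c K b := by
  have hint : Integrable (fun u => k f c K u b - k f c K u a) :=
    (k_integrable hf hc hK b).sub (k_integrable hf hc hK a)
  have hd : ∀ u, 0 ≤ k f c K u b - k f c K u a := fun u =>
    sub_nonneg.2 (k_mono hf hc hK u ha hab.le)
  have h1 : 0 < ∫ u in (0:ℝ)..(1/2), (k f c K u b - k f c K u a) := by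
    apply intervalIntegral.intervalIntegral_pos_of_pos_on hint.intervalIntegrable
    · intro u hu
      exact sub_pos.2 (k_strict hf hc hK ⟨hu.1, by linarith [hu.2]⟩ ha hab)
    · norm_num
  rw [intervalIntegral.integral_of_le (by norm_num : (0:ℝ) ≤ 1/2)] at h1
  have h3 : (∫ u in Ioc (0:ℝ) (1/2), (k f c K u b - k f c K u a)) ≤
      ∫ u, (k f c K u b - k f c K u a) :=
    setIntegral_le_integral hint (Filter.Eventually.of_forall hd)
  have h4 : J f c K b - J f c K a = ∫ u, (k f c K u b - k f c K u a) :=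
    (integral_sub (k_integrable hf hc hK b) (k_integrable hf hc hK a)).symm
  linarith

lemma J_bound (hf : 0 < f) (hc : 0 < c) (hK : 1 ≤ K) {a b m : ℝ} (ha : 0 ≤ a) (hab : a ≤ b)
    (hbm : b ≤ m) :
    J f c K b - J f c K a ≤
      2 * (Real.sqrt (b - a) * psi f c K m + Real.sqrt m * Real.sqrt ((b - a)/f)) := by
  set D := Real.sqrt (b - a) * psi f c K m + Real.sqrt m * Real.sqrt ((b - a)/f) with hDdef
  have hD : 0 ≤ D := add_nonneg
    (mul_nonneg (Real.sqrt_nonneg _) (psi_nonneg hf hc hK _))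
    (mul_nonneg (Real.sqrt_nonneg _) (Real.sqrt_nonneg _))
  have hb : 0 ≤ b := ha.trans hab
  have hm : 0 ≤ m := hb.trans hbm
  have hpt : ∀ u, k f c K u b - k f c K u a ≤ (Icc (-1:ℝ) 1).indicator (fun _ => D) u := by
    intro u
    rcases em (u ∈ Icc (-1:ℝ) 1) with hu | hu
    · rw [indicator_of_mem hu]
      rcases le_or_gt (1 - u^2) 0 with hlam | hlam
      · rw [k_zero_out hf hc hK hlam ha, k_zero_out hf hc hK hlam hb]
        simpa using hD
      · have hlam1 : 1 - u^2 ≤ 1 := by nlinarith [sq_nonneg u]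
        have e : k f c K u b - k f c K u a =
            (Real.sqrt b - Real.sqrt a) * psi f c K ((1-u^2)*b)
            + Real.sqrt a * (psi f c K ((1-u^2)*b) - psi f c K ((1-u^2)*a)) := by
          unfold k; ring
        have t1 : (Real.sqrt b - Real.sqrt a) * psi f c K ((1-u^2)*b) ≤
            Real.sqrt (b - a) * psi f c K m := by
          apply mul_le_mul (sqrt_sub_le ha hab)
            (psi_le_psi hf hc hK ?_) (psi_nonneg hf hc hK _) (Real.sqrt_nonneg _)
          calc (1-u^2)*b ≤ 1*b := mul_le_mul_of_nonneg_right hlam1 hb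
            _ = b := one_mul b
            _ ≤ m := hbm
        have t2 : Real.sqrt a * (psi f c K ((1-u^2)*b) - psi f c K ((1-u^2)*a)) ≤
            Real.sqrt m * Real.sqrt ((b - a)/f) := by
          have hψ : psi f c K ((1-u^2)*b) - psi f c K ((1-u^2)*a) ≤ Real.sqrt ((b-a)/f) := by
            calc psi f c K ((1-u^2)*b) - psi f c K ((1-u^2)*a)
                ≤ Real.sqrt (((1-u^2)*b - (1-u^2)*a)/f) :=
                  psi_sub_le hf hc hK (mul_le_mul_of_nonneg_left hab hlam.le)
              _ ≤ Real.sqrt ((b - a)/f) := by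
                  apply Real.sqrt_le_sqrt
                  rw [div_le_div_iff₀ hf hf]
                  nlinarith [mul_nonneg (mul_nonneg (sq_nonneg u) (sub_nonneg.2 hab)) hf.le]
          apply mul_le_mul (Real.sqrt_le_sqrt (hab.trans hbm)) hψ
            (sub_nonneg.2 (psi_le_psi hf hc hK (mul_le_mul_of_nonneg_left hab hlam.le)))
            (Real.sqrt_nonneg m)
        rw [e, hDdef]
        exact add_le_add t1 t2
    · rw [indicator_of_notMem hu]
      simp only [mem_Icc, not_and_or, not_le] at hu
      have hlam : 1 - u^2 ≤ 0 := by rcases hu with h | h <;> nlinarith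
      rw [k_zero_out hf hc hK hlam ha, k_zero_out hf hc hK hlam hb]
      simp
  have hint : Integrable (fun u => k f c K u b - k f c K u a) :=
    (k_integrable hf hc hK b).sub (k_integrable hf hc hK a)
  have hindint : Integrable ((Icc (-1:ℝ) 1).indicator (fun _ => D)) := by
    rw [integrable_indicator_iff measurableSet_Icc]
    refine integrableOn_const ?_
    rw [Real.volume_Icc]
    exact ENNReal.ofReal_ne_top
  have h5 : J f c K b - J f c K a = ∫ u, (k f c K u b - k f c K u a) :=
    (integral_sub (k_integrable hf hc hK b) (k_integrable hf hc hK a)).symm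
  have h6 : (∫ u, (k f c K u b - k f c K u a)) ≤ ∫ u, (Icc (-1:ℝ) 1).indicator (fun _ => D) u :=
    integral_mono hint hindint hpt
  have h7 : (∫ u, (Icc (-1:ℝ) 1).indicator (fun _ => D) u) = 2 * D := by
    rw [integral_indicator measurableSet_Icc, setIntegral_const, measureReal_def, Real.volume_Icc]
    rw [ENNReal.toReal_ofReal (by norm_num : (0:ℝ) ≤ 1 - (-1))]
    rw [smul_eq_mul]
    norm_num
  linarith

variable (f c K)

def S (a : ℝ) : Set (ℝ × ℝ) := {p : ℝ × ℝ | p.2^2/8 + V f c K p.1 ≤ a}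

variable {f c K}

lemma V_abs (z : ℝ) : V f c K |z| = V f c K z := by
  rcases abs_cases z with ⟨e, _⟩ | ⟨e, _⟩
  · rw [e]
  · rw [e, V_even]

lemma slice_vol (hf : 0 < f) (hc : 0 < c) (hK : 1 ≤ K) (t : ℝ) :
    volume {z : ℝ | V f c K z ≤ t} = ENNReal.ofReal (2 * psi f c K t) := by
  rcases le_or_gt 0 t with ht | ht
  · have hset : {z : ℝ | V f c K z ≤ t} = Icc (-(psi f c K t)) (psi f c K t) := by
      ext z
      simp only [mem_setOf_eq, mem_Icc]
      constructor
      · intro h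
        have h1 : V f c K |z| ≤ t := by rw [V_abs]; exact h
        have h2 : |z| ≤ psi f c K t := by
          by_contra hcon
          push_neg at hcon
          have := V_strictMonoOn hf hc hK (psi_nonneg hf hc hK t)
            ((psi_nonneg hf hc hK t).trans hcon.le) hcon
          rw [V_psi hf hc hK ht] at this
          linarith
        exact abs_le.1 h2
      · intro ⟨h1, h2⟩
        have h3 : |z| ≤ psi f c K t := abs_le.2 ⟨h1, h2⟩
        have h4 : V f c K |z| ≤ V f c K (psi f c K t) :=
          (V_strictMonoOn hf hc hK).monotoneOn (abs_nonneg z) (psi_nonneg hf hc hK t) h3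
        rw [V_abs, V_psi hf hc hK ht] at h4
        exact h4
    rw [hset, Real.volume_Icc]
    congr 1
    ring
  · have hset : {z : ℝ | V f c K z ≤ t} = ∅ := by
      apply eq_empty_iff_forall_notMem.2
      intro z hz
      have := V_nonneg hf hc z (K := K)
      simp only [mem_setOf_eq] at hz
      linarith
    rw [hset, measure_empty, psi_of_nonpos hf hc hK ht.le, mul_zero, ENNReal.ofReal_zero]

lemma H_cont : Continuous (fun p : ℝ × ℝ => p.2^2/8 + V f c K p.1) := by
  apply Continuous.add (by fun_prop)
  exact V_cont.comp continuous_fst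

lemma S_meas (a : ℝ) : MeasurableSet (S f c K a) :=
  (isClosed_le H_cont continuous_const).measurableSet

lemma vol_S (hf : 0 < f) (hc : 0 < c) (hK : 1 ≤ K) (a : ℝ) :
    volume (S f c K a) = ∫⁻ w, ENNReal.ofReal (2 * psi f c K (a - w^2/8)) := by
  rw [show (volume : Measure (ℝ × ℝ)) = Measure.prod volume volume from Measure.volume_eq_prod ℝ ℝ,
    Measure.prod_apply_symm (S_meas a)]
  congr 1
  funext w
  have hpre : ((fun x => (x, w)) ⁻¹' S f c K a) = {z : ℝ | V f c K z ≤ a - w^2/8} := by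
    ext z
    simp only [mem_preimage, S, mem_setOf_eq]
    constructor <;> intro h <;> linarith
  rw [hpre, slice_vol hf hc hK]

lemma I_int (hf : 0 < f) (hc : 0 < c) (hK : 1 ≤ K) (a : ℝ) :
    (volume (S f c K a)).toReal = ∫ w, 2 * psi f c K (a - w^2/8) := by
  rw [vol_S hf hc hK a]
  rw [integral_eq_lintegral_of_nonneg_ae
    (Filter.Eventually.of_forall fun w => mul_nonneg (by norm_num) (psi_nonneg hf hc hK _))
    ((continuous_const.mul ((psi_continuous hf hc hK).comp
      (by fun_prop : Continuous fun w : ℝ => a - w^2/8))).aestronglyMeasurable)]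

lemma sqrt_eight : Real.sqrt 8 = 2 * Real.sqrt 2 := by
  have h4 : Real.sqrt 4 = 2 := by
    rw [show (4:ℝ) = 2^2 by norm_num, Real.sqrt_sq (by norm_num : (0:ℝ) ≤ 2)]
  rw [show (8:ℝ) = 4*2 by norm_num, Real.sqrt_mul (by norm_num : (0:ℝ) ≤ 4), h4]

lemma I_formula (hf : 0 < f) (hc : 0 < c) (hK : 1 ≤ K) {a : ℝ} (ha : 0 ≤ a) :
    (volume (S f c K a)).toReal = 4 * Real.sqrt 2 * J f c K a := by
  rcases eq_or_lt_of_le ha with h0 | ha'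
  · have hL : (fun w : ℝ => 2 * psi f c K (a - w^2/8)) = fun _ => (0:ℝ) := by
      funext w
      rw [psi_of_nonpos hf hc hK (by nlinarith [sq_nonneg w] : a - w^2/8 ≤ 0), mul_zero]
    rw [I_int hf hc hK a, hL, integral_zero, ← h0, J_zero hf hc hK, mul_zero]
  · set s := Real.sqrt (8*a) with hsdef
    have hs : 0 < s := Real.sqrt_pos.2 (by linarith)
    have hs2 : s^2 = 8*a := Real.sq_sqrt (by linarith)
    have hsa : 0 < Real.sqrt a := Real.sqrt_pos.2 ha'
    have hcomp := Measure.integral_comp_mul_left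
      (fun w => 2 * psi f c K (a - w^2/8)) s
    have h8 : ∫ (y:ℝ), 2 * psi f c K (a - y^2/8)
        = s * ∫ x, 2 * psi f c K (a - (s*x)^2/8) := by
      rw [hcomp, abs_of_pos (inv_pos.2 hs), smul_eq_mul, ← mul_assoc,
        mul_inv_cancel₀ hs.ne', one_mul]
    have h9 : (fun x : ℝ => 2 * psi f c K (a - (s*x)^2/8))
        = fun x : ℝ => 2 * psi f c K ((1-x^2)*a) := by
      funext x
      rw [show a - (s*x)^2/8 = (1-x^2)*a from by rw [mul_pow, hs2]; ring]
    have hJ : J f c K a = Real.sqrt a * ∫ u, psi f c K ((1-u^2)*a) := by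
      unfold J k
      rw [integral_const_mul]
    rw [I_int hf hc hK a, h8, h9, integral_const_mul]
    rw [show (∫ u, psi f c K ((1-u^2)*a)) = J f c K a / Real.sqrt a from by
      rw [hJ]; field_simp; simp_rw [mul_comm a]]
    rw [hsdef, Real.sqrt_mul (by norm_num : (0:ℝ) ≤ 8), sqrt_eight]
    field_simp
    ring

end StarkAux

/-- Generalized Stark-type system (`g < 0`), any negative energy `-f < 0`: after Levi-Civita
regularization, the energy hypersurface bounds a convex toric domain.  Here `I a` is the
area of the compact sublevel set `{w²/8 + f z² - g z^(4n+2) ≤ a}`, and the curve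
`(I₁(a), I₂(m-a))` is the graph of the strictly decreasing concave function
`φ(x) = I(m - I⁻¹(x))`, expressed via `φ (I a) = I (m - a)`. -/
theorem stmt_3 (n : ℕ) (hn : 1 ≤ n) (m g f : ℝ) (hm : 0 < m) (hg : g < 0) (hf : 0 < f)
    (I : ℝ → ℝ)
    (hI : ∀ a : ℝ, I a =
      (volume {p : ℝ × ℝ | p.2 ^ 2 / 8 + f * p.1 ^ 2 - g * p.1 ^ (4 * n + 2) ≤ a}).toReal) :
    ContinuousOn I (Icc 0 m) ∧ StrictMonoOn I (Icc 0 m) ∧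
    ∀ φ : ℝ → ℝ, (∀ a ∈ Icc (0 : ℝ) m, φ (I a) = I (m - a)) →
      StrictAntiOn φ (Icc 0 (I m)) ∧ ConcaveOn ℝ (Icc 0 (I m)) φ := by
  set c := -g with hcdef
  have hc : 0 < c := by rw [hcdef]; linarith
  set K := 2*n+1 with hKdef
  have hK : 1 ≤ K := by omega
  have hfun : ∀ p : ℝ × ℝ, p.2^2/8 + f*p.1^2 - g*p.1^(4*n+2) =
      p.2^2/8 + StarkAux.V f c K p.1 := by
    intro p
    simp only [StarkAux.V]
    rw [show 2*K = 4*n+2 from by omega, hcdef]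
    ring
  have hSeq : ∀ a : ℝ, {p : ℝ × ℝ | p.2 ^ 2 / 8 + f * p.1 ^ 2 - g * p.1 ^ (4 * n + 2) ≤ a}
      = StarkAux.S f c K a := by
    intro a
    ext p
    simp only [StarkAux.S, mem_setOf_eq, ← hfun p]
  have hIeq : ∀ a, I a = (volume (StarkAux.S f c K a)).toReal := fun a => by
    rw [hI a, hSeq a]
  have hIJ : ∀ a : ℝ, 0 ≤ a → I a = 4*Real.sqrt 2 * StarkAux.J f c K a := fun a ha => by
    rw [hIeq a, StarkAux.I_formula hf hc hK ha]
  have hC : (0:ℝ) ≤ 4*Real.sqrt 2 := by positivity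
  -- concavity of I
  have hconc : ConcaveOn ℝ (Icc 0 m) I := by
    refine ⟨convex_Icc _ _, fun x hx y hy t s ht hs hts => ?_⟩
    have hxy : (0:ℝ) ≤ t • x + s • y :=
      add_nonneg (mul_nonneg ht hx.1) (mul_nonneg hs hy.1)
    rw [hIJ x hx.1, hIJ y hy.1, hIJ _ hxy]
    have hJc := (StarkAux.J_concaveOn hf hc hK).2 (hx.1 : x ∈ Ici (0:ℝ))
      (hy.1 : y ∈ Ici (0:ℝ)) ht hs hts
    calc t • (4*Real.sqrt 2 * StarkAux.J f c K x) + s • (4*Real.sqrt 2 * StarkAux.J f c K y)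
        = 4*Real.sqrt 2 * (t • StarkAux.J f c K x + s • StarkAux.J f c K y) := by
          simp only [smul_eq_mul]; ring
      _ ≤ 4*Real.sqrt 2 * StarkAux.J f c K (t • x + s • y) :=
          mul_le_mul_of_nonneg_left hJc hC
  -- strict monotonicity
  have hmono : StrictMonoOn I (Icc 0 m) := by
    intro a ha b hb hab
    rw [hIJ a ha.1, hIJ b hb.1]
    exact mul_lt_mul_of_pos_left (StarkAux.J_strictMono hf hc hK ha.1 hab) (by positivity)
  have hI0 : I 0 = 0 := by
    rw [hIJ 0 le_rfl, StarkAux.J_zero hf hc hK, mul_zero]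
  -- modulus of continuity
  set C2 := 8*Real.sqrt 2*(StarkAux.psi f c K m + Real.sqrt m/Real.sqrt f) with hC2def
  have hC2 : 0 ≤ C2 := by
    rw [hC2def]
    have := StarkAux.psi_nonneg hf hc hK m
    positivity
  have hIbound : ∀ a b : ℝ, 0 ≤ a → a ≤ b → b ≤ m →
      I b - I a ≤ C2 * Real.sqrt (b - a) := by
    intro a b ha hab hbm
    have hJb := StarkAux.J_bound hf hc hK ha hab hbm
    have hdiv : Real.sqrt ((b-a)/f) = Real.sqrt (b-a)/Real.sqrt f :=
      Real.sqrt_div (by linarith) f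
    rw [hIJ a ha, hIJ b (ha.trans hab)]
    have : 4*Real.sqrt 2 * StarkAux.J f c K b - 4*Real.sqrt 2 * StarkAux.J f c K a
        = 4*Real.sqrt 2 * (StarkAux.J f c K b - StarkAux.J f c K a) := by ring
    rw [this]
    calc 4*Real.sqrt 2 * (StarkAux.J f c K b - StarkAux.J f c K a)
        ≤ 4*Real.sqrt 2 * (2 * (Real.sqrt (b-a) * StarkAux.psi f c K m
            + Real.sqrt m * Real.sqrt ((b-a)/f))) := by
          apply mul_le_mul_of_nonneg_left hJb (by positivity)
      _ = C2 * Real.sqrt (b - a) := by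
          rw [hdiv, hC2def]
          field_simp
          ring
  have hcont : ContinuousOn I (Icc 0 m) := by
    rw [Metric.continuousOn_iff]
    intro x hx ε hε
    refine ⟨(ε/(C2+1))^2, by positivity, fun y hy hdist => ?_⟩
    have hkey : ∀ a b : ℝ, a ∈ Icc 0 m → b ∈ Icc 0 m → a ≤ b → b - a < (ε/(C2+1))^2 →
        |I b - I a| < ε := by
      intro a b haI hbI hab hd
      have h1 : I b - I a ≤ C2 * Real.sqrt (b - a) := hIbound a b haI.1 hab hbI.2
      have h2 : 0 ≤ I b - I a := by
        rcases eq_or_lt_of_le hab with h | h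
        · rw [h]; simp
        · exact (sub_nonneg.2 (hmono haI hbI h).le)
      rw [abs_of_nonneg h2]
      have h3 : Real.sqrt (b - a) < ε/(C2+1) := by
        calc Real.sqrt (b - a) < Real.sqrt ((ε/(C2+1))^2) := Real.sqrt_lt_sqrt (by linarith) hd
          _ = ε/(C2+1) := Real.sqrt_sq (by positivity)
      calc I b - I a ≤ C2 * Real.sqrt (b - a) := h1
        _ ≤ C2 * (ε/(C2+1)) := by
            apply mul_le_mul_of_nonneg_left h3.le hC2
        _ < ε := by
            rw [div_eq_mul_inv]
            have hlt : C2 < C2 + 1 := by linarith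
            have : C2 * (ε * (C2+1)⁻¹) = ε * (C2/(C2+1)) := by field_simp
            rw [this]
            have hfrac : C2/(C2+1) < 1 := by
              rw [div_lt_one (by linarith)]; linarith
            nlinarith
    rw [Real.dist_eq] at hdist ⊢
    rcases le_total x y with hxy | hxy
    · exact hkey x y hx hy hxy (by rw [abs_of_nonneg (by linarith)] at hdist; linarith)
    · rw [abs_sub_comm]
      exact hkey y x hy hx hxy (by rw [abs_of_nonpos (by linarith)] at hdist; linarith)
  refine ⟨hcont, hmono, fun φ hφ => ?_⟩
  -- surjectivity of I onto [0, I m]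
  have hsurj : ∀ x ∈ Icc 0 (I m), ∃ a ∈ Icc 0 m, I a = x := by
    intro x hx
    have hmem : x ∈ Icc (I 0) (I m) := by rw [hI0]; exact hx
    obtain ⟨a, haI, hax⟩ := intermediate_value_Icc hm.le hcont hmem
    exact ⟨a, haI, hax⟩
  have hmonoW : ∀ a b : ℝ, a ∈ Icc 0 m → b ∈ Icc 0 m → a ≤ b → I a ≤ I b := by
    intro a b ha hb hab
    rcases eq_or_lt_of_le hab with h | h
    · rw [h]
    · exact (hmono ha hb h).le
  have hlt_of : ∀ a b : ℝ, a ∈ Icc 0 m → b ∈ Icc 0 m → I a < I b → a < b := by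
    intro a b ha hb hIab
    by_contra hcon
    push_neg at hcon
    have := hmonoW b a hb ha hcon
    linarith
  have hle_of : ∀ a b : ℝ, a ∈ Icc 0 m → b ∈ Icc 0 m → I a ≤ I b → a ≤ b := by
    intro a b ha hb hIab
    by_contra hcon
    push_neg at hcon
    have := hmono hb ha hcon
    linarith
  constructor
  · -- strict anti
    intro x hx y hy hxy
    obtain ⟨a, haI, hax⟩ := hsurj x hx
    obtain ⟨b, hbI, hby⟩ := hsurj y hy
    have hab : a < b := hlt_of a b haI hbI (by rw [hax, hby]; exact hxy)
    have hma : m - a ∈ Icc (0:ℝ) m := ⟨by linarith [haI.2], by linarith [haI.1]⟩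
    have hmb : m - b ∈ Icc (0:ℝ) m := ⟨by linarith [hbI.2], by linarith [hbI.1]⟩
    rw [← hax, ← hby, hφ a haI, hφ b hbI]
    exact hmono hmb hma (by linarith)
  · -- concavity of φ
    refine ⟨convex_Icc _ _, fun x hx y hy t s ht hs hts => ?_⟩
    obtain ⟨a, haI, hax⟩ := hsurj x hx
    obtain ⟨b, hbI, hby⟩ := hsurj y hy
    have hcomb : t • x + s • y ∈ Icc 0 (I m) := (convex_Icc 0 (I m)) hx hy ht hs hts
    obtain ⟨e, heI, hex⟩ := hsurj _ hcomb
    have hcombm : t • a + s • b ∈ Icc (0:ℝ) m := (convex_Icc 0 m) haI hbI ht hs hts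
    have hIe : I e ≤ I (t • a + s • b) := by
      rw [hex, ← hax, ← hby]
      exact hconc.2 haI hbI ht hs hts
    have he_le : e ≤ t • a + s • b := hle_of e _ heI hcombm hIe
    have hma : m - a ∈ Icc (0:ℝ) m := ⟨by linarith [haI.2], by linarith [haI.1]⟩
    have hmb : m - b ∈ Icc (0:ℝ) m := ⟨by linarith [hbI.2], by linarith [hbI.1]⟩
    have hme : m - e ∈ Icc (0:ℝ) m := ⟨by linarith [heI.2], by linarith [heI.1]⟩
    have hmcomb : m - (t • a + s • b) ∈ Icc (0:ℝ) m :=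
      ⟨by linarith [hcombm.2], by linarith [hcombm.1]⟩
    have step1 : t • φ x + s • φ y ≤ I (m - (t • a + s • b)) := by
      rw [← hax, ← hby, hφ a haI, hφ b hbI]
      have harg : m - (t • a + s • b) = t • (m - a) + s • (m - b) := by
        simp only [smul_eq_mul]; nlinarith [hts]
      rw [harg]
      exact hconc.2 hma hmb ht hs hts
    have step2 : I (m - (t • a + s • b)) ≤ I (m - e) :=
      hmonoW _ _ hmcomb hme (by linarith)
    have step3 : φ (t • x + s • y) = I (m - e) := by
      rw [← hex, hφ e heI]
    rw [step3]
    linarith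
end StarkAux
end

section
/- Let V : [0,∞) → ℝ be twice continuously differentiable with V(0) = 0, V′(t) > 0 for all t ≥ 0, V″(t) < 0 for all t > 0, and V(t) → ∞ as t → ∞. For a > 0 let I(a) denote the Lebesgue measure (area) of the compact set {(z,w) ∈ ℝ² : w²/2 + V(z²) ≤ a}. Then I is strictly increasing and strictly convex on (0, ∞). -/
open MeasureTheory Set Filter

namespace Stmt10

open Classical in
noncomputable def W (V : ℝ → ℝ) (a : ℝ) : ℝ :=
  if h : ∃ t, 0 ≤ t ∧ V t = a then h.choose else 0

variable {V V' V'' : ℝ → ℝ}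

lemma contV (hd : ∀ t ∈ Ici (0 : ℝ), HasDerivWithinAt V (V' t) (Ici 0) t) :
    ContinuousOn V (Ici 0) := fun t ht => (hd t ht).continuousWithinAt

lemma monoV (hd : ∀ t ∈ Ici (0 : ℝ), HasDerivWithinAt V (V' t) (Ici 0) t)
    (hV' : ∀ t : ℝ, 0 ≤ t → 0 < V' t) : StrictMonoOn V (Ici 0) := by
  apply strictMonoOn_of_deriv_pos (convex_Ici 0) (contV hd)
  intro x hx
  rw [interior_Ici] at hx
  have h := (hd x (mem_Ici.mpr (le_of_lt hx))).hasDerivAt (Ici_mem_nhds hx)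
  rw [h.deriv]
  exact hV' x (le_of_lt hx)

lemma exists_root (hd : ∀ t ∈ Ici (0 : ℝ), HasDerivWithinAt V (V' t) (Ici 0) t)
    (hV0 : V 0 = 0) (htop : Tendsto V atTop atTop) {a : ℝ} (ha : 0 ≤ a) :
    ∃ t, 0 ≤ t ∧ V t = a := by
  obtain ⟨b, hb1, hb2⟩ := ((htop.eventually (eventually_ge_atTop a)).and
    (eventually_ge_atTop 0)).exists
  have hsub : Icc (0:ℝ) b ⊆ Ici 0 := fun x hx => hx.1
  obtain ⟨t, ht, hVt⟩ := intermediate_value_Icc hb2 ((contV hd).mono hsub)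
    (by rw [hV0]; exact ⟨ha, hb1⟩)
  exact ⟨t, ht.1, hVt⟩

lemma W_spec (hd : ∀ t ∈ Ici (0 : ℝ), HasDerivWithinAt V (V' t) (Ici 0) t)
    (hV0 : V 0 = 0) (htop : Tendsto V atTop atTop) {a : ℝ} (ha : 0 ≤ a) :
    0 ≤ W V a ∧ V (W V a) = a := by
  have h := exists_root hd hV0 htop ha
  unfold W; rw [dif_pos h]
  exact ⟨h.choose_spec.1, h.choose_spec.2⟩

section Basic

variable (hd : ∀ t ∈ Ici (0 : ℝ), HasDerivWithinAt V (V' t) (Ici 0) t)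
    (hd' : ∀ t ∈ Ici (0 : ℝ), HasDerivWithinAt V' (V'' t) (Ici 0) t)
    (hV0 : V 0 = 0)
    (hV' : ∀ t : ℝ, 0 ≤ t → 0 < V' t)
    (hV'' : ∀ t : ℝ, 0 < t → V'' t < 0)
    (htop : Tendsto V atTop atTop)

include hd hV0 htop

lemma W_nonneg {a : ℝ} (ha : 0 ≤ a) : 0 ≤ W V a := (W_spec hd hV0 htop ha).1

lemma VW {a : ℝ} (ha : 0 ≤ a) : V (W V a) = a := (W_spec hd hV0 htop ha).2

include hV'

omit htop in
lemma Vnonneg {t : ℝ} (ht : 0 ≤ t) : 0 ≤ V t := by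
  rcases eq_or_lt_of_le ht with h | h
  · rw [← h, hV0]
  · rw [← hV0]
    exact le_of_lt ((monoV hd hV') (mem_Ici.mpr (le_refl 0)) (mem_Ici.mpr (le_of_lt h)) h)

lemma W_lt_W {a b : ℝ} (ha : 0 ≤ a) (hab : a < b) : W V a < W V b := by
  by_contra hc
  push_neg at hc
  have hb : (0:ℝ) ≤ b := le_trans ha (le_of_lt hab)
  have := (monoV hd hV').monotoneOn (W_nonneg hd hV0 htop hb)
    (W_nonneg hd hV0 htop ha) hc
  rw [VW hd hV0 htop ha, VW hd hV0 htop hb] at this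
  exact absurd hab (not_lt.mpr this)

lemma W_pos {a : ℝ} (ha : 0 < a) : 0 < W V a := by
  have h0 : W V (0:ℝ) = 0 := by
    have h1 := VW hd hV0 htop (le_refl 0)
    have := (monoV hd hV').injOn (W_nonneg hd hV0 htop (le_refl 0))
      (mem_Ici.mpr (le_refl 0)) (by rw [h1, hV0])
    exact this
  have := W_lt_W hd hV0 hV' htop (le_refl 0) ha
  rwa [h0] at this

lemma V_lt_of_lt_W {t a : ℝ} (ht : 0 ≤ t) (ha : 0 ≤ a) (h : t < W V a) : V t < a := by
  have := (monoV hd hV') ht (W_nonneg hd hV0 htop ha) h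
  rwa [VW hd hV0 htop ha] at this

lemma V_ge_of_ge_W {t a : ℝ} (ha : 0 ≤ a) (h : W V a ≤ t) : a ≤ V t := by
  have ht : (0:ℝ) ≤ t := le_trans (W_nonneg hd hV0 htop ha) h
  have := (monoV hd hV').monotoneOn (W_nonneg hd hV0 htop ha) ht h
  rwa [VW hd hV0 htop ha] at this

end Basic

section Phi

variable (hd : ∀ t ∈ Ici (0 : ℝ), HasDerivWithinAt V (V' t) (Ici 0) t)
    (hd' : ∀ t ∈ Ici (0 : ℝ), HasDerivWithinAt V' (V'' t) (Ici 0) t)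
    (hV' : ∀ t : ℝ, 0 ≤ t → 0 < V' t)
    (hV'' : ∀ t : ℝ, 0 < t → V'' t < 0)

include hd hd' hV''

lemma phi_mono : StrictMonoOn (fun t => V t - t * V' t) (Ici 0) := by
  apply strictMonoOn_of_deriv_pos (convex_Ici 0)
  · exact fun t ht => ((hd t ht).sub
      ((hasDerivWithinAt_id t _).mul (hd' t ht))).continuousWithinAt
  · intro x hx
    rw [interior_Ici] at hx
    have hx' : x ∈ Ici (0:ℝ) := mem_Ici.mpr (le_of_lt hx)
    have h1 : HasDerivAt V (V' x) x := (hd x hx').hasDerivAt (Ici_mem_nhds hx)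
    have h2 : HasDerivAt V' (V'' x) x := (hd' x hx').hasDerivAt (Ici_mem_nhds hx)
    have h3 : HasDerivAt (fun t => V t - t * V' t)
        (V' x - (1 * V' x + x * V'' x)) x := h1.sub ((hasDerivAt_id x).mul h2)
    rw [h3.deriv]
    have hx0 : 0 < x := hx
    have := hV'' x hx0
    nlinarith [mul_pos hx0 (neg_pos.mpr this)]

/-- the core monotonicity: `x ↦ x / (V x - V (x * τ))` is strictly monotone on `Ioi 0`
for `τ ∈ [0,1)`. -/
lemma Q_mono (hV'0 : ∀ t : ℝ, 0 ≤ t → 0 < V' t) {τ : ℝ} (hτ0 : 0 ≤ τ) (hτ1 : τ < 1) :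
    StrictMonoOn (fun x => x / (V x - V (x * τ))) (Ioi 0) := by
  have hD : ∀ x : ℝ, 0 < x → HasDerivAt (fun y => V y - V (y * τ))
      (V' x - V' (x * τ) * τ) x := by
    intro x hx
    have h1 : HasDerivAt V (V' x) x := (hd x (le_of_lt hx)).hasDerivAt (Ici_mem_nhds hx)
    rcases eq_or_lt_of_le hτ0 with h | h
    · have : (fun y => V y - V (y * τ)) = fun y => V y - V 0 := by
        funext y; rw [← h, mul_zero]
      rw [this, ← h, mul_zero]
      simpa using h1
    · have hxτ : 0 < x * τ := mul_pos hx h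
      have h2 : HasDerivAt V (V' (x * τ)) (x * τ) :=
        (hd (x * τ) (le_of_lt hxτ)).hasDerivAt (Ici_mem_nhds hxτ)
      have h3 : HasDerivAt (fun y => y * τ) τ x := by
        simpa using (hasDerivAt_id x).mul_const τ
      exact h1.sub (HasDerivAt.comp x h2 h3)
  have hDpos : ∀ x : ℝ, 0 < x → 0 < V x - V (x * τ) := by
    intro x hx
    have hxτ : x * τ < x := by nlinarith
    have := (monoV hd hV'0) (mul_nonneg (le_of_lt hx) hτ0) (le_of_lt hx) hxτ
    linarith
  apply strictMonoOn_of_deriv_pos (convex_Ioi 0)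
  · intro x hx
    exact (((hasDerivAt_id x).div (hD x hx) (ne_of_gt (hDpos x hx))).continuousAt).continuousWithinAt
  · intro x hx
    rw [interior_Ioi] at hx
    have h : HasDerivAt (fun y : ℝ => y / (V y - V (y * τ)))
        ((1 * (V x - V (x * τ)) - x * (V' x - V' (x * τ) * τ)) / (V x - V (x * τ)) ^ 2) x := by
      exact (hasDerivAt_id' x).div (hD x hx) (ne_of_gt (hDpos x hx))
    rw [h.deriv]
    have hx0 : 0 < x := hx
    apply div_pos
    · have hxτ : x * τ < x := mul_lt_of_lt_one_right hx0 hτ1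
      have hφ := phi_mono hd hd' hV'' (mul_nonneg (le_of_lt hx0) hτ0)
        (le_of_lt hx0) hxτ
      simp only at hφ
      nlinarith
    · exact pow_pos (hDpos x hx0) 2

end Phi

noncomputable def Th (V : ℝ → ℝ) (s : ℝ) : ENNReal :=
  ∫⁻ z : ℝ, ENNReal.ofReal (Real.sqrt 2 / Real.sqrt (s - V (z ^ 2)))

section MeasureBasics

variable (hd : ∀ t ∈ Ici (0 : ℝ), HasDerivWithinAt V (V' t) (Ici 0) t)

include hd

lemma contVsq : Continuous fun z : ℝ => V (z ^ 2) := by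
  apply (contV hd).comp_continuous (continuous_pow 2)
  intro x
  exact sq_nonneg x

lemma meas_integrand : Measurable fun p : ℝ × ℝ =>
    ENNReal.ofReal (Real.sqrt 2 / Real.sqrt (p.1 - V (p.2 ^ 2))) := by
  apply Measurable.ennreal_ofReal
  apply Measurable.div measurable_const
  exact (continuous_fst.sub ((contVsq hd).comp continuous_snd)).sqrt.measurable

lemma meas_integrand1 (s : ℝ) : Measurable fun z : ℝ =>
    ENNReal.ofReal (Real.sqrt 2 / Real.sqrt (s - V (z ^ 2))) := by
  apply Measurable.ennreal_ofReal
  apply Measurable.div measurable_const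
  exact (continuous_const.sub (contVsq hd)).sqrt.measurable

lemma meas_setS (a : ℝ) : MeasurableSet {p : ℝ × ℝ | p.2 ^ 2 / 2 + V (p.1 ^ 2) ≤ a} := by
  have hc : Continuous fun p : ℝ × ℝ => p.2 ^ 2 / 2 + V (p.1 ^ 2) :=
    ((continuous_snd.pow 2).div_const 2).add ((contVsq hd).comp continuous_fst)
  exact measurableSet_le hc.measurable measurable_const

/-- slice formula for the volume -/
lemma volume_S (a : ℝ) :
    volume {p : ℝ × ℝ | p.2 ^ 2 / 2 + V (p.1 ^ 2) ≤ a}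
      = ∫⁻ z : ℝ, ENNReal.ofReal (2 * Real.sqrt (2 * (a - V (z ^ 2)))) := by
  rw [MeasureTheory.Measure.volume_eq_prod, Measure.prod_apply (meas_setS hd a)]
  congr 1
  funext z
  have hslice : (Prod.mk z ⁻¹' {p : ℝ × ℝ | p.2 ^ 2 / 2 + V (p.1 ^ 2) ≤ a})
      = {w : ℝ | w ^ 2 ≤ 2 * (a - V (z ^ 2))} := by
    ext w
    simp only [mem_preimage, mem_setOf_eq]
    constructor <;> intro h <;> nlinarith
  rw [hslice]
  set d := 2 * (a - V (z ^ 2)) with hdd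
  rcases le_or_gt 0 d with hdpos | hdneg
  · have : {w : ℝ | w ^ 2 ≤ d} = Icc (-Real.sqrt d) (Real.sqrt d) := by
      ext w
      simp only [mem_setOf_eq, mem_Icc]
      constructor
      · intro h
        constructor
        · nlinarith [Real.sq_sqrt hdpos, Real.sqrt_nonneg d, sq_nonneg (w + Real.sqrt d)]
        · nlinarith [Real.sq_sqrt hdpos, Real.sqrt_nonneg d, sq_nonneg (w - Real.sqrt d)]
      · intro ⟨h1, h2⟩
        nlinarith [Real.sq_sqrt hdpos]
    rw [this, Real.volume_Icc]
    congr 1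
    ring
  · have h1 : {w : ℝ | w ^ 2 ≤ d} = ∅ := by
      ext w
      simp only [mem_setOf_eq, mem_empty_iff_false, iff_false, not_le]
      nlinarith [sq_nonneg w]
    have h2 : Real.sqrt d = 0 := Real.sqrt_eq_zero'.mpr (le_of_lt hdneg)
    rw [h1, h2]
    simp

end MeasureBasics

/-- Sub-lemma A: `∫⁻ u in Ioo 0 b, √2/√u = 2√2·√b`. -/
lemma lintegral_inv_sqrt (b : ℝ) :
    ∫⁻ u in Ioo (0:ℝ) b, ENNReal.ofReal (Real.sqrt 2 / Real.sqrt u)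
      = ENNReal.ofReal (2 * Real.sqrt 2 * Real.sqrt b) := by
  rcases le_or_gt b 0 with hb | hb
  · rw [Ioo_eq_empty (by exact not_lt.mpr hb)]
    rw [Real.sqrt_eq_zero'.mpr hb]
    simp
  · have hint : IntegrableOn (fun u : ℝ => Real.sqrt 2 * u ^ (-(1:ℝ)/2)) (Ioo 0 b) := by
      have h1 : IntervalIntegrable (fun u : ℝ => u ^ (-(1:ℝ)/2)) volume 0 b :=
        intervalIntegral.intervalIntegrable_rpow' (by norm_num)
      rw [intervalIntegrable_iff, uIoc_of_le (le_of_lt hb)] at h1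
      exact (h1.mono_set Ioo_subset_Ioc_self).const_mul _
    have hcong : ∀ u ∈ Ioo (0:ℝ) b,
        Real.sqrt 2 / Real.sqrt u = Real.sqrt 2 * u ^ (-(1:ℝ)/2) := by
      intro u hu
      rw [Real.sqrt_eq_rpow u, div_eq_mul_inv, ← Real.rpow_neg (le_of_lt hu.1)]
      norm_num
    have hint' : IntegrableOn (fun u : ℝ => Real.sqrt 2 / Real.sqrt u) (Ioo 0 b) :=
      hint.congr_fun (fun u hu => (hcong u hu).symm) measurableSet_Ioo
    rw [← MeasureTheory.ofReal_integral_eq_lintegral_ofReal hint'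
      (ae_of_all _ (fun u => div_nonneg (Real.sqrt_nonneg 2) (Real.sqrt_nonneg u)))]
    congr 1
    rw [setIntegral_congr_fun measurableSet_Ioo hcong]
    rw [integral_const_mul, ← integral_Ioc_eq_integral_Ioo,
      ← intervalIntegral.integral_of_le (le_of_lt hb)]
    rw [integral_rpow (Or.inl (by norm_num))]
    rw [Real.sqrt_eq_rpow b]
    rw [Real.zero_rpow (by norm_num)]
    ring_nf

/-- Sub-lemma B+C: inner `s`-integral. -/
lemma lintegral_inner {c : ℝ} (hc : 0 ≤ c) (a : ℝ) :
    ∫⁻ s in Ioo (0:ℝ) a, ENNReal.ofReal (Real.sqrt 2 / Real.sqrt (s - c))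
      = ENNReal.ofReal (2 * Real.sqrt 2 * Real.sqrt (a - c)) := by
  have hmeas : Measurable fun s : ℝ => ENNReal.ofReal (Real.sqrt 2 / Real.sqrt (s - c)) := by
    apply Measurable.ennreal_ofReal
    exact Measurable.div measurable_const ((continuous_id.sub continuous_const).sqrt.measurable)
  rcases le_or_gt a c with hac | hac
  · have hz : ∀ s ∈ Ioo (0:ℝ) a,
        ENNReal.ofReal (Real.sqrt 2 / Real.sqrt (s - c)) = 0 := by
      intro s hs
      rw [Real.sqrt_eq_zero'.mpr (by linarith [hs.2] : s - c ≤ 0), div_zero]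
      simp
    rw [setLIntegral_congr_fun measurableSet_Ioo hz]
    rw [Real.sqrt_eq_zero'.mpr (by linarith : a - c ≤ 0)]
    simp
  · -- c < a
    have htrans : ∫⁻ s in Ioo c a, ENNReal.ofReal (Real.sqrt 2 / Real.sqrt (s - c))
        = ∫⁻ u in Ioo (0:ℝ) (a - c), ENNReal.ofReal (Real.sqrt 2 / Real.sqrt u) := by
      have hmp := measurePreserving_add_right (volume : Measure ℝ) c
      have hpre : (fun x : ℝ => x + c) ⁻¹' (Ioo c a) = Ioo 0 (a - c) := by
        ext u
        simp only [mem_preimage, mem_Ioo]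
        constructor <;> intro h <;> constructor <;> linarith [h.1, h.2]
      have := hmp.setLIntegral_comp_preimage (s := Ioo c a) measurableSet_Ioo hmeas
      rw [hpre] at this
      rw [← this]
      apply lintegral_congr
      intro u
      congr 2
      ring_nf
    have hsplit : Ioo (0:ℝ) a = Ioc 0 c ∪ Ioo c a := (Ioc_union_Ioo_eq_Ioo hc hac).symm
    have hdisj : Disjoint (Ioc (0:ℝ) c) (Ioo c a) := by
      rw [Set.disjoint_left]
      intro s hs hs'
      exact absurd hs'.1 (not_lt.mpr hs.2)
    rw [hsplit, lintegral_union measurableSet_Ioo hdisj]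
    have hz : ∀ s ∈ Ioc (0:ℝ) c,
        ENNReal.ofReal (Real.sqrt 2 / Real.sqrt (s - c)) = 0 := by
      intro s hs
      rw [Real.sqrt_eq_zero'.mpr (by linarith [hs.2] : s - c ≤ 0), div_zero]
      simp
    rw [setLIntegral_congr_fun measurableSet_Ioc hz]
    simp only [lintegral_zero, zero_add]
    rw [htrans, lintegral_inv_sqrt]

/-- KEY 1: the volume of the sublevel set is the integral of `Th`. -/
lemma key1 (hd : ∀ t ∈ Ici (0 : ℝ), HasDerivWithinAt V (V' t) (Ici 0) t)
    (hV0 : V 0 = 0) (hV' : ∀ t : ℝ, 0 ≤ t → 0 < V' t) (a : ℝ) :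
    volume {p : ℝ × ℝ | p.2 ^ 2 / 2 + V (p.1 ^ 2) ≤ a}
      = ∫⁻ s in Ioo (0:ℝ) a, Th V s := by
  rw [volume_S hd a]
  have hswap : ∫⁻ s in Ioo (0:ℝ) a, Th V s
      = ∫⁻ z : ℝ, ∫⁻ s in Ioo (0:ℝ) a,
          ENNReal.ofReal (Real.sqrt 2 / Real.sqrt (s - V (z ^ 2))) := by
    unfold Th
    apply MeasureTheory.lintegral_lintegral_swap
    apply Measurable.aemeasurable
    exact meas_integrand hd
  rw [hswap]
  apply lintegral_congr
  intro z
  have hc : 0 ≤ V (z ^ 2) := Vnonneg hd hV0 hV' (sq_nonneg z)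
  rw [lintegral_inner hc a]
  congr 1
  rw [Real.sqrt_mul (by norm_num : (0:ℝ) ≤ 2)]
  ring

section Sigma

variable (hd : ∀ t ∈ Ici (0 : ℝ), HasDerivWithinAt V (V' t) (Ici 0) t)
    (hV0 : V 0 = 0)
    (hV' : ∀ t : ℝ, 0 ≤ t → 0 < V' t)
    (htop : Tendsto V atTop atTop)

include hd hV0 hV' htop

/-- the `σ`-form of `Th`. -/
lemma Th_sigma {s : ℝ} (hs : 0 < s) :
    Th V s = ∫⁻ σ : ℝ, ENNReal.ofReal
      (Real.sqrt 2 * Real.sqrt (W V s / (s - V (W V s * σ ^ 2)))) := by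
  set x := W V s with hxdef
  have hx : 0 < x := W_pos hd hV0 hV' htop hs
  set c := Real.sqrt x with hcdef
  have hc : 0 < c := Real.sqrt_pos.mpr hx
  have hc2 : c ^ 2 = x := Real.sq_sqrt (le_of_lt hx)
  set g := fun z : ℝ => ENNReal.ofReal (Real.sqrt 2 / Real.sqrt (s - V (z ^ 2))) with hgdef
  have hgm : Measurable g := meas_integrand1 hd s
  have hscale : ∫⁻ z : ℝ, g z = ENNReal.ofReal c * ∫⁻ σ : ℝ, g (c * σ) := by
    have hmap := Real.map_volume_mul_left (ne_of_gt hc)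
    have h1 : ∫⁻ σ : ℝ, g (c * σ) = ∫⁻ z : ℝ, g z ∂(Measure.map (fun y => c * y) volume) :=
      (lintegral_map hgm (measurable_const_mul c)).symm
    rw [h1, hmap, lintegral_smul_measure, smul_eq_mul]
    rw [← mul_assoc, abs_of_pos (inv_pos.mpr hc), ← ENNReal.ofReal_mul (le_of_lt hc),
      mul_inv_cancel₀ (ne_of_gt hc)]
    simp
  unfold Th
  rw [← hgdef, hscale]
  have hgcm : Measurable fun y : ℝ => g (c * y) := hgm.comp (measurable_const_mul c)
  rw [← lintegral_const_mul _ hgcm]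
  apply lintegral_congr
  intro σ
  have harg : (c * σ) ^ 2 = x * σ ^ 2 := by rw [mul_pow, hc2]
  rw [hgdef]
  simp only
  rw [harg, ← ENNReal.ofReal_mul (le_of_lt hc)]
  congr 1
  rw [Real.sqrt_div (le_of_lt hx) (s - V (x * σ ^ 2)), ← hcdef]
  ring

end Sigma

section Mono

variable (hd : ∀ t ∈ Ici (0 : ℝ), HasDerivWithinAt V (V' t) (Ici 0) t)
    (hd' : ∀ t ∈ Ici (0 : ℝ), HasDerivWithinAt V' (V'' t) (Ici 0) t)
    (hV0 : V 0 = 0)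
    (hV' : ∀ t : ℝ, 0 ≤ t → 0 < V' t)
    (hV'' : ∀ t : ℝ, 0 < t → V'' t < 0)
    (htop : Tendsto V atTop atTop)

include hd hd' hV0 hV' hV'' htop

/-- pointwise comparison of the `σ`-integrands. -/
lemma integrand_le {s t σ : ℝ} (hs : 0 < s) (hst : s < t) :
    Real.sqrt 2 * Real.sqrt (W V s / (s - V (W V s * σ ^ 2)))
      ≤ Real.sqrt 2 * Real.sqrt (W V t / (t - V (W V t * σ ^ 2))) := by
  set x := W V s with hxdef
  set y := W V t with hydef
  have hx : 0 < x := W_pos hd hV0 hV' htop hs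
  have hy : 0 < y := W_pos hd hV0 hV' htop (lt_trans hs hst)
  have hxy : x < y := W_lt_W hd hV0 hV' htop (le_of_lt hs) hst
  have hVx : V x = s := VW hd hV0 htop (le_of_lt hs)
  have hVy : V y = t := VW hd hV0 htop (le_of_lt (lt_trans hs hst))
  rcases lt_or_ge (σ ^ 2) 1 with hτ | hτ
  · have hq := Q_mono hd hd' hV'' hV' (sq_nonneg σ) hτ (mem_Ioi.mpr hx) (mem_Ioi.mpr hy) hxy
    simp only at hq
    rw [← hVx, ← hVy]
    apply mul_le_mul_of_nonneg_left _ (Real.sqrt_nonneg 2)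
    apply Real.sqrt_le_sqrt (le_of_lt hq)
  · -- both sides are zero
    have h1 : Real.sqrt (x / (s - V (x * σ ^ 2))) = 0 := by
      have hden : s - V (x * σ ^ 2) ≤ 0 := by
        have hge : W V s ≤ x * σ ^ 2 := le_mul_of_one_le_right (le_of_lt hx) hτ
        have hVge := V_ge_of_ge_W hd hV0 hV' htop (le_of_lt hs) hge
        linarith
      apply Real.sqrt_eq_zero'.mpr
      rcases lt_or_eq_of_le hden with h | h
      · exact le_of_lt (div_neg_of_pos_of_neg hx h)
      · rw [h, div_zero]
    have h2 : 0 ≤ Real.sqrt (y / (t - V (y * σ ^ 2))) := Real.sqrt_nonneg _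
    rw [h1]
    nlinarith [Real.sqrt_nonneg 2]

lemma integrand_lt {s t σ : ℝ} (hs : 0 < s) (hst : s < t) (hσ : σ ^ 2 < 1) :
    Real.sqrt 2 * Real.sqrt (W V s / (s - V (W V s * σ ^ 2)))
      < Real.sqrt 2 * Real.sqrt (W V t / (t - V (W V t * σ ^ 2))) := by
  set x := W V s with hxdef
  set y := W V t with hydef
  have hx : 0 < x := W_pos hd hV0 hV' htop hs
  have hy : 0 < y := W_pos hd hV0 hV' htop (lt_trans hs hst)
  have hxy : x < y := W_lt_W hd hV0 hV' htop (le_of_lt hs) hst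
  have hVx : V x = s := VW hd hV0 htop (le_of_lt hs)
  have hq := Q_mono hd hd' hV'' hV' (sq_nonneg σ) hσ (mem_Ioi.mpr hx) (mem_Ioi.mpr hy) hxy
  simp only at hq
  have hqpos : 0 ≤ x / (V x - V (x * σ ^ 2)) := by
    apply div_nonneg (le_of_lt hx)
    have hxτ : x * σ ^ 2 < x := mul_lt_of_lt_one_right hx hσ
    have := (monoV hd hV') (mul_nonneg (le_of_lt hx) (sq_nonneg σ)) (le_of_lt hx) hxτ
    linarith
  have hVy : V y = t := VW hd hV0 htop (le_of_lt (lt_trans hs hst))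
  rw [← hVx, ← hVy]
  exact mul_lt_mul_of_pos_left (Real.sqrt_lt_sqrt hqpos hq)
    (Real.sqrt_pos.mpr (by norm_num))

/-- positivity of the `σ`-integrand on `(-1,1)`. -/
lemma integrand_pos {s σ : ℝ} (hs : 0 < s) (hσ : σ ^ 2 < 1) :
    0 < Real.sqrt 2 * Real.sqrt (W V s / (s - V (W V s * σ ^ 2))) := by
  set x := W V s with hxdef
  have hx : 0 < x := W_pos hd hV0 hV' htop hs
  have hVx : V x = s := VW hd hV0 htop (le_of_lt hs)
  have hxτ : x * σ ^ 2 < x := mul_lt_of_lt_one_right hx hσ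
  have hden : V (x * σ ^ 2) < s := by
    rw [← hVx]
    exact (monoV hd hV') (mul_nonneg (le_of_lt hx) (sq_nonneg σ)) (le_of_lt hx) hxτ
  apply mul_pos (Real.sqrt_pos.mpr (by norm_num))
  exact Real.sqrt_pos.mpr (div_pos hx (by linarith))

lemma Th_le {s t : ℝ} (hs : 0 < s) (hst : s < t) : Th V s ≤ Th V t := by
  rw [Th_sigma hd hV0 hV' htop hs, Th_sigma hd hV0 hV' htop (lt_trans hs hst)]
  exact lintegral_mono fun σ =>
    ENNReal.ofReal_le_ofReal (integrand_le hd hd' hV0 hV' hV'' htop hs hst)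

end Mono

section Finiteness

variable (hd : ∀ t ∈ Ici (0 : ℝ), HasDerivWithinAt V (V' t) (Ici 0) t)
    (hd' : ∀ t ∈ Ici (0 : ℝ), HasDerivWithinAt V' (V'' t) (Ici 0) t)
    (hV0 : V 0 = 0)
    (hV' : ∀ t : ℝ, 0 ≤ t → 0 < V' t)
    (hV'' : ∀ t : ℝ, 0 < t → V'' t < 0)
    (htop : Tendsto V atTop atTop)

include hd hV0 hV' htop

lemma volume_S_lt_top {a : ℝ} (ha : 0 ≤ a) :
    volume {p : ℝ × ℝ | p.2 ^ 2 / 2 + V (p.1 ^ 2) ≤ a} < ⊤ := by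
  set R := Real.sqrt (W V a) with hR
  set R' := Real.sqrt (2 * a) with hR'
  have hsub : {p : ℝ × ℝ | p.2 ^ 2 / 2 + V (p.1 ^ 2) ≤ a}
      ⊆ Icc (-R) R ×ˢ Icc (-R') R' := by
    rintro ⟨z, w⟩ hp
    simp only [mem_setOf_eq] at hp
    have hV1 : V (z ^ 2) ≤ a := by nlinarith [sq_nonneg w]
    have h1 : z ^ 2 ≤ W V a := by
      by_contra hcon
      push_neg at hcon
      have := (monoV hd hV') (W_nonneg hd hV0 htop ha)
        (le_trans (W_nonneg hd hV0 htop ha) (le_of_lt hcon)) hcon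
      rw [VW hd hV0 htop ha] at this
      linarith
    have h2 : w ^ 2 ≤ 2 * a := by
      have := Vnonneg hd hV0 hV' (sq_nonneg z)
      nlinarith
    constructor
    · exact abs_le.mp (Real.abs_le_sqrt h1)
    · exact abs_le.mp (Real.abs_le_sqrt h2)
  apply lt_of_le_of_lt (measure_mono hsub)
  rw [MeasureTheory.Measure.volume_eq_prod, Measure.prod_prod, Real.volume_Icc,
    Real.volume_Icc]
  exact ENNReal.mul_lt_top ENNReal.ofReal_lt_top ENNReal.ofReal_lt_top

include hd' hV''

lemma Th_ne_top {s : ℝ} (hs : 0 < s) : Th V s ≠ ⊤ := by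
  intro h
  have h1 : ∫⁻ u in Ioo s (s + 1), Th V u = ⊤ := by
    have heq : ∀ u ∈ Ioo s (s + 1), Th V u = (⊤ : ENNReal) := by
      intro u hu
      exact top_le_iff.mp (h ▸ Th_le hd hd' hV0 hV' hV'' htop hs hu.1)
    rw [setLIntegral_congr_fun measurableSet_Ioo heq, setLIntegral_const]
    rw [Real.volume_Ioo]
    apply ENNReal.top_mul
    simp only [ne_eq, ENNReal.ofReal_eq_zero, not_le]
    linarith
  have h2 : ∫⁻ u in Ioo (0:ℝ) (s + 1), Th V u = ⊤ :=
    top_le_iff.mp (h1 ▸ lintegral_mono_set (Ioo_subset_Ioo (by linarith) (le_refl _)))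
  have h3 := key1 hd hV0 hV' (s + 1)
  rw [h2] at h3
  exact absurd h3 (ne_of_lt (volume_S_lt_top hd hV0 hV' htop (by linarith : (0:ℝ) ≤ s + 1)))

omit hd' hV'' in
lemma contVW {s : ℝ} (hs : 0 ≤ s) : Continuous fun σ : ℝ => V (W V s * σ ^ 2) := by
  apply (contV hd).comp_continuous (continuous_const.mul (continuous_pow 2))
  intro σ
  exact mul_nonneg (W_nonneg hd hV0 htop hs) (sq_nonneg σ)

omit hd' hV'' in
lemma meas_sigma_integrand {s : ℝ} (hs : 0 ≤ s) :
    Measurable fun σ : ℝ => ENNReal.ofReal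
      (Real.sqrt 2 * Real.sqrt (W V s / (s - V (W V s * σ ^ 2)))) := by
  apply Measurable.ennreal_ofReal
  apply Measurable.const_mul
  apply Real.continuous_sqrt.measurable.comp
  apply Measurable.div measurable_const
  exact (continuous_const.sub (contVW hd hV0 hV' htop hs)).measurable

end Finiteness

section Strict

variable (hd : ∀ t ∈ Ici (0 : ℝ), HasDerivWithinAt V (V' t) (Ici 0) t)
    (hd' : ∀ t ∈ Ici (0 : ℝ), HasDerivWithinAt V' (V'' t) (Ici 0) t)
    (hV0 : V 0 = 0)
    (hV' : ∀ t : ℝ, 0 ≤ t → 0 < V' t)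
    (hV'' : ∀ t : ℝ, 0 < t → V'' t < 0)
    (htop : Tendsto V atTop atTop)

include hd hd' hV0 hV' hV'' htop

lemma Th_pos {s : ℝ} (hs : 0 < s) : 0 < Th V s := by
  rw [Th_sigma hd hV0 hV' htop hs]
  rw [lintegral_pos_iff_support (meas_sigma_integrand hd hV0 hV' htop (le_of_lt hs))]
  apply lt_of_lt_of_le _ (measure_mono (show Ioo (-1:ℝ) 1 ⊆ Function.support _ from ?_))
  · rw [Real.volume_Ioo]
    norm_num
  · intro σ hσ
    have hσ2 : σ ^ 2 < 1 := by
      rw [sq_lt_one_iff_abs_lt_one, abs_lt]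
      exact ⟨hσ.1, hσ.2⟩
    simp only [Function.mem_support, ne_eq, ENNReal.ofReal_eq_zero, not_le]
    exact integrand_pos hd hd' hV0 hV' hV'' htop hs hσ2

lemma Th_strict_mono {s t : ℝ} (hs : 0 < s) (hst : s < t) : Th V s < Th V t := by
  have ht : 0 < t := lt_trans hs hst
  set f := fun σ : ℝ => Real.sqrt 2 * Real.sqrt (W V s / (s - V (W V s * σ ^ 2))) with hf
  set g := fun σ : ℝ => Real.sqrt 2 * Real.sqrt (W V t / (t - V (W V t * σ ^ 2))) with hg
  set K := Icc (1/4 : ℝ) (1/2) with hK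
  have hσ2 : ∀ σ ∈ K, σ ^ 2 < 1 := by
    intro σ hσ
    have := hσ.1; have := hσ.2
    nlinarith
  have hfg : ∀ σ ∈ K, f σ < g σ := fun σ hσ =>
    integrand_lt hd hd' hV0 hV' hV'' htop hs hst (hσ2 σ hσ)
  -- continuity of g - f on K
  have hdencont : ∀ u : ℝ, 0 < u → ContinuousOn
      (fun σ : ℝ => Real.sqrt 2 * Real.sqrt (W V u / (u - V (W V u * σ ^ 2)))) K := by
    intro u hu
    apply ContinuousOn.mul continuousOn_const
    apply ContinuousOn.sqrt
    apply ContinuousOn.div continuousOn_const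
      ((continuous_const.sub (contVW hd hV0 hV' htop (le_of_lt hu))).continuousOn)
    intro σ hσ
    have hx : 0 < W V u := W_pos hd hV0 hV' htop hu
    have hxτ : W V u * σ ^ 2 < W V u := mul_lt_of_lt_one_right hx (hσ2 σ hσ)
    have hlt : V (W V u * σ ^ 2) < u := by
      have := (monoV hd hV') (mul_nonneg (le_of_lt hx) (sq_nonneg σ)) (le_of_lt hx) hxτ
      rwa [VW hd hV0 htop (le_of_lt hu)] at this
    exact ne_of_gt (by show 0 < u - V (W V u * σ ^ 2); linarith)
  obtain ⟨σ₀, hσ₀K, hmin⟩ := isCompact_Icc.exists_isMinOn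
    (nonempty_Icc.mpr (by norm_num)) (((hdencont t ht)).sub (hdencont s hs))
  set ε := g σ₀ - f σ₀ with hε
  have hεpos : 0 < ε := sub_pos.mpr (hfg σ₀ hσ₀K)
  have hpoint : ∀ σ : ℝ, ENNReal.ofReal (f σ)
      + K.indicator (fun _ => ENNReal.ofReal ε) σ ≤ ENNReal.ofReal (g σ) := by
    intro σ
    by_cases hσ : σ ∈ K
    · rw [indicator_of_mem hσ]
      have hfnn : 0 ≤ f σ := mul_nonneg (Real.sqrt_nonneg 2) (Real.sqrt_nonneg _)
      rw [← ENNReal.ofReal_add hfnn (le_of_lt hεpos)]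
      apply ENNReal.ofReal_le_ofReal
      have h2 : ε ≤ g σ - f σ := isMinOn_iff.mp hmin σ hσ
      linarith
    · rw [indicator_of_notMem hσ, add_zero]
      exact ENNReal.ofReal_le_ofReal (integrand_le hd hd' hV0 hV' hV'' htop hs hst)
  have hchain : Th V s + ENNReal.ofReal ε * volume K ≤ Th V t := by
    rw [Th_sigma hd hV0 hV' htop hs, Th_sigma hd hV0 hV' htop ht]
    calc (∫⁻ σ : ℝ, ENNReal.ofReal (f σ)) + ENNReal.ofReal ε * volume K
        = ∫⁻ σ : ℝ, (ENNReal.ofReal (f σ) + K.indicator (fun _ => ENNReal.ofReal ε) σ) := by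
          rw [lintegral_add_left (meas_sigma_integrand hd hV0 hV' htop (le_of_lt hs))]
          rw [lintegral_indicator measurableSet_Icc, setLIntegral_const]
      _ ≤ ∫⁻ σ : ℝ, ENNReal.ofReal (g σ) := lintegral_mono hpoint
  apply lt_of_lt_of_le _ hchain
  apply ENNReal.lt_add_right (Th_ne_top hd hd' hV0 hV' hV'' htop hs)
  apply mul_ne_zero
  · exact ne_of_gt (ENNReal.ofReal_pos.mpr hεpos)
  · rw [hK, Real.volume_Icc]
    simp only [ne_eq, ENNReal.ofReal_eq_zero, not_le]
    norm_num

end Strict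

end Stmt10

open Stmt10 in
/-- For a one-degree-of-freedom Hamiltonian `K₁(z,w) = w²/2 + V(z²)` with `V` twice
continuously differentiable on `[0,∞)`, `V(0) = 0`, `V' > 0`, `V'' < 0` and
`V(t) → ∞`, the action `I(a) = area {w²/2 + V(z²) ≤ a}` is strictly increasing and
strictly convex on `(0,∞)`. -/
theorem stmt_10 (V V' V'' : ℝ → ℝ)
    (hd : ∀ t ∈ Ici (0 : ℝ), HasDerivWithinAt V (V' t) (Ici 0) t)
    (hd' : ∀ t ∈ Ici (0 : ℝ), HasDerivWithinAt V' (V'' t) (Ici 0) t)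
    (hcont : ContinuousOn V'' (Ici 0))
    (hV0 : V 0 = 0)
    (hV' : ∀ t : ℝ, 0 ≤ t → 0 < V' t)
    (hV'' : ∀ t : ℝ, 0 < t → V'' t < 0)
    (htop : Tendsto V atTop atTop)
    (I : ℝ → ℝ)
    (hI : ∀ a : ℝ, I a = (volume {p : ℝ × ℝ | p.2 ^ 2 / 2 + V (p.1 ^ 2) ≤ a}).toReal) :
    StrictMonoOn I (Ioi 0) ∧ StrictConvexOn ℝ (Ioi 0) I := by
  classical
  have hIeq : ∀ a : ℝ, I a = (∫⁻ s in Ioo (0:ℝ) a, Th V s).toReal := by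
    intro a
    rw [hI a, key1 hd hV0 hV' a]
  have hfin : ∀ a : ℝ, 0 ≤ a → (∫⁻ s in Ioo (0:ℝ) a, Th V s) ≠ ⊤ := by
    intro a ha
    rw [← key1 hd hV0 hV' a]
    exact ne_of_lt (volume_S_lt_top hd hV0 hV' htop ha)
  have hEfin : ∀ a b : ℝ, 0 ≤ a → a < b → (∫⁻ s in Ioo a b, Th V s) ≠ ⊤ := by
    intro a b ha hab
    exact ne_top_of_le_ne_top (hfin b (le_trans ha (le_of_lt hab)))
      (lintegral_mono_set (Ioo_subset_Ioo ha (le_refl b)))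
  set T : ℝ → ℝ := fun s => (Th V s).toReal with hT
  have hTmono : ∀ s t : ℝ, 0 < s → s < t → T s < T t := by
    intro s t hs hst
    exact (ENNReal.toReal_lt_toReal (Th_ne_top hd hd' hV0 hV' hV'' htop hs)
      (Th_ne_top hd hd' hV0 hV' hV'' htop (lt_trans hs hst))).mpr
      (Th_strict_mono hd hd' hV0 hV' hV'' htop hs hst)
  have hTpos : ∀ s : ℝ, 0 < s → 0 < T s := by
    intro s hs
    exact ENNReal.toReal_pos (ne_of_gt (Th_pos hd hd' hV0 hV' hV'' htop hs))
      (Th_ne_top hd hd' hV0 hV' hV'' htop hs)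
  -- difference formula
  have hdiff : ∀ a b : ℝ, 0 < a → a < b →
      I b = I a + (∫⁻ s in Ioo a b, Th V s).toReal := by
    intro a b ha hab
    have hsplit : Ioo (0:ℝ) b = Ioc 0 a ∪ Ioo a b :=
      (Ioc_union_Ioo_eq_Ioo (le_of_lt ha) hab).symm
    have hdisj : Disjoint (Ioc (0:ℝ) a) (Ioo a b) := by
      rw [Set.disjoint_left]
      intro s hs hs'
      exact absurd hs'.1 (not_lt.mpr hs.2)
    have hIoc : ∫⁻ s in Ioc (0:ℝ) a, Th V s = ∫⁻ s in Ioo (0:ℝ) a, Th V s :=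
      (setLIntegral_congr MeasureTheory.Ioo_ae_eq_Ioc).symm
    rw [hIeq b, hIeq a, hsplit, lintegral_union measurableSet_Ioo hdisj, hIoc,
      ENNReal.toReal_add (hfin a (le_of_lt ha)) (hEfin a b (le_of_lt ha) hab)]
  -- upper bound for increments
  have hEub : ∀ a m : ℝ, 0 < a → a < m →
      (∫⁻ s in Ioo a m, Th V s).toReal ≤ (m - a) * T m := by
    intro a m ha ham
    have h1 : ∫⁻ s in Ioo a m, Th V s ≤ ENNReal.ofReal (m - a) * Th V m := by
      calc ∫⁻ s in Ioo a m, Th V s ≤ ∫⁻ _ in Ioo a m, Th V m :=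
            setLIntegral_mono' measurableSet_Ioo (fun s hs => le_of_lt
              (Th_strict_mono hd hd' hV0 hV' hV'' htop (lt_trans ha hs.1) hs.2))
        _ = Th V m * volume (Ioo a m) := setLIntegral_const _ _
        _ = ENNReal.ofReal (m - a) * Th V m := by rw [Real.volume_Ioo, mul_comm]
    have h2 := ENNReal.toReal_mono
      (ENNReal.mul_ne_top ENNReal.ofReal_ne_top
        (Th_ne_top hd hd' hV0 hV' hV'' htop (lt_trans ha ham))) h1
    rwa [ENNReal.toReal_mul, ENNReal.toReal_ofReal (by linarith)] at h2
  -- lower bounds for increments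
  have hElb0 : ∀ m b m' : ℝ, 0 < m → m < m' → m' ≤ b →
      ENNReal.ofReal (m' - m) * Th V m ≤ ∫⁻ s in Ioo m b, Th V s := by
    intro m b m' hm hmm' hm'b
    calc ENNReal.ofReal (m' - m) * Th V m
        = Th V m * volume (Ioo m m') := by rw [Real.volume_Ioo, mul_comm]
      _ = ∫⁻ _ in Ioo m m', Th V m := (setLIntegral_const _ _).symm
      _ ≤ ∫⁻ s in Ioo m m', Th V s :=
          setLIntegral_mono' measurableSet_Ioo (fun s hs => le_of_lt
            (Th_strict_mono hd hd' hV0 hV' hV'' htop hm hs.1))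
      _ ≤ ∫⁻ s in Ioo m b, Th V s :=
          lintegral_mono_set (Ioo_subset_Ioo (le_refl m) hm'b)
  have hElb : ∀ m b : ℝ, 0 < m → m < b →
      (b - m) * T m < (∫⁻ s in Ioo m b, Th V s).toReal := by
    intro m b hm hmb
    set m' := (m + b) / 2 with hm'def
    have hmm' : m < m' := by rw [hm'def]; linarith
    have hm'b : m' < b := by rw [hm'def]; linarith
    have hm' : 0 < m' := lt_trans hm hmm'
    have hsplit : Ioo m b = Ioc m m' ∪ Ioo m' b :=
      (Ioc_union_Ioo_eq_Ioo (le_of_lt hmm') hm'b).symm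
    have hdisj : Disjoint (Ioc m m') (Ioo m' b) := by
      rw [Set.disjoint_left]
      intro s hs hs'
      exact absurd hs'.1 (not_lt.mpr hs.2)
    have hIoc : ∫⁻ s in Ioc m m', Th V s = ∫⁻ s in Ioo m m', Th V s :=
      (setLIntegral_congr MeasureTheory.Ioo_ae_eq_Ioc).symm
    have h1 : ENNReal.ofReal (m' - m) * Th V m + ENNReal.ofReal (b - m') * Th V m'
        ≤ ∫⁻ s in Ioo m b, Th V s := by
      rw [hsplit, lintegral_union measurableSet_Ioo hdisj, hIoc]
      apply add_le_add
      · exact hElb0 m m' m' hm hmm' (le_refl m')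
      · exact hElb0 m' b b hm' (by linarith) (le_refl b)
    have hfins : ENNReal.ofReal (m' - m) * Th V m ≠ ⊤ :=
      ENNReal.mul_ne_top ENNReal.ofReal_ne_top (Th_ne_top hd hd' hV0 hV' hV'' htop hm)
    have hfins' : ENNReal.ofReal (b - m') * Th V m' ≠ ⊤ :=
      ENNReal.mul_ne_top ENNReal.ofReal_ne_top (Th_ne_top hd hd' hV0 hV' hV'' htop hm')
    have h2 := ENNReal.toReal_mono (hEfin m b (le_of_lt hm) hmb) h1
    rw [ENNReal.toReal_add hfins hfins', ENNReal.toReal_mul, ENNReal.toReal_mul,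
      ENNReal.toReal_ofReal (by linarith), ENNReal.toReal_ofReal (by linarith)] at h2
    have hTm : T m < T m' := hTmono m m' hm hmm'
    nlinarith [hTm]
  -- strict monotonicity
  have hmono : StrictMonoOn I (Ioi 0) := by
    intro x hx y hy hxy
    have hx0 : (0:ℝ) < x := hx
    have hm : x < (x + y)/2 := by linarith
    have h1 := hElb ((x+y)/2) y (by linarith) (by linarith)
    have h2 : (∫⁻ s in Ioo ((x+y)/2) y, Th V s).toReal
        ≤ (∫⁻ s in Ioo x y, Th V s).toReal := by
      apply ENNReal.toReal_mono (hEfin x y (le_of_lt hx0) hxy)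
      exact lintegral_mono_set (Ioo_subset_Ioo (le_of_lt hm) (le_refl y))
    have h3 := hTpos ((x+y)/2) (by linarith)
    have h4 := hdiff x y hx0 hxy
    nlinarith
  refine ⟨hmono, ?_⟩
  constructor
  · exact convex_Ioi 0
  · have main : ∀ x y p q : ℝ, x ∈ Ioi (0:ℝ) → y ∈ Ioi (0:ℝ) → x < y →
        0 < p → 0 < q → p + q = 1 → I (p * x + q * y) < p * I x + q * I y := by
      intro x y p q hx hy hxy hp hq hpq
      set m := p * x + q * y with hm
      have hx0 : (0:ℝ) < x := hx
      have hxm : x < m := by nlinarith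
      have hmy : m < y := by nlinarith
      have hm0 : 0 < m := lt_trans hx0 hxm
      have e1 : m - x = q * (y - x) := by rw [hm]; nlinarith
      have e2 : y - m = p * (y - x) := by rw [hm]; nlinarith
      have h1 : I m ≤ I x + q * (y - x) * T m := by
        have := hEub x m hx0 hxm
        have hd1 := hdiff x m hx0 hxm
        rw [e1] at this
        linarith
      have h2 : I m + p * (y - x) * T m < I y := by
        have := hElb m y hm0 hmy
        have hd2 := hdiff m y hm0 hmy
        rw [e2] at this
        linarith
      have hint1 := mul_le_mul_of_nonneg_left h1 (le_of_lt hp)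
      have hint2 := mul_lt_mul_of_pos_left h2 hq
      have e3 : p * I m + q * I m = I m := by rw [← add_mul, hpq, one_mul]
      nlinarith [hint1, hint2, e3]
    intro x hx y hy hxy p q hp hq hpq
    simp only [smul_eq_mul]
    rcases lt_or_gt_of_ne hxy with h | h
    · exact main x y p q hx hy h hp hq hpq
    · have := main y x q p hy hx h hq hp (by linarith)
      calc I (p * x + q * y) = I (q * y + p * x) := by ring_nf
        _ < q * I y + p * I x := this
        _ = p * I x + q * I y := by ring
end

section
/- Let V : [0,∞) → ℝ be twice continuously differentiable with V(0) = 0, V′(t) > 0 for all t ≥ 0, V″(t) > 0 for all t > 0, and V(t) → ∞ as t → ∞. For a > 0 let I(a) denote the Lebesgue measure (area) of the compact set {(z,w) ∈ ℝ² : w²/2 + V(z²) ≤ a}. Then I is strictly increasing and strictly concave on (0, ∞). -/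
open MeasureTheory Set Filter

/-- Construction of a continuous inverse `G` of `V` on `[0, ∞)`. -/
lemma stmt_11_exists_inv (V : ℝ → ℝ)
    (hVcont : ContinuousOn V (Ici 0))
    (hVmono : StrictMonoOn V (Ici 0))
    (hVnonneg : ∀ t : ℝ, 0 ≤ t → 0 ≤ V t)
    (hV0 : V 0 = 0)
    (htop : Tendsto V atTop atTop) :
    ∃ G : ℝ → ℝ, Continuous G ∧ (∀ y, 0 ≤ G y) ∧ (∀ y : ℝ, y ≤ 0 → G y = 0) ∧
      (∀ y : ℝ, 0 ≤ y → V (G y) = y) ∧ (∀ t : ℝ, 0 ≤ t → G (V t) = t) := by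
  have hVsurj : ∀ y : ℝ, 0 ≤ y → ∃ t, 0 ≤ t ∧ V t = y := by
    intro y hy
    obtain ⟨T, hTy, hT0⟩ := ((htop.eventually_ge_atTop y).and (eventually_ge_atTop 0)).exists
    have him := intermediate_value_Icc hT0 (hVcont.mono (Icc_subset_Ici_self))
    obtain ⟨t, ht, rfl⟩ := him ⟨by rw [hV0]; exact hy, hTy⟩
    exact ⟨t, ht.1, rfl⟩
  set Vs : Ici (0:ℝ) → Ici (0:ℝ) := fun t => ⟨V t, hVnonneg t t.2⟩ with hVs
  have hVsmono : StrictMono Vs := by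
    intro s t hst
    exact Subtype.mk_lt_mk.2 (hVmono s.2 t.2 (Subtype.coe_lt_coe.2 hst))
  have hVssurj : Function.Surjective Vs := by
    rintro ⟨y, hy⟩
    obtain ⟨t, ht, rfl⟩ := hVsurj y hy
    exact ⟨⟨t, ht⟩, rfl⟩
  let e : Ici (0:ℝ) ≃o Ici (0:ℝ) := StrictMono.orderIsoOfSurjective Vs hVsmono hVssurj
  have he : ∀ x : Ici (0:ℝ), e x = Vs x := fun x => rfl
  refine ⟨fun y => (e.symm (Set.projIci 0 y) : ℝ), ?_, ?_, ?_, ?_, ?_⟩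
  · have h1 : Continuous (Set.projIci (0:ℝ)) :=
      Continuous.subtype_mk (continuous_const.max continuous_id) _
    exact continuous_subtype_val.comp (e.symm.continuous.comp h1)
  · exact fun y => (e.symm (Set.projIci 0 y)).2
  · intro y hy
    show (↑(e.symm (Set.projIci 0 y)) : ℝ) = 0
    rw [Set.projIci_of_le hy]
    have h2 : (⟨(0:ℝ), Set.self_mem_Ici⟩ : Ici (0:ℝ)) = e ⟨0, Set.self_mem_Ici⟩ := by
      rw [he]; exact Subtype.ext hV0.symm
    rw [h2, e.symm_apply_apply]
  · intro y hy
    have h1 : Set.projIci (0:ℝ) y = ⟨y, hy⟩ := Set.projIci_of_mem hy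
    show V (↑(e.symm (Set.projIci 0 y)) : ℝ) = y
    rw [h1]
    have h2 := e.apply_symm_apply ⟨y, hy⟩
    rw [he] at h2
    exact congrArg Subtype.val h2
  · intro t ht
    have h1 : Set.projIci (0:ℝ) (V t) = Vs ⟨t, ht⟩ :=
      Set.projIci_of_mem (hVnonneg t ht)
    show (↑(e.symm (Set.projIci 0 (V t))) : ℝ) = t
    rw [h1, ← he, e.symm_apply_apply]

set_option maxHeartbeats 2000000 in
/-- For a one-degree-of-freedom Hamiltonian `K₁(z,w) = w²/2 + V(z²)` with `V` twice
continuously differentiable on `[0,∞)`, `V(0) = 0`, `V' > 0`, `V'' > 0` and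
`V(t) → ∞`, the action `I(a) = area {w²/2 + V(z²) ≤ a}` is strictly increasing and
strictly concave on `(0,∞)`. -/
theorem stmt_11 (V V' V'' : ℝ → ℝ)
    (hd : ∀ t ∈ Ici (0 : ℝ), HasDerivWithinAt V (V' t) (Ici 0) t)
    (hd' : ∀ t ∈ Ici (0 : ℝ), HasDerivWithinAt V' (V'' t) (Ici 0) t)
    (hcont : ContinuousOn V'' (Ici 0))
    (hV0 : V 0 = 0)
    (hV' : ∀ t : ℝ, 0 ≤ t → 0 < V' t)
    (hV'' : ∀ t : ℝ, 0 < t → 0 < V'' t)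
    (htop : Tendsto V atTop atTop)
    (I : ℝ → ℝ)
    (hI : ∀ a : ℝ, I a = (volume {p : ℝ × ℝ | p.2 ^ 2 / 2 + V (p.1 ^ 2) ≤ a}).toReal) :
    StrictMonoOn I (Ioi 0) ∧ StrictConcaveOn ℝ (Ioi 0) I := by
  -- Basic analytic facts about V
  have hVcont : ContinuousOn V (Ici 0) := fun t ht => (hd t ht).continuousWithinAt
  have hVmono : StrictMonoOn V (Ici 0) := by
    apply strictMonoOn_of_deriv_pos (convex_Ici 0) hVcont
    intro x hx
    rw [interior_Ici] at hx
    rw [((hd x (mem_Ici.2 hx.le)).hasDerivAt (Ici_mem_nhds hx)).deriv]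
    exact hV' x hx.le
  have hVnonneg : ∀ t : ℝ, 0 ≤ t → 0 ≤ V t := by
    intro t ht
    rcases eq_or_lt_of_le ht with h | h
    · rw [← h, hV0]
    · rw [← hV0]; exact (hVmono (mem_Ici.2 le_rfl) ht h).le
  have hVconv : StrictConvexOn ℝ (Ici 0) V := by
    apply strictConvexOn_of_deriv2_pos (convex_Ici 0) hVcont
    intro x hx
    rw [interior_Ici] at hx
    have h1 : deriv V =ᶠ[nhds x] V' := by
      filter_upwards [Ioi_mem_nhds hx] with y hy
      exact ((hd y (mem_Ici.2 hy.le)).hasDerivAt (Ici_mem_nhds hy)).deriv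
    have h2 : (deriv^[2] V) x = deriv (deriv V) x := rfl
    rw [h2, h1.deriv_eq, ((hd' x (mem_Ici.2 hx.le)).hasDerivAt (Ici_mem_nhds hx)).deriv]
    exact hV'' x hx
  -- Inverse function G
  obtain ⟨G, hGcont, hGnonneg, hGzero, hVG, hGV⟩ :=
    stmt_11_exists_inv V hVcont hVmono hVnonneg hV0 htop
  have hG0 : G 0 = 0 := hGzero 0 le_rfl
  have hGmono : ∀ x y : ℝ, 0 ≤ x → x < y → G x < G y := by
    intro x y hx hxy
    rcases lt_or_ge (G x) (G y) with h | h
    · exact h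
    · exfalso
      have : V (G y) ≤ V (G x) := by
        rcases eq_or_lt_of_le h with h' | h'
        · rw [h']
        · exact (hVmono (hGnonneg y) (hGnonneg x) h').le
      rw [hVG x hx, hVG y (hx.trans hxy.le)] at this
      exact absurd this (not_le.2 hxy)
  have hGpos : ∀ y : ℝ, 0 < y → 0 < G y := fun y hy => hG0 ▸ hGmono 0 y le_rfl hy
  -- weighted strict concavity of G
  have hGconc : ∀ x y t s : ℝ, 0 ≤ x → 0 ≤ y → x ≠ y → 0 < t → 0 < s → t + s = 1 →
      t * G x + s * G y < G (t * x + s * y) := by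
    intro x y t s hx hy hxy ht hs hts
    have hGxy : G x ≠ G y := fun h => hxy (by rw [← hVG x hx, ← hVG y hy, h])
    have h1 : V (t * G x + s * G y) < t * V (G x) + s * V (G y) := by
      have := hVconv.2 (hGnonneg x) (hGnonneg y) hGxy ht hs hts
      simpa [smul_eq_mul] using this
    rw [hVG x hx, hVG y hy] at h1
    have hz : (0:ℝ) ≤ t * x + s * y := add_nonneg (mul_nonneg ht.le hx) (mul_nonneg hs.le hy)
    rw [← hVG _ hz] at h1
    rcases lt_or_ge (t * G x + s * G y) (G (t * x + s * y)) with h | h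
    · exact h
    · exfalso
      have hc : (0:ℝ) ≤ t * G x + s * G y :=
        add_nonneg (mul_nonneg ht.le (hGnonneg x)) (mul_nonneg hs.le (hGnonneg y))
      rcases eq_or_lt_of_le h with h' | h'
      · rw [← h'] at h1; exact lt_irrefl _ h1
      · exact absurd (hVmono (hGnonneg _) hc h') (not_lt.2 h1.le)
  -- measure of slices
  have hslice : ∀ c : ℝ,
      volume {z : ℝ | V (z ^ 2) ≤ c} = ENNReal.ofReal (2 * Real.sqrt (G c)) := by
    intro c
    rcases lt_or_ge c 0 with hc | hc
    · have h1 : {z : ℝ | V (z ^ 2) ≤ c} = ∅ := by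
        ext z
        simp only [mem_setOf_eq, mem_empty_iff_false, iff_false, not_le]
        exact hc.trans_le (hVnonneg _ (sq_nonneg z))
      rw [h1, hGzero c hc.le]
      simp
    · have h1 : {z : ℝ | V (z ^ 2) ≤ c} = Icc (-Real.sqrt (G c)) (Real.sqrt (G c)) := by
        ext z
        simp only [mem_setOf_eq, mem_Icc, ← abs_le]
        constructor
        · intro h
          apply Real.abs_le_sqrt
          rcases lt_or_ge (G c) (z ^ 2) with h' | h'
          · exfalso
            have := hVmono (hGnonneg c) (sq_nonneg z) h'
            rw [hVG c hc] at this
            exact absurd h (not_le.2 this)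
          · exact h'
        · intro h
          have h2 : z ^ 2 ≤ G c := by
            have := Real.sq_sqrt (hGnonneg c)
            calc z ^ 2 = |z| ^ 2 := (sq_abs z).symm
            _ ≤ Real.sqrt (G c) ^ 2 := by
                apply pow_le_pow_left₀ (abs_nonneg z) h
            _ = G c := Real.sq_sqrt (hGnonneg c)
          rcases eq_or_lt_of_le h2 with h' | h'
          · rw [h', hVG c hc]
          · rw [← hVG c hc]
            exact (hVmono (sq_nonneg z) (hGnonneg c) h').le
      rw [h1, Real.volume_Icc]
      congr 1
      ring
  -- measurability of the sublevel sets
  have hKmeas : ∀ a : ℝ, MeasurableSet {p : ℝ × ℝ | p.2 ^ 2 / 2 + V (p.1 ^ 2) ≤ a} := by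
    intro a
    have hconts : Continuous fun p : ℝ × ℝ => p.2 ^ 2 / 2 + V (p.1 ^ 2) := by
      apply Continuous.add
      · exact (continuous_snd.pow 2).div_const 2
      · exact hVcont.comp_continuous (continuous_fst.pow 2) fun p => mem_Ici.2 (sq_nonneg _)
    exact (isClosed_le hconts continuous_const).measurableSet
  -- Fubini
  have harea : ∀ a : ℝ, volume {p : ℝ × ℝ | p.2 ^ 2 / 2 + V (p.1 ^ 2) ≤ a}
      = ∫⁻ w, ENNReal.ofReal (2 * Real.sqrt (G (a - w ^ 2 / 2))) := by
    intro a
    rw [Measure.volume_eq_prod, Measure.prod_apply_symm (hKmeas a)]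
    apply lintegral_congr
    intro w
    have h1 : (fun z => (z, w)) ⁻¹' {p : ℝ × ℝ | p.2 ^ 2 / 2 + V (p.1 ^ 2) ≤ a}
        = {z : ℝ | V (z ^ 2) ≤ a - w ^ 2 / 2} := by
      ext z
      simp only [mem_preimage, mem_setOf_eq]
      constructor <;> intro h <;> linarith
    rw [h1, hslice]
  -- the integrand after rescaling
  set J : ℝ → ℝ → ℝ := fun x v => 2 * Real.sqrt (2 * x * G (x * (1 - v ^ 2))) with hJdef
  have hJcont : ∀ x : ℝ, Continuous (J x) := by
    intro x
    apply continuous_const.mul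
    apply Real.continuous_sqrt.comp
    apply continuous_const.mul
    exact hGcont.comp (continuous_const.mul (continuous_const.sub (continuous_id.pow 2)))
  have hJnonneg : ∀ x v : ℝ, 0 ≤ J x v := by
    intro x v
    have := Real.sqrt_nonneg (2 * x * G (x * (1 - v ^ 2)))
    simp only [hJdef]; positivity
  -- the integral formula
  have hIeq : ∀ a : ℝ, 0 < a → I a = ∫ v in (-1:ℝ)..1, J a v := by
    intro a ha
    set f : ℝ → ℝ := fun w => 2 * Real.sqrt (G (a - w ^ 2 / 2)) with hfdef
    have hfcont : Continuous f := by
      apply continuous_const.mul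
      exact Real.continuous_sqrt.comp
        (hGcont.comp (continuous_const.sub ((continuous_id.pow 2).div_const 2)))
    have hfnonneg : ∀ w, 0 ≤ f w := fun w => by
      simp only [hfdef]; positivity
    have hsupp : ∀ w : ℝ, w ∉ Icc (-Real.sqrt (2 * a)) (Real.sqrt (2 * a)) → f w = 0 := by
      intro w hw
      have h1 : Real.sqrt (2 * a) < |w| := by
        rcases not_and_or.1 hw with h | h
        · rw [abs_of_neg (by nlinarith [Real.sqrt_nonneg (2*a), not_le.1 h] : w < 0)]
          linarith [not_le.1 h]
        · rw [abs_of_pos (by nlinarith [Real.sqrt_nonneg (2*a), not_le.1 h] : 0 < w)]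
          exact not_le.1 h
      have h2 : 2 * a < w ^ 2 := by
        have := Real.sq_sqrt (by linarith : (0:ℝ) ≤ 2 * a)
        calc 2 * a = Real.sqrt (2 * a) ^ 2 := this.symm
        _ < |w| ^ 2 := by
            apply pow_lt_pow_left₀ h1 (Real.sqrt_nonneg _)
            norm_num
        _ = w ^ 2 := sq_abs w
      have h3 : a - w ^ 2 / 2 ≤ 0 := by linarith
      simp only [hfdef, hGzero _ h3, Real.sqrt_zero, mul_zero]
    have hcs : HasCompactSupport f := by
      apply HasCompactSupport.intro isCompact_Icc hsupp
    have hInt : Integrable f := hfcont.integrable_of_hasCompactSupport hcs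
    have h4 : volume {p : ℝ × ℝ | p.2 ^ 2 / 2 + V (p.1 ^ 2) ≤ a} = ENNReal.ofReal (∫ w, f w) := by
      rw [harea a, ofReal_integral_eq_lintegral_ofReal hInt (ae_of_all _ hfnonneg)]
    have h5 : I a = ∫ w, f w := by
      rw [hI a, h4, ENNReal.toReal_ofReal (integral_nonneg hfnonneg)]
    have hb : (0:ℝ) < Real.sqrt (2 * a) := Real.sqrt_pos.2 (by linarith)
    have h6 : ∫ w, f w = Real.sqrt (2 * a) * ∫ v, f (Real.sqrt (2 * a) * v) := by
      rw [MeasureTheory.Measure.integral_comp_mul_left f (Real.sqrt (2 * a))]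
      rw [abs_of_pos (inv_pos.2 hb), smul_eq_mul, ← mul_assoc, mul_inv_cancel₀ hb.ne', one_mul]
    have h7 : ∀ v : ℝ, Real.sqrt (2 * a) * f (Real.sqrt (2 * a) * v) = J a v := by
      intro v
      have hsq : (Real.sqrt (2 * a)) ^ 2 = 2 * a := Real.sq_sqrt (by linarith)
      have h8 : a - (Real.sqrt (2 * a) * v) ^ 2 / 2 = a * (1 - v ^ 2) := by
        rw [mul_pow, hsq]; ring
      simp only [hfdef, hJdef, h8]
      rw [Real.sqrt_mul (by linarith : (0:ℝ) ≤ 2 * a)]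
      ring
    have h9 : ∫ w, f w = ∫ v, J a v := by
      rw [h6, ← integral_const_mul]
      exact integral_congr_ae (ae_of_all _ h7)
    have h10 : ∀ v : ℝ, v ∉ Ioo (-1:ℝ) 1 → J a v = 0 := by
      intro v hv
      have h11 : 1 - v ^ 2 ≤ 0 := by
        rcases not_and_or.1 hv with h | h
        · push_neg at h; nlinarith
        · push_neg at h; nlinarith
      have h12 : a * (1 - v ^ 2) ≤ 0 := by nlinarith
      simp only [hJdef, hGzero _ h12, mul_zero, Real.sqrt_zero]
    have h13 : ∫ v, J a v = ∫ v in Ioo (-1:ℝ) 1, J a v :=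
      (setIntegral_eq_integral_of_forall_compl_eq_zero h10).symm
    rw [h5, h9, h13, ← MeasureTheory.integral_Ioc_eq_integral_Ioo,
      ← intervalIntegral.integral_of_le (by norm_num : (-1:ℝ) ≤ 1)]
  -- pointwise facts
  have hsq1 : ∀ v : ℝ, v ∈ Ioo (-1:ℝ) 1 → 0 < 1 - v ^ 2 := by
    intro v hv; nlinarith [hv.1, hv.2]
  have hJ1 : ∀ x : ℝ, J x 1 = 0 := by
    intro x
    simp only [hJdef, one_pow, sub_self, mul_zero, hG0, Real.sqrt_zero]
  -- pointwise strict monotonicity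
  have hJmono : ∀ x y v : ℝ, 0 < x → x < y → v ∈ Ioo (-1:ℝ) 1 → J x v < J y v := by
    intro x y v hx hxy hv
    have hc := hsq1 v hv
    set c := 1 - v ^ 2
    have h1 : G (x * c) < G (y * c) := hGmono _ _ (mul_nonneg hx.le hc.le)
      (by nlinarith [mul_pos (sub_pos.2 hxy) hc])
    have h2 : 0 < G (y * c) := hGpos _ (mul_pos (hx.trans hxy) hc)
    have h3 : 2 * x * G (x * c) < 2 * y * G (y * c) := by
      nlinarith [hGnonneg (x * c)]
    have h4 := Real.sqrt_lt_sqrt (mul_nonneg (by linarith) (hGnonneg (x * c))) h3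
    simp only [hJdef]
    linarith
  -- pointwise strict concavity
  have hJconc : ∀ x y t s v : ℝ, 0 < x → 0 < y → x ≠ y → 0 < t → 0 < s → t + s = 1 →
      v ∈ Ioo (-1:ℝ) 1 → t * J x v + s * J y v < J (t * x + s * y) v := by
    intro x y t s v hx hy hxy ht hs hts hv
    have hc := hsq1 v hv
    set c := 1 - v ^ 2
    set z := t * x + s * y with hz
    have hzpos : 0 < z := by nlinarith [mul_pos ht hx, mul_pos hs hy]
    set gx := G (x * c) with hgx
    set gy := G (y * c) with hgy
    set gz := G (z * c) with hgz
    have hgxn : 0 ≤ gx := hGnonneg _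
    have hgyn : 0 ≤ gy := hGnonneg _
    have hgzn : 0 ≤ gz := hGnonneg _
    have hkey : t * gx + s * gy < gz := by
      have h1 := hGconc (x * c) (y * c) t s (mul_nonneg hx.le hc.le) (mul_nonneg hy.le hc.le)
        (fun h => hxy (mul_right_cancel₀ hc.ne' h)) ht hs hts
      have h2 : t * (x * c) + s * (y * c) = z * c := by rw [hz]; ring
      rwa [h2] at h1
    have hA : Real.sqrt (2 * x * gx) ^ 2 = 2 * x * gx := Real.sq_sqrt (by nlinarith [mul_nonneg hx.le hgxn])
    have hB : Real.sqrt (2 * y * gy) ^ 2 = 2 * y * gy := Real.sq_sqrt (by nlinarith [mul_nonneg hy.le hgyn])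
    have hAB : Real.sqrt (2 * x * gx) * Real.sqrt (2 * y * gy)
        = Real.sqrt (2 * x * gy) * Real.sqrt (2 * y * gx) := by
      rw [← Real.sqrt_mul (by nlinarith [mul_nonneg hx.le hgxn]),
        ← Real.sqrt_mul (by nlinarith [mul_nonneg hx.le hgyn])]
      congr 1
      ring
    have hC : Real.sqrt (2 * x * gy) ^ 2 = 2 * x * gy := Real.sq_sqrt (by nlinarith [mul_nonneg hx.le hgyn])
    have hD : Real.sqrt (2 * y * gx) ^ 2 = 2 * y * gx := Real.sq_sqrt (by nlinarith [mul_nonneg hy.le hgxn])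
    have hamgm : Real.sqrt (2 * x * gy) * Real.sqrt (2 * y * gx)
        ≤ (2 * x * gy + 2 * y * gx) / 2 := by
      nlinarith [sq_nonneg (Real.sqrt (2 * x * gy) - Real.sqrt (2 * y * gx)), hC, hD]
    set P := t * Real.sqrt (2 * x * gx) + s * Real.sqrt (2 * y * gy) with hP
    have hPnonneg : 0 ≤ P := by
      have := Real.sqrt_nonneg (2 * x * gx)
      have := Real.sqrt_nonneg (2 * y * gy)
      positivity
    have hP2 : P ^ 2 ≤ 2 * z * (t * gx + s * gy) := by
      have hexp : P ^ 2 = t ^ 2 * (2 * x * gx) + s ^ 2 * (2 * y * gy)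
          + 2 * (t * s) * (Real.sqrt (2 * x * gx) * Real.sqrt (2 * y * gy)) := by
        have h0 : P ^ 2 = t ^ 2 * (Real.sqrt (2 * x * gx)) ^ 2
            + s ^ 2 * (Real.sqrt (2 * y * gy)) ^ 2
            + 2 * (t * s) * (Real.sqrt (2 * x * gx) * Real.sqrt (2 * y * gy)) := by
          rw [hP]; ring
        rw [h0, hA, hB]
      rw [hexp, hAB]
      have h2 : 2 * z * (t * gx + s * gy)
          = t ^ 2 * (2 * x * gx) + s ^ 2 * (2 * y * gy)
            + (t * s) * (2 * x * gy + 2 * y * gx) := by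
        rw [hz]; ring
      nlinarith [mul_pos ht hs]
    have hP3 : P ^ 2 < 2 * z * gz := by
      calc P ^ 2 ≤ 2 * z * (t * gx + s * gy) := hP2
      _ < 2 * z * gz := by nlinarith [mul_pos hzpos (sub_pos.2 hkey)]
    have hE : Real.sqrt (2 * z * gz) ^ 2 = 2 * z * gz := Real.sq_sqrt (by nlinarith [mul_nonneg hzpos.le hgzn])
    have hfinal : P < Real.sqrt (2 * z * gz) := by
      apply lt_of_pow_lt_pow_left₀ 2 (Real.sqrt_nonneg _)
      rw [hE]; exact hP3
    simp only [hJdef, ← hgx, ← hgy, ← hgz, ← hz]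
    linarith
  -- continuity of combinations on Icc
  have hcontIcc : ∀ x : ℝ, ContinuousOn (J x) (Icc (-1:ℝ) 1) := fun x => (hJcont x).continuousOn
  constructor
  · -- strict monotonicity
    intro a ha b hb hab
    rw [hIeq a ha, hIeq b hb]
    apply intervalIntegral.integral_lt_integral_of_continuousOn_of_le_of_exists_lt
      (by norm_num : (-1:ℝ) < 1) (hcontIcc a) (hcontIcc b)
    · intro v hv
      rcases eq_or_lt_of_le hv.2 with h | h
      · rw [h, hJ1, hJ1]
      · exact (hJmono a b v ha hab ⟨hv.1, h⟩).le
    · exact ⟨0, by norm_num, hJmono a b 0 ha hab (by norm_num)⟩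
  · -- strict concavity
    refine ⟨convex_Ioi 0, ?_⟩
    intro x hx y hy hxy t s ht hs hts
    have hx' : (0:ℝ) < x := hx
    have hy' : (0:ℝ) < y := hy
    have hz' : (0:ℝ) < t * x + s * y := by nlinarith [mul_pos ht hx', mul_pos hs hy']
    simp only [smul_eq_mul]
    rw [hIeq x hx', hIeq y hy', hIeq _ hz']
    have hint : ∀ u : ℝ, IntervalIntegrable (J u) volume (-1:ℝ) 1 :=
      fun u => (hJcont u).intervalIntegrable _ _
    have e1 : ∫ v in (-1:ℝ)..1, t * J x v = t * ∫ v in (-1:ℝ)..1, J x v :=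
      intervalIntegral.integral_const_mul _ _
    have e2 : ∫ v in (-1:ℝ)..1, s * J y v = s * ∫ v in (-1:ℝ)..1, J y v :=
      intervalIntegral.integral_const_mul _ _
    have hlhs : (t * ∫ v in (-1:ℝ)..1, J x v) + (s * ∫ v in (-1:ℝ)..1, J y v)
        = ∫ v in (-1:ℝ)..1, (t * J x v + s * J y v) := by
      rw [intervalIntegral.integral_add ((hint x).const_mul t) ((hint y).const_mul s), e1, e2]
    rw [hlhs]
    apply intervalIntegral.integral_lt_integral_of_continuousOn_of_le_of_exists_lt
      (by norm_num : (-1:ℝ) < 1)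
      (((continuous_const.mul (hJcont x)).add (continuous_const.mul (hJcont y))).continuousOn)
      (hcontIcc _)
    · intro v hv
      rcases eq_or_lt_of_le hv.2 with h | h
      · rw [h, hJ1]; simp [hJ1]
      · exact (hJconc x y t s v hx' hy' hxy ht hs hts ⟨hv.1, h⟩).le
    · exact ⟨0, by norm_num, hJconc x y t s 0 hx' hy' hxy ht hs hts (by norm_num)⟩
end
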